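/- arXiv:1812.01928 — 4 statements merged into one kernel-verified Lean document; each statement's English description precedes it below -/
import Mathlib

section
/- Let 1<p,q<∞. Let s:(0,∞)→[0,∞) be locally integrable and let K:(0,∞)×(0,∞)→ℝ be a measurable kernel such that ∫₀^r s(x)|K(x,y)| dx < ∞ for all r,y>0, and such that there are constants 0<c₁≤c₂ with c₁ ≤ K(x,y) ≤ c₂ whenever 0<xy≤1. Let u,v:(0,∞)→[0,∞) be weights, and suppose there is C₀>0 such that (∫₀^∞ ((Ff)*(y))^q u(y) dy)^{1/q} ≤ C₀·(∫₀^∞ (f*(x))^p v(x) dx)^{1/p} for every measurable f:(0,∞)→ℂ. Then there is C>0 such that for every r>0 with 0<∫₀^r v(x) dx<∞ one has (∫₀^{1/r} u(y) dy)^{1/q}·(∫₀^{r} v(x) dx)^{-1/p}·(∫₀^r s(x) dx) ≤ C. -/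
open MeasureTheory Set
open scoped ENNReal

/-- The decreasing rearrangement of `g : (0,∞) → ℂ`:
`g*(t) = inf { s ≥ 0 : |{x > 0 : |g(x)| > s}| ≤ t }`. -/
noncomputable def rearr (g : ℝ → ℂ) (t : ℝ) : ℝ≥0∞ :=
  sInf {s : ℝ≥0∞ | volume {x ∈ Set.Ioi (0:ℝ) | s < (‖g x‖₊ : ℝ≥0∞)} ≤ ENNReal.ofReal t}

/-- Necessity in weighted Lorentz spaces (generalization of Benedetto–Heinig): if
`‖(Ff)*‖_{q,u} ≤ C₀ ‖f*‖_{p,v}` for every measurable `f`, where `K ≍ 1` on `{xy ≤ 1}`,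
then `(∫₀^{1/r} u)^{1/q} (∫₀^r v)^{-1/p} (∫₀^r s) ≤ C` for all `r > 0`. -/
theorem stmt_4
    (p q : ℝ) (hp : 1 < p) (hq : 1 < q)
    (s : ℝ → ℝ) (hs : Measurable s) (hs0 : ∀ x ∈ Ioi (0:ℝ), 0 ≤ s x)
    (hsloc : ∀ r > (0:ℝ), (∫⁻ x in Ioo (0:ℝ) r, ENNReal.ofReal (s x)) < ⊤)
    (K : ℝ → ℝ → ℝ) (hK : Measurable (Function.uncurry K))
    (hsK : ∀ r > (0:ℝ), ∀ y > (0:ℝ),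
      (∫⁻ x in Ioo (0:ℝ) r, ENNReal.ofReal (s x * |K x y|)) < ⊤)
    (c₁ c₂ : ℝ) (hc₁ : 0 < c₁) (hc₁₂ : c₁ ≤ c₂)
    (hKbd : ∀ x ∈ Ioi (0:ℝ), ∀ y ∈ Ioi (0:ℝ), x * y ≤ 1 → c₁ ≤ K x y ∧ K x y ≤ c₂)
    (u v : ℝ → ℝ)
    (hu0 : ∀ y ∈ Ioi (0:ℝ), 0 ≤ u y) (hv0 : ∀ x ∈ Ioi (0:ℝ), 0 ≤ v x)
    (C₀ : ℝ) (hC₀ : 0 < C₀)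
    (hineq : ∀ f : ℝ → ℂ, Measurable f →
      (∫⁻ y in Ioi (0:ℝ),
          (rearr (fun z => ∫ x in Ioi (0:ℝ), (↑(s x) : ℂ) * f x * (↑(K x z) : ℂ)) y) ^ q *
            ENNReal.ofReal (u y)) ^ (1/q)
        ≤ ENNReal.ofReal C₀ *
          (∫⁻ x in Ioi (0:ℝ), (rearr f x) ^ p * ENNReal.ofReal (v x)) ^ (1/p)) :
    ∃ C > (0:ℝ), ∀ r > (0:ℝ),
      0 < (∫⁻ x in Ioo (0:ℝ) r, ENNReal.ofReal (v x)) →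
      (∫⁻ x in Ioo (0:ℝ) r, ENNReal.ofReal (v x)) < ⊤ →
      (∫⁻ y in Ioo (0:ℝ) (1/r), ENNReal.ofReal (u y)) ^ (1/q) *
        (∫⁻ x in Ioo (0:ℝ) r, ENNReal.ofReal (v x)) ^ (-(1/p) : ℝ) *
        (∫⁻ x in Ioo (0:ℝ) r, ENNReal.ofReal (s x))
        ≤ ENNReal.ofReal C := by
  refine ⟨C₀ / c₁, div_pos hC₀ hc₁, ?_⟩
  intro r hr hVpos hVfin
  set V : ℝ≥0∞ := ∫⁻ x in Ioo (0:ℝ) r, ENNReal.ofReal (v x) with hV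
  set U : ℝ≥0∞ := ∫⁻ y in Ioo (0:ℝ) (1/r), ENNReal.ofReal (u y) with hU
  set L : ℝ≥0∞ := ∫⁻ x in Ioo (0:ℝ) r, ENNReal.ofReal (s x) with hLdef
  set f : ℝ → ℂ := (Ioo (0:ℝ) r).indicator (fun _ => 1) with hf
  have hfm : Measurable f := measurable_const.indicator measurableSet_Ioo
  -- integrability of s on (0,r)
  have hsae : ∀ᵐ x ∂(volume.restrict (Ioo (0:ℝ) r)), 0 ≤ s x :=
    ae_restrict_of_forall_mem measurableSet_Ioo (fun x hx => hs0 x hx.1)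
  have hsint : IntegrableOn s (Ioo (0:ℝ) r) :=
    ⟨hs.aestronglyMeasurable, (hasFiniteIntegral_iff_ofReal hsae).2 (hsloc r hr)⟩
  set S : ℝ := ∫ x in Ioo (0:ℝ) r, s x with hSdef
  have hS0 : 0 ≤ S := setIntegral_nonneg measurableSet_Ioo (fun x hx => hs0 x hx.1)
  have hLS : ENNReal.ofReal S = L := ofReal_integral_eq_lintegral_ofReal hsint hsae
  have hq0 : (0:ℝ) ≤ 1/q := by positivity
  have hp0 : (0:ℝ) ≤ 1/p := by positivity
  -- the transform
  set Ff : ℝ → ℂ :=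
    fun z => ∫ x in Ioi (0:ℝ), (↑(s x) : ℂ) * f x * (↑(K x z) : ℂ) with hFf
  -- lower bound for ‖Ff z‖ for z ∈ (0,1/r)
  have hFflb : ∀ z ∈ Ioo (0:ℝ) (1/r), c₁ * S ≤ ‖Ff z‖ := by
    intro z hz
    have hz0 : (0:ℝ) < z := hz.1
    have hgm : Measurable (fun x => s x * K x z) :=
      hs.mul (hK.comp (measurable_id.prodMk measurable_const))
    have hgnn : ∀ᵐ x ∂(volume.restrict (Ioo (0:ℝ) r)),
        ‖s x * K x z‖ = s x * |K x z| := by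
      filter_upwards [hsae] with x hx
      rw [Real.norm_eq_abs, abs_mul, abs_of_nonneg hx]
    have hgint : IntegrableOn (fun x => s x * K x z) (Ioo (0:ℝ) r) := by
      refine ⟨hgm.aestronglyMeasurable, ?_⟩
      rw [hasFiniteIntegral_iff_norm]
      calc ∫⁻ x in Ioo (0:ℝ) r, ENNReal.ofReal ‖s x * K x z‖
          = ∫⁻ x in Ioo (0:ℝ) r, ENNReal.ofReal (s x * |K x z|) := by
            refine lintegral_congr_ae ?_
            filter_upwards [hgnn] with x hx using by rw [hx]
        _ < ⊤ := hsK r hr z hz0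
    have hFfz : Ff z = ((∫ x in Ioo (0:ℝ) r, s x * K x z : ℝ) : ℂ) := by
      show (∫ x in Ioi (0:ℝ), (↑(s x) : ℂ) * f x * (↑(K x z) : ℂ)) = _
      have : (fun x => (↑(s x) : ℂ) * f x * (↑(K x z) : ℂ))
          = (Ioo (0:ℝ) r).indicator (fun x => ((s x * K x z : ℝ) : ℂ)) := by
        funext x
        by_cases hx : x ∈ Ioo (0:ℝ) r
        · rw [indicator_of_mem hx]
          simp only [hf, indicator_of_mem hx]
          push_cast
          ring
        · rw [indicator_of_notMem hx]
          simp only [hf, indicator_of_notMem hx]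
          ring
      rw [this, setIntegral_indicator measurableSet_Ioo,
        inter_eq_self_of_subset_right (fun x hx => hx.1)]
      exact integral_ofReal
    have hmono : c₁ * S ≤ ∫ x in Ioo (0:ℝ) r, s x * K x z := by
      rw [hSdef, ← integral_const_mul]
      refine setIntegral_mono_on (hsint.const_mul c₁) hgint measurableSet_Ioo ?_
      intro x hx
      have hxz : x * z ≤ 1 := by
        have : x * z < r * (1/r) :=
          mul_lt_mul'' hx.2 hz.2 (le_of_lt hx.1) (le_of_lt hz.1)
        rw [mul_one_div_cancel hr.ne'] at this
        exact this.le
      have hK1 := (hKbd x hx.1 z hz0 hxz).1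
      calc c₁ * s x = s x * c₁ := mul_comm _ _
        _ ≤ s x * K x z := mul_le_mul_of_nonneg_left hK1 (hs0 x hx.1)
    calc c₁ * S ≤ ∫ x in Ioo (0:ℝ) r, s x * K x z := hmono
      _ ≤ ‖(∫ x in Ioo (0:ℝ) r, s x * K x z : ℝ)‖ := le_abs_self _
      _ = ‖Ff z‖ := by rw [hFfz, Complex.norm_real]
  -- lower bound on the rearrangement of Ff
  have hre : ∀ y ∈ Ioo (0:ℝ) (1/r), ENNReal.ofReal (c₁ * S) ≤ rearr Ff y := by
    intro y hy
    refine le_sInf fun t ht => ?_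
    by_contra hlt
    push_neg at hlt
    have hsub : Ioo (0:ℝ) (1/r) ⊆ {x ∈ Ioi (0:ℝ) | t < (‖Ff x‖₊ : ℝ≥0∞)} := by
      intro z hz
      refine ⟨hz.1, lt_of_lt_of_le hlt ?_⟩
      rw [← enorm_eq_nnnorm, ← ofReal_norm]
      exact ENNReal.ofReal_le_ofReal (hFflb z hz)
    have hvol : volume (Ioo (0:ℝ) (1/r))
        ≤ volume {x ∈ Ioi (0:ℝ) | t < (‖Ff x‖₊ : ℝ≥0∞)} := measure_mono hsub
    rw [Real.volume_Ioo, sub_zero] at hvol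
    have := hvol.trans ht
    rw [ENNReal.ofReal_le_ofReal_iff hy.1.le] at this
    exact absurd hy.2 (not_lt.2 this)
  -- bounds on the rearrangement of f
  have hf1 : ∀ x : ℝ, rearr f x ≤ 1 := by
    intro x
    refine sInf_le ?_
    have : {x' ∈ Ioi (0:ℝ) | (1:ℝ≥0∞) < (‖f x'‖₊ : ℝ≥0∞)} = ∅ := by
      refine eq_empty_of_forall_notMem fun x' hx' => ?_
      have h1 : ‖f x'‖ ≤ 1 := by
        rw [hf]
        by_cases h : x' ∈ Ioo (0:ℝ) r
        · rw [indicator_of_mem h]; simp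
        · rw [indicator_of_notMem h]; simp
      have : (‖f x'‖₊ : ℝ≥0∞) ≤ 1 := by
        rw [← enorm_eq_nnnorm, ← ofReal_norm, ← ENNReal.ofReal_one]
        exact ENNReal.ofReal_le_ofReal h1
      exact absurd hx'.2 (not_lt.2 this)
    show volume _ ≤ _
    rw [this]
    simp
  have hf0 : ∀ x : ℝ, r ≤ x → rearr f x = 0 := by
    intro x hx
    refine le_antisymm (sInf_le ?_) zero_le
    show volume {x' ∈ Ioi (0:ℝ) | (0:ℝ≥0∞) < (‖f x'‖₊ : ℝ≥0∞)} ≤ ENNReal.ofReal x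
    have hsub : {x' ∈ Ioi (0:ℝ) | (0:ℝ≥0∞) < (‖f x'‖₊ : ℝ≥0∞)} ⊆ Ioo 0 r := by
      intro x' hx'
      by_contra h
      have hfx : f x' = 0 := by rw [hf, indicator_of_notMem h]
      have h2 : (0:ℝ≥0∞) < (‖f x'‖₊ : ℝ≥0∞) := hx'.2
      rw [hfx] at h2
      simp at h2
    calc volume _ ≤ volume (Ioo (0:ℝ) r) := measure_mono hsub
      _ = ENNReal.ofReal r := by rw [Real.volume_Ioo, sub_zero]
      _ ≤ ENNReal.ofReal x := ENNReal.ofReal_le_ofReal hx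
  -- bound the RHS of `hineq f`
  have hRHS : (∫⁻ x in Ioi (0:ℝ), (rearr f x) ^ p * ENNReal.ofReal (v x)) ≤ V := by
    have hpt : ∀ x ∈ Ioi (0:ℝ), (rearr f x) ^ p * ENNReal.ofReal (v x)
        ≤ (Ioo (0:ℝ) r).indicator (fun x => ENNReal.ofReal (v x)) x := by
      intro x hx
      by_cases hxr : x < r
      · rw [indicator_of_mem (show x ∈ Ioo (0:ℝ) r from ⟨hx, hxr⟩)]
        calc (rearr f x) ^ p * ENNReal.ofReal (v x)
            ≤ (1:ℝ≥0∞) ^ p * ENNReal.ofReal (v x) :=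
              mul_le_mul_left (ENNReal.rpow_le_rpow (hf1 x) (by linarith)) _
          _ = ENNReal.ofReal (v x) := by rw [ENNReal.one_rpow, one_mul]
      · rw [hf0 x (not_lt.1 hxr), ENNReal.zero_rpow_of_pos (by linarith), zero_mul]
        exact zero_le
    calc (∫⁻ x in Ioi (0:ℝ), (rearr f x) ^ p * ENNReal.ofReal (v x))
        ≤ ∫⁻ x in Ioi (0:ℝ),
            (Ioo (0:ℝ) r).indicator (fun x => ENNReal.ofReal (v x)) x :=
          setLIntegral_mono' measurableSet_Ioi hpt
      _ = V := by
          rw [lintegral_indicator measurableSet_Ioo,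
            Measure.restrict_restrict measurableSet_Ioo,
            inter_eq_self_of_subset_left Ioo_subset_Ioi_self]
  -- bound the LHS of `hineq f`
  have hc1S : (ENNReal.ofReal (c₁ * S)) ^ q ≠ ⊤ :=
    ENNReal.rpow_ne_top_of_nonneg (by linarith) ENNReal.ofReal_ne_top
  have hLHS : (ENNReal.ofReal (c₁ * S)) ^ q * U
      ≤ ∫⁻ y in Ioi (0:ℝ), (rearr Ff y) ^ q * ENNReal.ofReal (u y) := by
    calc (ENNReal.ofReal (c₁ * S)) ^ q * U
        = ∫⁻ y in Ioo (0:ℝ) (1/r),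
            (ENNReal.ofReal (c₁ * S)) ^ q * ENNReal.ofReal (u y) := by
          rw [lintegral_const_mul' _ _ hc1S]
      _ ≤ ∫⁻ y in Ioo (0:ℝ) (1/r), (rearr Ff y) ^ q * ENNReal.ofReal (u y) := by
          refine setLIntegral_mono' measurableSet_Ioo fun y hy => ?_
          exact mul_le_mul_left (ENNReal.rpow_le_rpow (hre y hy) (by linarith)) _
      _ ≤ ∫⁻ y in Ioi (0:ℝ), (rearr Ff y) ^ q * ENNReal.ofReal (u y) :=
          lintegral_mono' (Measure.restrict_mono (fun y hy => hy.1) le_rfl) le_rfl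
  -- combine
  have key := hineq f hfm
  have main : ENNReal.ofReal (c₁ * S) * U ^ (1/q)
      ≤ ENNReal.ofReal C₀ * V ^ (1/p) := by
    calc ENNReal.ofReal (c₁ * S) * U ^ (1/q)
        = ((ENNReal.ofReal (c₁ * S)) ^ q * U) ^ (1/q) := by
          rw [ENNReal.mul_rpow_of_nonneg _ _ hq0, ← ENNReal.rpow_mul,
            mul_one_div_cancel (by linarith : q ≠ 0), ENNReal.rpow_one]
      _ ≤ (∫⁻ y in Ioi (0:ℝ), (rearr Ff y) ^ q * ENNReal.ofReal (u y)) ^ (1/q) :=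
          ENNReal.rpow_le_rpow hLHS hq0
      _ ≤ ENNReal.ofReal C₀ *
            (∫⁻ x in Ioi (0:ℝ), (rearr f x) ^ p * ENNReal.ofReal (v x)) ^ (1/p) := key
      _ ≤ ENNReal.ofReal C₀ * V ^ (1/p) :=
          mul_le_mul_right (ENNReal.rpow_le_rpow hRHS hp0) _
  -- final algebra
  have hVp0 : V ^ (1/p) ≠ 0 := (ENNReal.rpow_pos hVpos hVfin.ne).ne'
  have hVpt : V ^ (1/p) ≠ ⊤ := ENNReal.rpow_ne_top_of_nonneg hp0 hVfin.ne
  have hc₁0 : ENNReal.ofReal c₁ ≠ 0 := (ENNReal.ofReal_pos.2 hc₁).ne'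
  rw [ENNReal.ofReal_div_of_pos hc₁, ENNReal.div_eq_inv_mul, ENNReal.rpow_neg,
    ← hLS]
  rw [ENNReal.ofReal_mul hc₁.le] at main
  have step : ENNReal.ofReal c₁ * (U ^ (1/q) * (V ^ (1/p))⁻¹ * ENNReal.ofReal S)
      ≤ ENNReal.ofReal C₀ := by
    have h2 := mul_le_mul_left main (V ^ (1/p))⁻¹
    rw [mul_assoc (ENNReal.ofReal C₀), ENNReal.mul_inv_cancel hVp0 hVpt,
      mul_one] at h2
    calc ENNReal.ofReal c₁ * (U ^ (1/q) * (V ^ (1/p))⁻¹ * ENNReal.ofReal S)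
        = ENNReal.ofReal c₁ * ENNReal.ofReal S * U ^ (1/q) * (V ^ (1/p))⁻¹ := by
          ring
      _ ≤ ENNReal.ofReal C₀ := h2
  calc U ^ (1/q) * (V ^ (1/p))⁻¹ * ENNReal.ofReal S
      = (ENNReal.ofReal c₁)⁻¹ *
          (ENNReal.ofReal c₁ * (U ^ (1/q) * (V ^ (1/p))⁻¹ * ENNReal.ofReal S)) := by
        rw [← mul_assoc, ENNReal.inv_mul_cancel hc₁0 ENNReal.ofReal_ne_top, one_mul]
    _ ≤ (ENNReal.ofReal c₁)⁻¹ * ENNReal.ofReal C₀ := mul_le_mul_right step _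
end

section
/- Let 1<p≤q<∞ and δ>0. For a pair of real numbers ᾱ=(α₁,α₂), write x^{ᾱ}=x^{α₁} for 0<x≤1 and x^{ᾱ}=x^{α₂} for x>1, and ᾱ'=(α₂,α₁). Let K:(0,∞)×(0,∞)→ℂ be measurable with |K(x,y)| ≤ C₀·min{1,(xy)^{-δ/2}} for all x,y>0, and define Ff(y)=∫₀^∞ x^{δ} f(x) K(x,y) dx. Let β₁,β₂,γ₁,γ₂ ∈ ℝ satisfy β₁−γ₁=β₂−γ₂, βᵢ=γᵢ+1/q−1/p' for i=1,2, and 1/q−δ/2 < βᵢ < 1/q for i=1,2. Then there is a constant C>0, independent of f, such that (∫₀^∞ (y^{-β̄'})^q |Ff(y)|^q dy)^{1/q} ≤ C·(∫₀^∞ (x^{γ̄}·x^{δ})^p |f(x)|^p dx)^{1/p} for every measurable f:(0,∞)→ℂ with ∫₀^1 x^{δ}|f(x)| dx + ∫_1^∞ x^{δ/2}|f(x)| dx < ∞, where β̄=(β₁,β₂) and γ̄=(γ₁,γ₂). -/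
open MeasureTheory Set
open scoped ENNReal

/-- The piecewise power function `x^{ᾱ}` with `ᾱ = (a₁, a₂)`:
equals `x^{a₁}` for `0 < x ≤ 1` and `x^{a₂}` for `x > 1`. -/
noncomputable def ppw (a₁ a₂ x : ℝ) : ℝ := if x ≤ 1 then x ^ a₁ else x ^ a₂

lemma ppw_pos (a₁ a₂ : ℝ) {x : ℝ} (hx : 0 < x) : 0 < ppw a₁ a₂ x := by
  unfold ppw; split <;> exact Real.rpow_pos_of_pos hx _

lemma measurable_ppw (a₁ a₂ : ℝ) : Measurable (ppw a₁ a₂) :=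
  Measurable.ite (measurableSet_le measurable_id measurable_const)
    (measurable_id.pow_const a₁) (measurable_id.pow_const a₂)

lemma ppw_kernel_bound {δ c₁ c₂ : ℝ} (h1 : 0 < c₁) (h2 : 0 < c₂)
    (h1' : c₁ < δ/2) (h2' : c₂ < δ/2) {x y : ℝ} (hx : 0 < x) (hy : 0 < y) :
    ppw c₂ c₁ y * ppw c₁ c₂ x * min 1 ((x*y) ^ (-(δ/2))) ≤
      ppw (min c₁ c₂) (max c₁ c₂ - δ/2) (x*y) := by
  have ht : 0 < x * y := mul_pos hx hy
  have hm1 : min 1 ((x*y) ^ (-(δ/2))) ≤ 1 := min_le_left _ _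
  have hm2 : min 1 ((x*y) ^ (-(δ/2))) ≤ (x*y) ^ (-(δ/2)) := min_le_right _ _
  have hm0 : 0 ≤ min 1 ((x*y) ^ (-(δ/2))) :=
    le_min zero_le_one (Real.rpow_nonneg ht.le _)
  by_cases hx1 : x ≤ 1 <;> by_cases hy1 : y ≤ 1
  · -- x ≤ 1, y ≤ 1, so x*y ≤ 1
    have hxy1 : x * y ≤ 1 := by nlinarith
    simp only [ppw, if_pos hx1, if_pos hy1, if_pos hxy1]
    calc y ^ c₂ * x ^ c₁ * min 1 ((x*y) ^ (-(δ/2)))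
        ≤ y ^ c₂ * x ^ c₁ * 1 := by
          apply mul_le_mul_of_nonneg_left hm1
          positivity
      _ = y ^ c₂ * x ^ c₁ := mul_one _
      _ ≤ y ^ min c₁ c₂ * x ^ min c₁ c₂ := by
          apply mul_le_mul
          · exact Real.rpow_le_rpow_of_exponent_ge hy hy1 (min_le_right _ _)
          · exact Real.rpow_le_rpow_of_exponent_ge hx hx1 (min_le_left _ _)
          · positivity
          · positivity
      _ = (x*y) ^ min c₁ c₂ := by
          rw [Real.mul_rpow hx.le hy.le]; ring
  · -- x ≤ 1 < y
    have hyx : ppw c₂ c₁ y * ppw c₁ c₂ x = (x*y) ^ c₁ := by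
      simp only [ppw, if_pos hx1, if_neg hy1]
      rw [Real.mul_rpow hx.le hy.le]; ring
    rw [hyx]
    by_cases ht1 : x * y ≤ 1
    · simp only [ppw, if_pos ht1]
      calc (x*y) ^ c₁ * min 1 ((x*y) ^ (-(δ/2)))
          ≤ (x*y) ^ c₁ * 1 := by
            apply mul_le_mul_of_nonneg_left hm1; positivity
        _ = (x*y) ^ c₁ := mul_one _
        _ ≤ (x*y) ^ min c₁ c₂ := Real.rpow_le_rpow_of_exponent_ge ht ht1 (min_le_left _ _)
    · simp only [ppw, if_neg ht1]
      have ht1' : (1:ℝ) ≤ x * y := (not_le.1 ht1).le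
      calc (x*y) ^ c₁ * min 1 ((x*y) ^ (-(δ/2)))
          ≤ (x*y) ^ c₁ * (x*y) ^ (-(δ/2)) := by
            apply mul_le_mul_of_nonneg_left hm2; positivity
        _ = (x*y) ^ (c₁ - δ/2) := by
            rw [← Real.rpow_add ht]; ring_nf
        _ ≤ (x*y) ^ (max c₁ c₂ - δ/2) := by
            apply Real.rpow_le_rpow_of_exponent_le ht1'
            have := le_max_left c₁ c₂; linarith
  · -- y ≤ 1 < x
    have hyx : ppw c₂ c₁ y * ppw c₁ c₂ x = (x*y) ^ c₂ := by
      simp only [ppw, if_neg hx1, if_pos hy1]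
      rw [Real.mul_rpow hx.le hy.le]; ring
    rw [hyx]
    by_cases ht1 : x * y ≤ 1
    · simp only [ppw, if_pos ht1]
      calc (x*y) ^ c₂ * min 1 ((x*y) ^ (-(δ/2)))
          ≤ (x*y) ^ c₂ * 1 := by
            apply mul_le_mul_of_nonneg_left hm1; positivity
        _ = (x*y) ^ c₂ := mul_one _
        _ ≤ (x*y) ^ min c₁ c₂ := Real.rpow_le_rpow_of_exponent_ge ht ht1 (min_le_right _ _)
    · simp only [ppw, if_neg ht1]
      have ht1' : (1:ℝ) ≤ x * y := (not_le.1 ht1).le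
      calc (x*y) ^ c₂ * min 1 ((x*y) ^ (-(δ/2)))
          ≤ (x*y) ^ c₂ * (x*y) ^ (-(δ/2)) := by
            apply mul_le_mul_of_nonneg_left hm2; positivity
        _ = (x*y) ^ (c₂ - δ/2) := by
            rw [← Real.rpow_add ht]; ring_nf
        _ ≤ (x*y) ^ (max c₁ c₂ - δ/2) := by
            apply Real.rpow_le_rpow_of_exponent_le ht1'
            have := le_max_right c₁ c₂; linarith
  · -- 1 < x, 1 < y
    have hx1' : (1:ℝ) ≤ x := (not_le.1 hx1).le
    have hy1' : (1:ℝ) ≤ y := (not_le.1 hy1).le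
    have ht1 : ¬ (x * y ≤ 1) := by push_neg; nlinarith
    have ht1' : (1:ℝ) ≤ x * y := by nlinarith
    simp only [ppw, if_neg hx1, if_neg hy1, if_neg ht1]
    calc y ^ c₁ * x ^ c₂ * min 1 ((x*y) ^ (-(δ/2)))
        ≤ y ^ c₁ * x ^ c₂ * (x*y) ^ (-(δ/2)) := by
          apply mul_le_mul_of_nonneg_left hm2; positivity
      _ ≤ y ^ max c₁ c₂ * x ^ max c₁ c₂ * (x*y) ^ (-(δ/2)) := by
          apply mul_le_mul_of_nonneg_right _ (Real.rpow_nonneg ht.le _)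
          apply mul_le_mul
          · exact Real.rpow_le_rpow_of_exponent_le hy1' (le_max_left _ _)
          · exact Real.rpow_le_rpow_of_exponent_le hx1' (le_max_right _ _)
          · positivity
          · positivity
      _ = (x*y) ^ (max c₁ c₂) * (x*y) ^ (-(δ/2)) := by
          simp only [Real.mul_rpow hx.le hy.le]; ring
      _ = (x*y) ^ (max c₁ c₂ - δ/2) := by
          rw [← Real.rpow_add ht]; ring_nf

lemma lintegral_Ioi_comp_mul_right (J : ℝ → ℝ≥0∞) (hJ : Measurable J) {z : ℝ} (hz : 0 < z) :
    ∫⁻ t in Ioi (0:ℝ), J (t * z) = ENNReal.ofReal z⁻¹ * ∫⁻ t in Ioi (0:ℝ), J t := by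
  have h1 : ∀ t : ℝ, (Ioi (0:ℝ)).indicator (fun t => J (t * z)) t
      = (Ioi (0:ℝ)).indicator J (t * z) := by
    intro t
    by_cases ht : 0 < t
    · rw [indicator_of_mem (mem_Ioi.2 ht), indicator_of_mem (mem_Ioi.2 (mul_pos ht hz))]
    · rw [indicator_of_notMem (by simpa using ht), indicator_of_notMem]
      simp only [mem_Ioi]
      intro h
      apply ht
      by_contra h'
      push_neg at h'
      nlinarith
  rw [← lintegral_indicator measurableSet_Ioi, ← lintegral_indicator measurableSet_Ioi]
  calc ∫⁻ t, (Ioi (0:ℝ)).indicator (fun t => J (t * z)) t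
      = ∫⁻ t, (Ioi (0:ℝ)).indicator J (t * z) := by simp_rw [h1]
    _ = ∫⁻ s, (Ioi (0:ℝ)).indicator J s ∂(Measure.map (· * z) volume) :=
        (lintegral_map (hJ.indicator measurableSet_Ioi) (measurable_mul_const z)).symm
    _ = ENNReal.ofReal |z⁻¹| * ∫⁻ s, (Ioi (0:ℝ)).indicator J s := by
        rw [Real.map_volume_mul_right hz.ne', lintegral_smul_measure, smul_eq_mul]
    _ = ENNReal.ofReal z⁻¹ * ∫⁻ s, (Ioi (0:ℝ)).indicator J s := by
        rw [abs_of_pos (inv_pos.2 hz)]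

lemma holder3 {α : Type*} [MeasurableSpace α] {μ : Measure α} (f₁ f₂ f₃ : α → ℝ≥0∞)
    (h₁ : AEMeasurable f₁ μ) (h₂ : AEMeasurable f₂ μ) (h₃ : AEMeasurable f₃ μ)
    {e₁ e₂ e₃ : ℝ} (he₁ : 0 ≤ e₁) (he₂ : 0 ≤ e₂) (he₃ : 0 ≤ e₃) (hsum : e₁ + e₂ + e₃ = 1) :
    ∫⁻ a, f₁ a ^ e₁ * f₂ a ^ e₂ * f₃ a ^ e₃ ∂μ ≤
      (∫⁻ a, f₁ a ∂μ) ^ e₁ * (∫⁻ a, f₂ a ∂μ) ^ e₂ * (∫⁻ a, f₃ a ∂μ) ^ e₃ := by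
  have h := ENNReal.lintegral_prod_norm_pow_le (μ := μ) (Finset.univ : Finset (Fin 3))
      (f := ![f₁, f₂, f₃]) (p := ![e₁, e₂, e₃]) ?_ ?_ ?_
  · simpa [Fin.prod_univ_three] using h
  · intro i _; fin_cases i <;> simpa
  · simp [Fin.sum_univ_three]; linarith
  · intro i _; fin_cases i <;> simpa

lemma lintegral_ker {Φ : ℝ → ℝ≥0∞} (hΦ : Measurable Φ) (r : ℝ) {z : ℝ} (hz : 0 < z) :
    ∫⁻ t in Ioi (0:ℝ), Φ (t * z) ^ r * ENNReal.ofReal t⁻¹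
      = ∫⁻ t in Ioi (0:ℝ), Φ t ^ r * ENNReal.ofReal t⁻¹ := by
  have hJm : Measurable fun s : ℝ => Φ s ^ r * ENNReal.ofReal s⁻¹ * ENNReal.ofReal z :=
    (((hΦ.pow_const r).mul (measurable_inv.ennreal_ofReal)).mul_const _)
  have step1 : ∫⁻ t in Ioi (0:ℝ), Φ (t * z) ^ r * ENNReal.ofReal t⁻¹
      = ∫⁻ t in Ioi (0:ℝ), (fun s => Φ s ^ r * ENNReal.ofReal s⁻¹ * ENNReal.ofReal z) (t * z) := by
    apply setLIntegral_congr_fun measurableSet_Ioi ?_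
    intro t ht
    rw [mem_Ioi] at ht
    simp only
    have h : ENNReal.ofReal t⁻¹ = ENNReal.ofReal (t*z)⁻¹ * ENNReal.ofReal z := by
      rw [← ENNReal.ofReal_mul (by positivity), mul_inv, mul_assoc,
        inv_mul_cancel₀ hz.ne', mul_one]
    rw [h]; ring
  rw [step1, lintegral_Ioi_comp_mul_right _ hJm hz,
    lintegral_mul_const' _ _ ENNReal.ofReal_ne_top, ← mul_assoc, mul_comm (ENNReal.ofReal z⁻¹),
    mul_assoc, ← ENNReal.ofReal_mul (inv_pos.2 hz).le, inv_mul_cancel₀ hz.ne',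
    ENNReal.ofReal_one, mul_one]

lemma M_finite {a b r : ℝ} (ha : 0 < a) (hb : b < 0) (hr : 0 < r) :
    ∫⁻ t in Ioi (0:ℝ), ENNReal.ofReal (ppw a b t) ^ r * ENNReal.ofReal t⁻¹ ≠ ⊤ := by
  have hsplit : Ioi (0:ℝ) = Ioc 0 1 ∪ Ioi 1 := (Ioc_union_Ioi_eq_Ioi zero_le_one).symm
  rw [hsplit, lintegral_union measurableSet_Ioi (Ioc_disjoint_Ioi le_rfl)]
  have part1 : ∫⁻ t in Ioc (0:ℝ) 1, ENNReal.ofReal (ppw a b t) ^ r * ENNReal.ofReal t⁻¹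
      = ∫⁻ t in Ioc (0:ℝ) 1, ENNReal.ofReal (t ^ (a * r - 1)) := by
    apply setLIntegral_congr_fun measurableSet_Ioc ?_
    intro t ht
    have ht0 : 0 < t := ht.1
    simp only [ppw, if_pos ht.2]
    rw [ENNReal.ofReal_rpow_of_pos (Real.rpow_pos_of_pos ht0 _), ← Real.rpow_mul ht0.le,
      ← ENNReal.ofReal_mul (Real.rpow_nonneg ht0.le _),
      show t⁻¹ = t ^ (-1:ℝ) by rw [Real.rpow_neg_one], ← Real.rpow_add ht0]
    ring_nf
  have part2 : ∫⁻ t in Ioi (1:ℝ), ENNReal.ofReal (ppw a b t) ^ r * ENNReal.ofReal t⁻¹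
      = ∫⁻ t in Ioi (1:ℝ), ENNReal.ofReal (t ^ (b * r - 1)) := by
    apply setLIntegral_congr_fun measurableSet_Ioi ?_
    intro t ht
    have ht1 : (1:ℝ) < t := mem_Ioi.1 ht
    have ht0 : 0 < t := lt_trans one_pos ht1
    simp only [ppw, if_neg (not_le.2 ht1)]
    rw [ENNReal.ofReal_rpow_of_pos (Real.rpow_pos_of_pos ht0 _), ← Real.rpow_mul ht0.le,
      ← ENNReal.ofReal_mul (Real.rpow_nonneg ht0.le _),
      show t⁻¹ = t ^ (-1:ℝ) by rw [Real.rpow_neg_one], ← Real.rpow_add ht0]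
    ring_nf
  rw [part1, part2]
  apply ENNReal.add_ne_top.2
  constructor
  · have hint : IntervalIntegrable (fun t : ℝ => t ^ (a * r - 1)) volume 0 1 :=
      intervalIntegral.intervalIntegrable_rpow' (by nlinarith)
    rw [intervalIntegrable_iff_integrableOn_Ioc_of_le zero_le_one] at hint
    refine ne_of_lt (lt_of_le_of_lt (lintegral_mono fun t => ?_) hint.2)
    simp only [Real.enorm_eq_ofReal_abs]
    exact ENNReal.ofReal_le_ofReal (le_abs_self _)
  · have hint : IntegrableOn (fun t : ℝ => t ^ (b * r - 1)) (Ioi 1) volume :=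
      integrableOn_Ioi_rpow_of_lt (by nlinarith) one_pos
    refine ne_of_lt (lt_of_le_of_lt (lintegral_mono fun t => ?_) hint.2)
    simp only [Real.enorm_eq_ofReal_abs]
    exact ENNReal.ofReal_le_ofReal (le_abs_self _)

/-- Sufficiency with piecewise power weights (Theorem `theoremsuffpowerweights`):
`‖x^{-β̄'} F f‖_q ≤ C ‖x^{γ̄+δ} f‖_p` for transforms with
`|K(x,y)| ≲ min{1,(xy)^{-δ/2}}` and `Ff(y) = ∫₀^∞ x^δ f(x) K(x,y) dx`. -/
theorem stmt_5
    (p q p' δ : ℝ) (hp : 1 < p) (hpq : p ≤ q)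
    (hp'def : p' = p / (p - 1)) (hδ : 0 < δ)
    (K : ℝ → ℝ → ℂ) (hK : Measurable (Function.uncurry K))
    (C₀ : ℝ) (hC₀ : 0 < C₀)
    (hKbd : ∀ x ∈ Ioi (0:ℝ), ∀ y ∈ Ioi (0:ℝ),
      ‖K x y‖ ≤ C₀ * min 1 ((x * y) ^ (-(δ/2))))
    (β₁ β₂ γ₁ γ₂ : ℝ) (hβγ : β₁ - γ₁ = β₂ - γ₂)
    (h1 : β₁ = γ₁ + 1/q - 1/p') (h2 : β₂ = γ₂ + 1/q - 1/p')
    (h3l : 1/q - δ/2 < β₁) (h3r : β₁ < 1/q)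
    (h4l : 1/q - δ/2 < β₂) (h4r : β₂ < 1/q) :
    ∃ C > (0:ℝ), ∀ f : ℝ → ℂ, Measurable f →
      (∫⁻ x in Ioc (0:ℝ) 1, ENNReal.ofReal (x ^ δ * ‖f x‖)) < ⊤ →
      (∫⁻ x in Ioi (1:ℝ), ENNReal.ofReal (x ^ (δ/2) * ‖f x‖)) < ⊤ →
      (∫⁻ y in Ioi (0:ℝ),
          ENNReal.ofReal ((ppw (-β₂) (-β₁) y) ^ q *
            ‖∫ x in Ioi (0:ℝ), (↑(x ^ δ) : ℂ) * f x * K x y‖ ^ q)) ^ (1/q)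
        ≤ ENNReal.ofReal C *
          (∫⁻ x in Ioi (0:ℝ),
            ENNReal.ofReal ((ppw γ₁ γ₂ x * x ^ δ) ^ p * ‖f x‖ ^ p)) ^ (1/p) := by
  -- basic numeric facts
  have hq1 : 1 < q := lt_of_lt_of_le hp hpq
  have hq0 : 0 < q := by linarith
  have hp0 : 0 < p := by linarith
  have hp1 : 0 < p - 1 := by linarith
  have hp'v : 1/p' = 1 - 1/p := by
    rw [hp'def]
    field_simp
  have hp'0 : 0 < 1/p' := by
    rw [hp'v]
    have h1p : 1/p < 1 := by rw [div_lt_one hp0]; linarith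
    linarith
  set c₁ : ℝ := 1/q - β₁ with hc₁def
  set c₂ : ℝ := 1/q - β₂ with hc₂def
  have hc₁0 : 0 < c₁ := by rw [hc₁def]; linarith
  have hc₂0 : 0 < c₂ := by rw [hc₂def]; linarith
  have hc₁δ : c₁ < δ/2 := by rw [hc₁def]; linarith
  have hc₂δ : c₂ < δ/2 := by rw [hc₂def]; linarith
  have hγ₁ : γ₁ = 1/p' - c₁ := by rw [hc₁def]; linarith
  have hγ₂ : γ₂ = 1/p' - c₂ := by rw [hc₂def]; linarith
  set θ : ℝ := 1/p - 1/q with hθdef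
  have hθ0 : 0 ≤ θ := by
    rw [hθdef]
    have := one_div_le_one_div_of_le hp0 hpq
    linarith
  set r : ℝ := (1/q + 1/p')⁻¹ with hrdef
  have hs0 : 0 < 1/q + 1/p' := by positivity
  have hr0 : 0 < r := by rw [hrdef]; positivity
  have hrq : r * (1/q) + r * (1/p') = 1 := by
    rw [hrdef, ← mul_add, inv_mul_cancel₀ hs0.ne']
  have hsum1 : 1/q + 1/p' + θ = 1 := by rw [hθdef, hp'v]; ring
  have hpθ : p * (1/q) + p * θ = 1 := by
    have h : p * (1/q) + p * θ = p * (1/p) := by rw [hθdef]; ring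
    rw [h, mul_one_div, div_self hp0.ne']
  -- the majorant kernel profile Φ and its Schur constant M
  set Φ : ℝ → ℝ≥0∞ := fun t => ENNReal.ofReal (ppw (min c₁ c₂) (max c₁ c₂ - δ/2) t) with hΦdef
  have hΦm : Measurable Φ := (measurable_ppw _ _).ennreal_ofReal
  set M : ℝ≥0∞ := ∫⁻ t in Ioi (0:ℝ), Φ t ^ r * ENNReal.ofReal t⁻¹ with hMdef
  have hMne : M ≠ ⊤ := by
    rw [hMdef, hΦdef]
    exact M_finite (lt_min hc₁0 hc₂0) (by have := max_lt hc₁δ hc₂δ; linarith) hr0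
  have hker : ∀ z : ℝ, 0 < z →
      ∫⁻ t in Ioi (0:ℝ), Φ (t * z) ^ r * ENNReal.ofReal t⁻¹ = M :=
    fun z hz => lintegral_ker hΦm r hz
  refine ⟨C₀ * M.toReal ^ (1/q + 1/p') + 1, by positivity, ?_⟩
  intro f hf _ _
  set G : ℝ → ℝ≥0∞ := fun x => ENNReal.ofReal (ppw γ₁ γ₂ x * x ^ δ * ‖f x‖) with hGdef
  have hGm : Measurable G :=
    (((measurable_ppw γ₁ γ₂).mul (measurable_id.pow_const δ)).mul hf.norm).ennreal_ofReal
  set R : ℝ≥0∞ := ∫⁻ x in Ioi (0:ℝ), G x ^ p with hRdef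
  have hRHS : ∫⁻ x in Ioi (0:ℝ), ENNReal.ofReal ((ppw γ₁ γ₂ x * x ^ δ) ^ p * ‖f x‖ ^ p) = R := by
    rw [hRdef]
    apply setLIntegral_congr_fun measurableSet_Ioi ?_
    intro x hx
    have hx0 : 0 < x := mem_Ioi.1 hx
    have hu : 0 ≤ ppw γ₁ γ₂ x * x ^ δ :=
      mul_nonneg (ppw_pos γ₁ γ₂ hx0).le (Real.rpow_nonneg hx0.le δ)
    rw [hGdef]
    simp only
    rw [← Real.mul_rpow hu (norm_nonneg _),
      ENNReal.ofReal_rpow_of_nonneg (mul_nonneg hu (norm_nonneg _)) hp0.le]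
  rw [hRHS]
  by_cases hRtop : R = ⊤
  · rw [hRtop, ENNReal.top_rpow_of_pos (by positivity), ENNReal.mul_top
      (ENNReal.ofReal_pos.2 (by positivity)).ne']
    exact le_top
  -- pointwise factorized bound
  have hpoint : ∀ y ∈ Ioi (0:ℝ), ∀ x ∈ Ioi (0:ℝ),
      ENNReal.ofReal (ppw (-β₂) (-β₁) y) * ENNReal.ofReal ‖(↑(x ^ δ) : ℂ) * f x * K x y‖
        ≤ ENNReal.ofReal C₀ *
          ((Φ (x*y) ^ r * G x ^ p * ENNReal.ofReal y⁻¹) ^ (1/q) *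
            (Φ (x*y) ^ r * ENNReal.ofReal x⁻¹) ^ (1/p') * (G x ^ p) ^ θ) := by
    intro y hy x hx
    rw [mem_Ioi] at hy hx
    have hxy : 0 < x * y := mul_pos hx hy
    have hw0 : 0 ≤ ppw (-β₂) (-β₁) y := (ppw_pos _ _ hy).le
    have hnorm : ‖(↑(x ^ δ) : ℂ) * f x * K x y‖ = x ^ δ * ‖f x‖ * ‖K x y‖ := by
      rw [norm_mul, norm_mul, Complex.norm_real, Real.norm_eq_abs,
        abs_of_pos (Real.rpow_pos_of_pos hx δ)]
    have hm0 : 0 ≤ min 1 ((x*y) ^ (-(δ/2))) :=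
      le_min zero_le_one (Real.rpow_nonneg hxy.le _)
    have hKb : ‖K x y‖ ≤ C₀ * min 1 ((x*y) ^ (-(δ/2))) := hKbd x (mem_Ioi.2 hx) y (mem_Ioi.2 hy)
    have idw : ppw (-β₂) (-β₁) y = y ^ (-(1/q)) * ppw c₂ c₁ y := by
      unfold ppw; split_ifs with h
      · rw [show (-β₂) = -(1/q) + c₂ from by rw [hc₂def]; ring, Real.rpow_add hy]
      · rw [show (-β₁) = -(1/q) + c₁ from by rw [hc₁def]; ring, Real.rpow_add hy]
    have idγ : ppw γ₁ γ₂ x = x ^ (1/p') * ppw (-c₁) (-c₂) x := by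
      unfold ppw; split_ifs with h
      · rw [show γ₁ = 1/p' + -c₁ from by rw [hγ₁]; ring, Real.rpow_add hx]
      · rw [show γ₂ = 1/p' + -c₂ from by rw [hγ₂]; ring, Real.rpow_add hx]
    have idinv : ppw c₁ c₂ x * ppw (-c₁) (-c₂) x = 1 := by
      unfold ppw; split_ifs with h <;> rw [← Real.rpow_add hx] <;> simp
    have star := ppw_kernel_bound hc₁0 hc₂0 hc₁δ hc₂δ hx hy
    have hreal : ppw (-β₂) (-β₁) y * (x ^ δ * ‖f x‖ * ‖K x y‖) ≤
        C₀ * (ppw (min c₁ c₂) (max c₁ c₂ - δ/2) (x*y) *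
          (y ^ (-(1/q)) * (x ^ (-(1/p')) * (ppw γ₁ γ₂ x * x ^ δ * ‖f x‖)))) := by
      have step1 : ppw (-β₂) (-β₁) y * (x ^ δ * ‖f x‖ * ‖K x y‖) ≤
          ppw (-β₂) (-β₁) y * (x ^ δ * ‖f x‖ * (C₀ * min 1 ((x*y) ^ (-(δ/2))))) := by
        apply mul_le_mul_of_nonneg_left _ hw0
        apply mul_le_mul_of_nonneg_left hKb
        have := Real.rpow_pos_of_pos hx δ
        positivity
      refine step1.trans ?_
      have einv : x ^ (-(1/p')) * x ^ (1/p') = 1 := by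
        rw [← Real.rpow_add hx]; simp
      have step2 : ppw (-β₂) (-β₁) y * (x ^ δ * ‖f x‖ * (C₀ * min 1 ((x*y) ^ (-(δ/2))))) =
          C₀ * ((ppw c₂ c₁ y * ppw c₁ c₂ x * min 1 ((x*y) ^ (-(δ/2)))) *
            (ppw (-c₁) (-c₂) x * (y ^ (-(1/q)) * (x ^ δ * ‖f x‖)))) := by
        rw [idw]
        linear_combination
          (-(C₀ * min 1 ((x*y) ^ (-(δ/2))) * y ^ (-(1/q)) * (x ^ δ * ‖f x‖) * ppw c₂ c₁ y)) * idinv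
      rw [step2]
      have step3 : (ppw c₂ c₁ y * ppw c₁ c₂ x * min 1 ((x*y) ^ (-(δ/2)))) *
            (ppw (-c₁) (-c₂) x * (y ^ (-(1/q)) * (x ^ δ * ‖f x‖)))
          ≤ ppw (min c₁ c₂) (max c₁ c₂ - δ/2) (x*y) *
            (ppw (-c₁) (-c₂) x * (y ^ (-(1/q)) * (x ^ δ * ‖f x‖))) := by
        apply mul_le_mul_of_nonneg_right star
        apply mul_nonneg (ppw_pos _ _ hx).le
        have := Real.rpow_pos_of_pos hx δ
        positivity
      refine (mul_le_mul_of_nonneg_left step3 hC₀.le).trans ?_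
      apply le_of_eq
      rw [idγ]
      linear_combination
        (-(C₀ * ppw (min c₁ c₂) (max c₁ c₂ - δ/2) (x*y) * ppw (-c₁) (-c₂) x *
          y ^ (-(1/q)) * x ^ δ * ‖f x‖)) * einv
    have efact : (Φ (x*y) ^ r * G x ^ p * ENNReal.ofReal y⁻¹) ^ (1/q) *
          (Φ (x*y) ^ r * ENNReal.ofReal x⁻¹) ^ (1/p') * (G x ^ p) ^ θ
        = Φ (x*y) * ((ENNReal.ofReal y) ^ (-(1/q)) * ((ENNReal.ofReal x) ^ (-(1/p')) * G x)) := by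
      have hY : ENNReal.ofReal y⁻¹ = (ENNReal.ofReal y) ^ (-1 : ℝ) := by
        rw [ENNReal.ofReal_inv_of_pos hy, ENNReal.rpow_neg_one]
      have hX : ENNReal.ofReal x⁻¹ = (ENNReal.ofReal x) ^ (-1 : ℝ) := by
        rw [ENNReal.ofReal_inv_of_pos hx, ENNReal.rpow_neg_one]
      rw [hY, hX]
      have hq' : (0:ℝ) ≤ 1/q := by positivity
      have hp'' : (0:ℝ) ≤ 1/p' := hp'0.le
      calc (Φ (x*y) ^ r * G x ^ p * (ENNReal.ofReal y) ^ (-1:ℝ)) ^ (1/q) *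
            ((Φ (x*y) ^ r * (ENNReal.ofReal x) ^ (-1:ℝ)) ^ (1/p')) * (G x ^ p) ^ θ
          = (Φ (x*y) ^ (r * (1/q)) * G x ^ (p * (1/q)) * (ENNReal.ofReal y) ^ ((-1) * (1/q))) *
            (Φ (x*y) ^ (r * (1/p')) * (ENNReal.ofReal x) ^ ((-1) * (1/p'))) * G x ^ (p * θ) := by
            rw [ENNReal.mul_rpow_of_nonneg _ _ hq', ENNReal.mul_rpow_of_nonneg _ _ hq',
              ENNReal.mul_rpow_of_nonneg _ _ hp'', ← ENNReal.rpow_mul, ← ENNReal.rpow_mul,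
              ← ENNReal.rpow_mul, ← ENNReal.rpow_mul, ← ENNReal.rpow_mul, ← ENNReal.rpow_mul]
        _ = (Φ (x*y) ^ (r * (1/q)) * Φ (x*y) ^ (r * (1/p'))) *
            (G x ^ (p * (1/q)) * G x ^ (p * θ)) *
            ((ENNReal.ofReal y) ^ ((-1) * (1/q)) * (ENNReal.ofReal x) ^ ((-1) * (1/p'))) := by
            ring
        _ = Φ (x*y) * G x *
            ((ENNReal.ofReal y) ^ ((-1) * (1/q)) * (ENNReal.ofReal x) ^ ((-1) * (1/p'))) := by
            rw [← ENNReal.rpow_add_of_nonneg _ _ (by positivity) (by positivity), hrq,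
              ENNReal.rpow_one, ← ENNReal.rpow_add_of_nonneg _ _ (by positivity)
                (by positivity), hpθ, ENNReal.rpow_one]
        _ = Φ (x*y) * ((ENNReal.ofReal y) ^ (-(1/q)) * ((ENNReal.ofReal x) ^ (-(1/p')) * G x)) := by
            rw [show ((-1:ℝ) * (1/q)) = -(1/q) by ring, show ((-1:ℝ) * (1/p')) = -(1/p') by ring]
            ring
    rw [efact]
    calc ENNReal.ofReal (ppw (-β₂) (-β₁) y) * ENNReal.ofReal ‖(↑(x ^ δ) : ℂ) * f x * K x y‖
        = ENNReal.ofReal (ppw (-β₂) (-β₁) y * (x ^ δ * ‖f x‖ * ‖K x y‖)) := by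
          rw [hnorm, ENNReal.ofReal_mul hw0]
      _ ≤ ENNReal.ofReal (C₀ * (ppw (min c₁ c₂) (max c₁ c₂ - δ/2) (x*y) *
            (y ^ (-(1/q)) * (x ^ (-(1/p')) * (ppw γ₁ γ₂ x * x ^ δ * ‖f x‖))))) :=
          ENNReal.ofReal_le_ofReal hreal
      _ = ENNReal.ofReal C₀ * (Φ (x*y) *
            ((ENNReal.ofReal y) ^ (-(1/q)) * ((ENNReal.ofReal x) ^ (-(1/p')) * G x))) := by
          rw [ENNReal.ofReal_mul hC₀.le]
          congr 1
          rw [ENNReal.ofReal_mul (ppw_pos _ _ hxy).le]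
          congr 1
          rw [ENNReal.ofReal_mul (Real.rpow_nonneg hy.le _)]
          congr 1
          · exact (ENNReal.ofReal_rpow_of_pos hy).symm
          rw [ENNReal.ofReal_mul (Real.rpow_nonneg hx.le _)]
          congr 1
          exact (ENNReal.ofReal_rpow_of_pos hx).symm
  -- the per-y estimate
  have main : ∀ y ∈ Ioi (0:ℝ),
      ENNReal.ofReal ((ppw (-β₂) (-β₁) y) ^ q *
          ‖∫ x in Ioi (0:ℝ), (↑(x ^ δ) : ℂ) * f x * K x y‖ ^ q)
        ≤ ENNReal.ofReal C₀ ^ q * M ^ (1/p' * q) * R ^ (θ * q) *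
          ∫⁻ x in Ioi (0:ℝ), Φ (x*y) ^ r * G x ^ p * ENNReal.ofReal y⁻¹ := by
    intro y hy
    have hy0 : 0 < y := mem_Ioi.1 hy
    have hw0 : 0 ≤ ppw (-β₂) (-β₁) y := (ppw_pos _ _ hy0).le
    have eq1 : ENNReal.ofReal ((ppw (-β₂) (-β₁) y) ^ q *
          ‖∫ x in Ioi (0:ℝ), (↑(x ^ δ) : ℂ) * f x * K x y‖ ^ q)
        = (ENNReal.ofReal (ppw (-β₂) (-β₁) y) *
            ENNReal.ofReal ‖∫ x in Ioi (0:ℝ), (↑(x ^ δ) : ℂ) * f x * K x y‖) ^ q := by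
      rw [← Real.mul_rpow hw0 (norm_nonneg _), ← ENNReal.ofReal_mul hw0,
        ENNReal.ofReal_rpow_of_nonneg (mul_nonneg hw0 (norm_nonneg _)) hq0.le]
    rw [eq1]
    have meas₁ : AEMeasurable (fun x => Φ (x*y) ^ r * G x ^ p * ENNReal.ofReal y⁻¹)
        (volume.restrict (Ioi (0:ℝ))) :=
      ((((hΦm.comp (measurable_mul_const y)).pow_const r).mul (hGm.pow_const p)).mul_const
        _).aemeasurable
    have meas₂ : AEMeasurable (fun x => Φ (x*y) ^ r * ENNReal.ofReal x⁻¹)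
        (volume.restrict (Ioi (0:ℝ))) :=
      (((hΦm.comp (measurable_mul_const y)).pow_const r).mul
        measurable_inv.ennreal_ofReal).aemeasurable
    have meas₃ : AEMeasurable (fun x => G x ^ p) (volume.restrict (Ioi (0:ℝ))) :=
      (hGm.pow_const p).aemeasurable
    have le2 : ENNReal.ofReal (ppw (-β₂) (-β₁) y) *
          ENNReal.ofReal ‖∫ x in Ioi (0:ℝ), (↑(x ^ δ) : ℂ) * f x * K x y‖
        ≤ ENNReal.ofReal C₀ *
          ((∫⁻ x in Ioi (0:ℝ), Φ (x*y) ^ r * G x ^ p * ENNReal.ofReal y⁻¹) ^ (1/q) *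
            M ^ (1/p') * R ^ θ) := by
      calc ENNReal.ofReal (ppw (-β₂) (-β₁) y) *
            ENNReal.ofReal ‖∫ x in Ioi (0:ℝ), (↑(x ^ δ) : ℂ) * f x * K x y‖
          ≤ ENNReal.ofReal (ppw (-β₂) (-β₁) y) *
            ∫⁻ x in Ioi (0:ℝ), ENNReal.ofReal ‖(↑(x ^ δ) : ℂ) * f x * K x y‖ := by
            apply mul_le_mul_right
            calc ENNReal.ofReal ‖∫ x in Ioi (0:ℝ), (↑(x ^ δ) : ℂ) * f x * K x y‖
                = ↑‖∫ x in Ioi (0:ℝ), (↑(x ^ δ) : ℂ) * f x * K x y‖₊ :=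
                  ofReal_norm_eq_enorm _
              _ ≤ ∫⁻ x in Ioi (0:ℝ), ↑‖(↑(x ^ δ) : ℂ) * f x * K x y‖₊ :=
                  enorm_integral_le_lintegral_enorm _
              _ = ∫⁻ x in Ioi (0:ℝ), ENNReal.ofReal ‖(↑(x ^ δ) : ℂ) * f x * K x y‖ := by
                  exact lintegral_congr fun x => (ofReal_norm_eq_enorm _).symm
        _ = ∫⁻ x in Ioi (0:ℝ), ENNReal.ofReal (ppw (-β₂) (-β₁) y) *
              ENNReal.ofReal ‖(↑(x ^ δ) : ℂ) * f x * K x y‖ :=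
            (lintegral_const_mul' _ _ ENNReal.ofReal_ne_top).symm
        _ ≤ ∫⁻ x in Ioi (0:ℝ), ENNReal.ofReal C₀ *
              ((Φ (x*y) ^ r * G x ^ p * ENNReal.ofReal y⁻¹) ^ (1/q) *
                (Φ (x*y) ^ r * ENNReal.ofReal x⁻¹) ^ (1/p') * (G x ^ p) ^ θ) :=
            setLIntegral_mono' measurableSet_Ioi (fun x hx => hpoint y hy x hx)
        _ = ENNReal.ofReal C₀ * ∫⁻ x in Ioi (0:ℝ),
              ((Φ (x*y) ^ r * G x ^ p * ENNReal.ofReal y⁻¹) ^ (1/q) *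
                (Φ (x*y) ^ r * ENNReal.ofReal x⁻¹) ^ (1/p') * (G x ^ p) ^ θ) :=
            lintegral_const_mul' _ _ ENNReal.ofReal_ne_top
        _ ≤ ENNReal.ofReal C₀ *
              ((∫⁻ x in Ioi (0:ℝ), Φ (x*y) ^ r * G x ^ p * ENNReal.ofReal y⁻¹) ^ (1/q) *
                (∫⁻ x in Ioi (0:ℝ), Φ (x*y) ^ r * ENNReal.ofReal x⁻¹) ^ (1/p') *
                (∫⁻ x in Ioi (0:ℝ), G x ^ p) ^ θ) := by
            apply mul_le_mul_right
            exact holder3 _ _ _ meas₁ meas₂ meas₃ (by positivity) hp'0.le hθ0 hsum1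
        _ = ENNReal.ofReal C₀ *
              ((∫⁻ x in Ioi (0:ℝ), Φ (x*y) ^ r * G x ^ p * ENNReal.ofReal y⁻¹) ^ (1/q) *
                M ^ (1/p') * R ^ θ) := by
            rw [hker y hy0, ← hRdef]
    calc (ENNReal.ofReal (ppw (-β₂) (-β₁) y) *
          ENNReal.ofReal ‖∫ x in Ioi (0:ℝ), (↑(x ^ δ) : ℂ) * f x * K x y‖) ^ q
        ≤ (ENNReal.ofReal C₀ *
            ((∫⁻ x in Ioi (0:ℝ), Φ (x*y) ^ r * G x ^ p * ENNReal.ofReal y⁻¹) ^ (1/q) *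
              M ^ (1/p') * R ^ θ)) ^ q := ENNReal.rpow_le_rpow le2 hq0.le
      _ = ENNReal.ofReal C₀ ^ q * M ^ (1/p' * q) * R ^ (θ * q) *
          ∫⁻ x in Ioi (0:ℝ), Φ (x*y) ^ r * G x ^ p * ENNReal.ofReal y⁻¹ := by
          rw [ENNReal.mul_rpow_of_nonneg _ _ hq0.le, ENNReal.mul_rpow_of_nonneg _ _ hq0.le,
            ENNReal.mul_rpow_of_nonneg _ _ hq0.le, ← ENNReal.rpow_mul, ← ENNReal.rpow_mul,
            ← ENNReal.rpow_mul, one_div_mul_cancel hq0.ne', ENNReal.rpow_one]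
          ring
  -- integrate in y, swap, conclude
  have measF : AEMeasurable (Function.uncurry fun y x => Φ (x*y) ^ r * G x ^ p *
      ENNReal.ofReal y⁻¹) ((volume.restrict (Ioi (0:ℝ))).prod (volume.restrict (Ioi (0:ℝ)))) := by
    apply Measurable.aemeasurable
    apply Measurable.mul
    apply Measurable.mul
    · exact (hΦm.comp (measurable_snd.mul measurable_fst)).pow_const r
    · exact (hGm.comp measurable_snd).pow_const p
    · exact measurable_fst.inv.ennreal_ofReal
  have hswap : ∫⁻ y in Ioi (0:ℝ), ∫⁻ x in Ioi (0:ℝ), Φ (x*y) ^ r * G x ^ p * ENNReal.ofReal y⁻¹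
      = M * R := by
    rw [lintegral_lintegral_swap measF]
    have inner : ∀ x ∈ Ioi (0:ℝ),
        ∫⁻ y in Ioi (0:ℝ), Φ (x*y) ^ r * G x ^ p * ENNReal.ofReal y⁻¹ = G x ^ p * M := by
      intro x hx
      have hx0 : 0 < x := mem_Ioi.1 hx
      have e : ∫⁻ y in Ioi (0:ℝ), Φ (x*y) ^ r * G x ^ p * ENNReal.ofReal y⁻¹
          = ∫⁻ y in Ioi (0:ℝ), (Φ (y*x) ^ r * ENNReal.ofReal y⁻¹) * G x ^ p := by
        apply setLIntegral_congr_fun measurableSet_Ioi ?_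
        intro y _
        beta_reduce
        rw [mul_comm x y]
        ring
      rw [e, lintegral_mul_const' _ _ (ENNReal.rpow_ne_top_of_nonneg hp0.le
        ENNReal.ofReal_ne_top), hker x hx0, mul_comm]
    calc ∫⁻ x in Ioi (0:ℝ), ∫⁻ y in Ioi (0:ℝ), Φ (x*y) ^ r * G x ^ p * ENNReal.ofReal y⁻¹
        = ∫⁻ x in Ioi (0:ℝ), G x ^ p * M :=
          setLIntegral_congr_fun measurableSet_Ioi inner
      _ = R * M := lintegral_mul_const' _ _ hMne
      _ = M * R := mul_comm _ _
  have hconst_ne : ENNReal.ofReal C₀ ^ q * M ^ (1/p' * q) * R ^ (θ * q) ≠ ⊤ :=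
    ENNReal.mul_ne_top (ENNReal.mul_ne_top
      (ENNReal.rpow_ne_top_of_nonneg hq0.le ENNReal.ofReal_ne_top)
      (ENNReal.rpow_ne_top_of_nonneg (by positivity) hMne))
      (ENNReal.rpow_ne_top_of_nonneg (by positivity) hRtop)
  have mainL : (∫⁻ y in Ioi (0:ℝ),
        ENNReal.ofReal ((ppw (-β₂) (-β₁) y) ^ q *
          ‖∫ x in Ioi (0:ℝ), (↑(x ^ δ) : ℂ) * f x * K x y‖ ^ q))
      ≤ ENNReal.ofReal C₀ ^ q * M ^ (1/p' * q) * R ^ (θ * q) * (M * R) := by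
    calc (∫⁻ y in Ioi (0:ℝ),
          ENNReal.ofReal ((ppw (-β₂) (-β₁) y) ^ q *
            ‖∫ x in Ioi (0:ℝ), (↑(x ^ δ) : ℂ) * f x * K x y‖ ^ q))
        ≤ ∫⁻ y in Ioi (0:ℝ), ENNReal.ofReal C₀ ^ q * M ^ (1/p' * q) * R ^ (θ * q) *
            ∫⁻ x in Ioi (0:ℝ), Φ (x*y) ^ r * G x ^ p * ENNReal.ofReal y⁻¹ :=
          setLIntegral_mono' measurableSet_Ioi main
      _ = ENNReal.ofReal C₀ ^ q * M ^ (1/p' * q) * R ^ (θ * q) *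
            ∫⁻ y in Ioi (0:ℝ), ∫⁻ x in Ioi (0:ℝ), Φ (x*y) ^ r * G x ^ p *
              ENNReal.ofReal y⁻¹ := lintegral_const_mul' _ _ hconst_ne
      _ = ENNReal.ofReal C₀ ^ q * M ^ (1/p' * q) * R ^ (θ * q) * (M * R) := by rw [hswap]
  -- take q-th root and finish
  have final : (ENNReal.ofReal C₀ ^ q * M ^ (1/p' * q) * R ^ (θ * q) * (M * R)) ^ (1/q)
      = ENNReal.ofReal C₀ * M ^ (1/p' + 1/q) * R ^ (1/p) := by
    have e1 : q * (1/q) = 1 := mul_one_div_cancel hq0.ne'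
    have e2 : 1/p' * q * (1/q) = 1/p' := by rw [mul_assoc, e1, mul_one]
    have e3 : θ * q * (1/q) = θ := by rw [mul_assoc, e1, mul_one]
    rw [ENNReal.mul_rpow_of_nonneg _ _ (by positivity), ENNReal.mul_rpow_of_nonneg _ _
      (by positivity), ENNReal.mul_rpow_of_nonneg _ _ (by positivity),
      ENNReal.mul_rpow_of_nonneg _ _ (by positivity), ← ENNReal.rpow_mul, ← ENNReal.rpow_mul,
      ← ENNReal.rpow_mul, e1, e2, e3, ENNReal.rpow_one]
    calc ENNReal.ofReal C₀ * M ^ (1/p') * R ^ θ * (M ^ (1/q) * R ^ (1/q))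
        = ENNReal.ofReal C₀ * (M ^ (1/p') * M ^ (1/q)) * (R ^ θ * R ^ (1/q)) := by ring
      _ = ENNReal.ofReal C₀ * M ^ (1/p' + 1/q) * R ^ (θ + 1/q) := by
          rw [← ENNReal.rpow_add_of_nonneg _ _ hp'0.le (by positivity),
            ← ENNReal.rpow_add_of_nonneg _ _ hθ0 (by positivity)]
      _ = ENNReal.ofReal C₀ * M ^ (1/p' + 1/q) * R ^ (1/p) := by
          rw [show θ + 1/q = 1/p by rw [hθdef]; ring]
  calc (∫⁻ y in Ioi (0:ℝ),
        ENNReal.ofReal ((ppw (-β₂) (-β₁) y) ^ q *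
          ‖∫ x in Ioi (0:ℝ), (↑(x ^ δ) : ℂ) * f x * K x y‖ ^ q)) ^ (1/q)
      ≤ (ENNReal.ofReal C₀ ^ q * M ^ (1/p' * q) * R ^ (θ * q) * (M * R)) ^ (1/q) :=
        ENNReal.rpow_le_rpow mainL (by positivity)
    _ = ENNReal.ofReal C₀ * M ^ (1/p' + 1/q) * R ^ (1/p) := final
    _ ≤ ENNReal.ofReal (C₀ * M.toReal ^ (1/q + 1/p') + 1) * R ^ (1/p) := by
        apply mul_le_mul_left
        have hMeq : M ^ (1/p' + 1/q) = ENNReal.ofReal (M.toReal ^ (1/p' + 1/q)) := by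
          conv_lhs => rw [← ENNReal.ofReal_toReal hMne]
          rw [ENNReal.ofReal_rpow_of_nonneg ENNReal.toReal_nonneg (by positivity)]
        rw [hMeq, ← ENNReal.ofReal_mul hC₀.le]
        apply ENNReal.ofReal_le_ofReal
        rw [show 1/q + 1/p' = 1/p' + 1/q by ring]
        linarith
end

section
/- Let f,g:(0,∞)→[0,∞) be locally integrable, let α,β>0, and let φ,ψ:(0,∞)→(0,∞) be nonincreasing functions such that φ(s)^α ≍ ψ(s)^β for s>0 (i.e., there are 0<c₁≤c₂ with c₁ψ(s)^β ≤ φ(s)^α ≤ c₂ψ(s)^β). Then the two conditions sup_{t>0} (∫₀^t g(s) ds)^β · (∫_t^∞ φ(s)f(s) ds)^α < ∞ and sup_{t>0} (∫₀^t f(s) ds)^α · (∫_t^∞ ψ(s)g(s) ds)^β < ∞ hold simultaneously if and only if sup_{t>0} (∫₀^t g(s) ds + ψ(t)^{-1}∫_t^∞ ψ(s)g(s) ds)^β · (φ(t)∫₀^t f(s) ds + ∫_t^∞ φ(s)f(s) ds)^α < ∞. -/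
open MeasureTheory Set
open scoped ENNReal

namespace Stmt8Aux

/-- singleton null transfer -/
lemma meas_Ico_eq_Ioo {ν : Measure ℝ} (hν : ν ≪ volume) (a b : ℝ) :
    ν (Ico a b) = ν (Ioo a b) := by
  rcases le_or_gt b a with h | h
  · rw [Ico_eq_empty (by exact fun hab => absurd h (not_le.2 hab)),
      Ioo_eq_empty (by exact fun hab => absurd h (not_le.2 hab))]
  · have h1 : Ico a b = {a} ∪ Ioo a b := by
      rw [← Ioo_insert_left h, insert_eq]
    have hsing : ν {a} = 0 := hν (measure_singleton a)
    apply le_antisymm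
    · calc ν (Ico a b) ≤ ν {a} + ν (Ioo a b) := h1 ▸ measure_union_le _ _
        _ = ν (Ioo a b) := by rw [hsing, zero_add]
    · exact measure_mono Ioo_subset_Ico_self

lemma meas_Ioc_eq_Ioo {ν : Measure ℝ} (hν : ν ≪ volume) (a b : ℝ) :
    ν (Ioc a b) = ν (Ioo a b) := by
  rcases le_or_gt b a with h | h
  · rw [Ioc_eq_empty (not_lt.2 h), Ioo_eq_empty (not_lt.2 h)]
  · have h1 : Ioc a b = Ioo a b ∪ {b} := by
      rw [← Ioo_insert_right h, insert_eq, union_comm]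
    have hsing : ν {b} = 0 := hν (measure_singleton b)
    apply le_antisymm
    · calc ν (Ioc a b) ≤ ν (Ioo a b) + ν {b} := h1 ▸ measure_union_le _ _
        _ = ν (Ioo a b) := by rw [hsing, add_zero]
    · exact measure_mono Ioo_subset_Ioc_self

lemma split_Ioo {ν : Measure ℝ} (hν : ν ≪ volume) {s t : ℝ} (h0s : 0 < s) (hst : s ≤ t) :
    ν (Ioo 0 t) = ν (Ioo 0 s) + ν (Ioo s t) := by
  rw [← Ioo_union_Ico_eq_Ioo h0s hst, measure_union ?_ measurableSet_Ico,
    meas_Ico_eq_Ioo hν]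
  rw [Set.disjoint_left]
  rintro x ⟨-, hx⟩ ⟨hx', -⟩
  exact absurd hx' (not_le.2 hx)

lemma split_Ioi {ν : Measure ℝ} (hν : ν ≪ volume) {s t : ℝ} (hst : s ≤ t) :
    ν (Ioi s) = ν (Ioo s t) + ν (Ioi t) := by
  rw [← Ioc_union_Ioi_eq_Ioi hst, measure_union ?_ measurableSet_Ioi,
    meas_Ioc_eq_Ioo hν]
  rw [Set.disjoint_left]
  rintro x ⟨-, hx⟩ hx'
  exact absurd (mem_Ioi.1 hx') (not_lt.2 hx)

lemma measure_iInf_zero (ν : Measure ℝ) {A : ℕ → Set ℝ}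
    (hm : ∀ n, MeasurableSet (A n)) (hanti : Antitone A)
    (he : ⋂ n, A n = ∅) (hfin : ν (A 0) ≠ ⊤) : ⨅ n, ν (A n) = 0 := by
  rw [← Directed.measure_iInter (fun n => (hm n).nullMeasurableSet)
    hanti.directed_ge ⟨0, hfin⟩, he, measure_empty]

lemma exists_div_lt {c d : ℝ} (hd : 0 < d) : ∃ n : ℕ, c / (n + 1) < d := by
  obtain ⟨n, hn⟩ := exists_nat_gt (c / d)
  refine ⟨n, ?_⟩
  rw [div_lt_iff₀ (by positivity)]
  rcases le_or_gt c 0 with hc | hc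
  · nlinarith
  · have h1 : c / d < (n : ℝ) + 1 := hn.trans (by linarith)
    calc c = (c / d) * d := by field_simp
      _ < ((n : ℝ) + 1) * d := by exact mul_lt_mul_of_pos_right h1 hd
      _ = d * ((n : ℝ) + 1) := mul_comm _ _

/-- `(a+b)^r ≤ 2^r (a^r + b^r)` in `ℝ≥0∞`. -/
lemma add_rpow_le (a b : ℝ≥0∞) {r : ℝ} (hr : 0 ≤ r) :
    (a + b) ^ r ≤ (2:ℝ≥0∞) ^ r * (a ^ r + b ^ r) := by
  have h1 : a + b ≤ 2 * max a b := by
    rw [two_mul]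
    exact add_le_add (le_max_left _ _) (le_max_right _ _)
  calc (a + b) ^ r ≤ (2 * max a b) ^ r := ENNReal.rpow_le_rpow h1 hr
    _ = (2:ℝ≥0∞) ^ r * (max a b) ^ r := ENNReal.mul_rpow_of_nonneg _ _ hr
    _ ≤ (2:ℝ≥0∞) ^ r * (a ^ r + b ^ r) := by
        gcongr
        rcases max_cases a b with ⟨h, -⟩ | ⟨h, -⟩ <;> rw [h]
        · exact le_add_right le_rfl
        · exact le_add_left le_rfl

lemma le_of_le_add_iInf {x y : ℝ≥0∞} {c : ℕ → ℝ≥0∞} (hy : y ≠ ⊤)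
    (h : ∀ n, x ≤ y + c n) (hc : ⨅ n, c n = 0) : x ≤ y := by
  refine ENNReal.le_of_forall_pos_le_add fun ε hε _ => ?_
  obtain ⟨n, hn⟩ : ∃ n, c n < (ε : ℝ≥0∞) := by
    refine iInf_lt_iff.1 ?_
    rw [hc]
    exact ENNReal.coe_pos.2 hε
  exact (h n).trans (add_le_add_right hn.le y)

lemma one_le_two_rpow {r : ℝ} (hr : 0 ≤ r) : (1:ℝ≥0∞) ≤ (2:ℝ≥0∞) ^ r := by
  calc (1:ℝ≥0∞) = (2:ℝ≥0∞) ^ (0:ℝ) := (ENNReal.rpow_zero).symm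
    _ ≤ (2:ℝ≥0∞) ^ r := ENNReal.rpow_le_rpow_of_exponent_le one_le_two hr

end Stmt8Aux

namespace Stmt8Aux

lemma le_of_le_add_iInf' {x y C : ℝ≥0∞} {c : ℕ → ℝ≥0∞} (hy : y ≠ ⊤) (hC : C ≠ ⊤)
    (h : ∀ n, x ≤ y + C * c n) (hc : ⨅ n, c n = 0) : x ≤ y := by
  refine ENNReal.le_of_forall_pos_le_add fun ε hε _ => ?_
  by_cases hC0 : C = 0
  · exact (h 0).trans (by rw [hC0, zero_mul, add_zero]; exact le_add_right le_rfl)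
  have hδ : (0:ℝ≥0∞) < (ε : ℝ≥0∞) / C := ENNReal.div_pos (ENNReal.coe_pos.2 hε).ne' hC
  obtain ⟨n, hn⟩ : ∃ n, c n < (ε : ℝ≥0∞) / C := iInf_lt_iff.1 (hc ▸ hδ)
  have : C * c n ≤ (ε : ℝ≥0∞) := le_trans (mul_le_mul_right hn.le C) ENNReal.mul_div_le
  exact (h n).trans (add_le_add_right this y)

end Stmt8Aux

namespace Stmt8Aux

lemma meas_Ioi_eq_iSup (ν : Measure ℝ) (t : ℝ) :
    ν (Ioi t) = ⨆ n : ℕ, ν (Ioo t (t + (n+1))) := by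
  have hdir : Directed (· ⊆ ·) (fun n : ℕ => Ioo t (t + (n+1))) := by
    refine Monotone.directed_le fun n m hnm => ?_
    refine Ioo_subset_Ioo_right (by gcongr <;> exact_mod_cast hnm)
  rw [← hdir.measure_iUnion]
  congr 1
  ext x
  simp only [mem_iUnion, mem_Ioo, mem_Ioi]
  constructor
  · intro hx
    obtain ⟨n, hn⟩ := exists_nat_gt (x - t)
    exact ⟨n, hx, by linarith⟩
  · rintro ⟨n, hn, -⟩; exact hn

lemma dens_mul_le (h k : ℝ → ℝ) {A : Set ℝ} (hA : MeasurableSet A) {c : ℝ} (hc : 0 ≤ c)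
    (hle : ∀ x ∈ A, c * h x ≤ k x) :
    ENNReal.ofReal c * (volume.withDensity fun x => ENNReal.ofReal (h x)) A ≤
      (volume.withDensity fun x => ENNReal.ofReal (k x)) A := by
  rw [withDensity_apply _ hA, withDensity_apply _ hA,
    ← lintegral_const_mul' _ _ ENNReal.ofReal_ne_top]
  refine setLIntegral_mono' hA fun x hx => ?_
  rw [← ENNReal.ofReal_mul hc]
  exact ENNReal.ofReal_le_ofReal (hle x hx)

lemma dens_le_mul (h k : ℝ → ℝ) {A : Set ℝ} (hA : MeasurableSet A) {c : ℝ} (hc : 0 ≤ c)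
    (hle : ∀ x ∈ A, k x ≤ c * h x) :
    (volume.withDensity fun x => ENNReal.ofReal (k x)) A ≤
      ENNReal.ofReal c * (volume.withDensity fun x => ENNReal.ofReal (h x)) A := by
  rw [withDensity_apply _ hA, withDensity_apply _ hA,
    ← lintegral_const_mul' _ _ ENNReal.ofReal_ne_top]
  refine setLIntegral_mono' hA fun x hx => ?_
  rw [← ENNReal.ofReal_mul hc]
  exact ENNReal.ofReal_le_ofReal (hle x hx)

end Stmt8Aux
namespace Stmt8Aux

lemma ct1 (νf νg νF νG : Measure ℝ)
    (haf : νf ≪ (volume : Measure ℝ)) (hag : νg ≪ (volume : Measure ℝ))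
    (haF : νF ≪ (volume : Measure ℝ))
    (φ ψ : ℝ → ℝ) (α β c₂ : ℝ) (hα : 0 < α) (hβ : 0 < β) (hc₂ : 0 < c₂)
    (hφ : AntitoneOn φ (Ioi 0))
    (hφ0 : ∀ x ∈ Ioi (0:ℝ), 0 < φ x) (hψ0 : ∀ x ∈ Ioi (0:ℝ), 0 < ψ x)
    (hfloc : ∀ r : ℝ, νf (Ioo 0 r) < ⊤)
    (hΦfin : ∀ r > (0:ℝ), νF (Ioi r) < ⊤)
    (cφ_low : ∀ s u : ℝ, 0 < s → s < u → ENNReal.ofReal (φ u) * νf (Ioo s u) ≤ νF (Ioo s u))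
    (cφ_up : ∀ s u : ℝ, 0 < s → νF (Ioo s u) ≤ ENNReal.ofReal (φ s) * νf (Ioo s u))
    (cφ0 : ∀ u : ℝ, 0 < u → ENNReal.ofReal (φ u) * νf (Ioo 0 u) ≤ νF (Ioo 0 u))
    (cψ_low : ∀ s u : ℝ, 0 < s → s < u → ENNReal.ofReal (ψ u) * νg (Ioo s u) ≤ νG (Ioo s u))
    (hcomp2 : ∀ x ∈ Ioi (0:ℝ), φ x ^ α ≤ c₂ * ψ x ^ β)
    (M₁ M₂ : ℝ≥0∞)
    (h1 : ∀ s > (0:ℝ), νg (Ioo 0 s) ^ β * νF (Ioi s) ^ α ≤ M₁)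
    (h2 : ∀ s > (0:ℝ), νf (Ioo 0 s) ^ α * νG (Ioi s) ^ β ≤ M₂)
    {t : ℝ} (ht : 0 < t) :
    νg (Ioo 0 t) ^ β * (ENNReal.ofReal (φ t) * νf (Ioo 0 t)) ^ α ≤
      (2:ℝ≥0∞) ^ (α + β) * (M₁ + ENNReal.ofReal c₂ * M₂) := by
  have h2top : (2:ℝ≥0∞) ≠ ⊤ := ENNReal.ofNat_ne_top
  have hab : (0:ℝ) ≤ α + β := by positivity
  have hM₁K : M₁ ≤ (2:ℝ≥0∞) ^ (α+β) * (M₁ + ENNReal.ofReal c₂ * M₂) := by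
    calc M₁ ≤ M₁ + ENNReal.ofReal c₂ * M₂ := le_self_add
      _ = 1 * (M₁ + ENNReal.ofReal c₂ * M₂) := (one_mul _).symm
      _ ≤ _ := mul_le_mul_left (one_le_two_rpow hab) _
  -- degenerate f
  by_cases hF0 : νF (Ioi 0) = 0
  · have hft : ENNReal.ofReal (φ t) * νf (Ioo 0 t) = 0 := by
      refine le_antisymm ?_ (zero_le)
      calc ENNReal.ofReal (φ t) * νf (Ioo 0 t) ≤ νF (Ioo 0 t) := cφ0 t ht
        _ ≤ νF (Ioi 0) := measure_mono fun x hx => hx.1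
        _ = 0 := hF0
    rw [hft, ENNReal.zero_rpow_of_pos hα, mul_zero]
    exact zero_le
  by_cases hcase : ENNReal.ofReal (φ t) * νf (Ioo 0 t) ≤ νF (Ioi t)
  · calc νg (Ioo 0 t) ^ β * (ENNReal.ofReal (φ t) * νf (Ioo 0 t)) ^ α
        ≤ νg (Ioo 0 t) ^ β * νF (Ioi t) ^ α :=
          mul_le_mul_right (ENNReal.rpow_le_rpow hcase hα.le) _
      _ ≤ M₁ := h1 t ht
      _ ≤ _ := hM₁K
  push_neg at hcase
  -- the set S and its sup
  set S : Set ℝ :=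
    {s | 0 < s ∧ s ≤ t ∧ ENNReal.ofReal (φ t) * νf (Ioo 0 s) ≤ νF (Ioi s)} with hS
  have hbddS : BddAbove S := ⟨t, fun x hx => hx.2.1⟩
  -- S is nonempty
  set w : ℕ → ℝ := fun n => min t 1 / (n+1) with hw
  have hwpos : ∀ n, 0 < w n := fun n => by
    have : (0:ℝ) < min t 1 := lt_min ht one_pos
    positivity
  have hwle : ∀ n, w n ≤ t := fun n => by
    have h1' : w n ≤ min t 1 := by
      rw [hw]
      exact div_le_self (lt_min ht one_pos).le (by have h0 : (0:ℝ) ≤ (n:ℝ) := Nat.cast_nonneg n; linarith)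
    exact h1'.trans (min_le_left _ _)
  have hwanti : Antitone w := by
    intro n m hnm
    have : (0:ℝ) < min t 1 := lt_min ht one_pos
    apply div_le_div_of_nonneg_left this.le (by positivity)
    push_cast; exact by exact_mod_cast (by gcongr : (n:ℝ) + 1 ≤ (m:ℝ) + 1)
  have hwlt : ∀ x : ℝ, 0 < x → ∃ n, w n < x := fun x hx => exists_div_lt hx
  have hsupF : νF (Ioi 0) = ⨆ n, νF (Ioi (w n)) := by
    have hdir : Directed (· ⊆ ·) (fun n => Ioi (w n)) := by
      refine Monotone.directed_le fun n m hnm => ?_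
      exact Ioi_subset_Ioi (hwanti hnm)
    rw [← hdir.measure_iUnion]
    congr 1
    ext x
    simp only [mem_iUnion, mem_Ioi]
    constructor
    · intro hx; exact hwlt x hx
    · rintro ⟨n, hn⟩; exact (hwpos n).trans hn
  obtain ⟨n₀, hn₀⟩ : ∃ n, νF (Ioi (w n)) ≠ 0 := by
    by_contra hcon
    push_neg at hcon
    apply hF0
    rw [hsupF]
    simp [hcon]
  have hΦs₁ : 0 < νF (Ioi (w n₀)) := pos_iff_ne_zero.2 hn₀
  have hδpos : (0:ℝ≥0∞) < νF (Ioi (w n₀)) / ENNReal.ofReal (φ t) :=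
    ENNReal.div_pos hΦs₁.ne' ENNReal.ofReal_ne_top
  have hFinf : ⨅ n, νf (Ioo 0 (w n)) = 0 := by
    refine measure_iInf_zero νf (fun n => measurableSet_Ioo) ?_ ?_ (hfloc _).ne
    · intro n m hnm
      exact Ioo_subset_Ioo_right (hwanti hnm)
    · ext x
      simp only [mem_iInter, mem_Ioo, mem_empty_iff_false, iff_false, not_forall]
      rcases lt_or_ge 0 x with hx | hx
      · obtain ⟨n, hn⟩ := hwlt x hx
        exact ⟨n, fun hc => absurd hc.2 (not_lt.2 hn.le)⟩
      · exact ⟨0, fun hc => absurd hc.1 (not_lt.2 hx)⟩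
  obtain ⟨n₁, hn₁⟩ : ∃ n, νf (Ioo 0 (w n)) < νF (Ioi (w n₀)) / ENNReal.ofReal (φ t) :=
    iInf_lt_iff.1 (hFinf ▸ hδpos)
  have hs₂S : min (w n₁) (w n₀) ∈ S := by
    refine ⟨lt_min (hwpos n₁) (hwpos n₀), (min_le_right _ _).trans (hwle n₀), ?_⟩
    calc ENNReal.ofReal (φ t) * νf (Ioo 0 (min (w n₁) (w n₀)))
        ≤ ENNReal.ofReal (φ t) * νf (Ioo 0 (w n₁)) := by
          gcongr
          exact min_le_left _ _
      _ ≤ ENNReal.ofReal (φ t) * (νF (Ioi (w n₀)) / ENNReal.ofReal (φ t)) :=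
          mul_le_mul_right hn₁.le _
      _ ≤ νF (Ioi (w n₀)) := ENNReal.mul_div_le
      _ ≤ νF (Ioi (min (w n₁) (w n₀))) := measure_mono (Ioi_subset_Ioi (min_le_right _ _))
  have hSne : S.Nonempty := ⟨_, hs₂S⟩
  set s₀ : ℝ := sSup S with hs₀
  have hs₀pos : 0 < s₀ :=
    lt_of_lt_of_le (lt_min (hwpos n₁) (hwpos n₀)) (le_csSup hbddS hs₂S)
  have hs₀t : s₀ ≤ t := csSup_le hSne fun x hx => hx.2.1
  have hdown : ∀ s ∈ S, ∀ s', 0 < s' → s' ≤ s → s' ∈ S := by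
    rintro s ⟨hs0, hst', hsle⟩ s' h0 hle
    refine ⟨h0, hle.trans hst', ?_⟩
    calc ENNReal.ofReal (φ t) * νf (Ioo 0 s')
        ≤ ENNReal.ofReal (φ t) * νf (Ioo 0 s) := by
          gcongr
      _ ≤ νF (Ioi s) := hsle
      _ ≤ νF (Ioi s') := measure_mono (Ioi_subset_Ioi hle)
  have hmemS : ∀ s, 0 < s → s < s₀ → s ∈ S := by
    intro s h0 hlt
    obtain ⟨x, hxS, hx⟩ := exists_lt_of_lt_csSup hSne hlt
    exact hdown x hxS s h0 hx.le
  have hnotS : ∀ s, s₀ < s → s ≤ t → νF (Ioi s) < ENNReal.ofReal (φ t) * νf (Ioo 0 s) := by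
    intro s hs hst'
    by_contra hcon
    push_neg at hcon
    have : s ∈ S := ⟨hs₀pos.trans hs, hst', hcon⟩
    exact absurd (le_csSup hbddS this) (not_le.2 hs)
  -- claim (A)
  have hA : ENNReal.ofReal (φ t) * νf (Ioo 0 s₀) ≤ νF (Ioi s₀) := by
    set u : ℕ → ℝ := fun n => s₀ - (s₀/2) / (n+1) with hu
    have hudle : ∀ n : ℕ, (s₀/2) / ((n:ℝ)+1) ≤ s₀/2 := fun n =>
      div_le_self (by linarith) (by have h0 : (0:ℝ) ≤ (n:ℝ) := Nat.cast_nonneg n; linarith)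
    have hulb : ∀ n, s₀/2 ≤ u n := fun n => by
      have := hudle n; rw [hu]; simp only; linarith
    have hupos : ∀ n, 0 < u n := fun n => lt_of_lt_of_le (by linarith) (hulb n)
    have hult : ∀ n, u n < s₀ := fun n => by
      have : (0:ℝ) < (s₀/2) / ((n:ℝ)+1) := by positivity
      rw [hu]; simp only; linarith
    have humem : ∀ n, u n ∈ S := fun n => hmemS (u n) (hupos n) (hult n)
    have humono : Monotone u := by
      intro n m hnm
      rw [hu]
      simp only
      have : (s₀/2) / ((m:ℝ)+1) ≤ (s₀/2) / ((n:ℝ)+1) := by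
        apply div_le_div_of_nonneg_left (by linarith) (by positivity)
        exact_mod_cast (by gcongr : (n:ℝ) + 1 ≤ (m:ℝ) + 1)
      linarith
    have hεinf : ⨅ n, νf (Ioo (u n) s₀) = 0 := by
      refine measure_iInf_zero νf (fun n => measurableSet_Ioo) ?_ ?_
        (((measure_mono (Ioo_subset_Ioo_left (hupos 0).le)).trans_lt (hfloc s₀)).ne)
      · intro n m hnm
        exact Ioo_subset_Ioo_left (humono hnm)
      · ext x
        simp only [mem_iInter, mem_Ioo, mem_empty_iff_false, iff_false, not_forall]
        rcases lt_or_ge x s₀ with hx | hx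
        · obtain ⟨n, hn⟩ := exists_div_lt (c := s₀/2) (sub_pos.2 hx)
          refine ⟨n, fun hc => ?_⟩
          have : u n > x := by rw [hu]; simp only; linarith
          exact absurd hc.1 (not_lt.2 this.le)
        · exact ⟨0, fun hc => absurd hc.2 (not_lt.2 hx)⟩
    refine le_of_le_add_iInf' (hΦfin s₀ hs₀pos).ne
      (show ENNReal.ofReal (φ (s₀/2)) + ENNReal.ofReal (φ t) ≠ ⊤ by
        exact (ENNReal.add_lt_top.2 ⟨ENNReal.ofReal_lt_top, ENNReal.ofReal_lt_top⟩).ne)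
      (fun n => ?_) hεinf
    have hsplit : νf (Ioo 0 s₀) = νf (Ioo 0 (u n)) + νf (Ioo (u n) s₀) :=
      split_Ioo haf (hupos n) (hult n).le
    have hsplitF : νF (Ioi (u n)) = νF (Ioo (u n) s₀) + νF (Ioi s₀) :=
      split_Ioi haF (hult n).le
    have hφu : φ (u n) ≤ φ (s₀/2) :=
      hφ (mem_Ioi.2 (by linarith)) (mem_Ioi.2 (hupos n)) (hulb n)
    calc ENNReal.ofReal (φ t) * νf (Ioo 0 s₀)
        = ENNReal.ofReal (φ t) * νf (Ioo 0 (u n)) +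
            ENNReal.ofReal (φ t) * νf (Ioo (u n) s₀) := by rw [hsplit, mul_add]
      _ ≤ νF (Ioi (u n)) + ENNReal.ofReal (φ t) * νf (Ioo (u n) s₀) :=
          add_le_add_left (humem n).2.2 _
      _ = νF (Ioo (u n) s₀) + νF (Ioi s₀) + ENNReal.ofReal (φ t) * νf (Ioo (u n) s₀) := by
          rw [hsplitF]
      _ ≤ ENNReal.ofReal (φ (u n)) * νf (Ioo (u n) s₀) + νF (Ioi s₀) +
            ENNReal.ofReal (φ t) * νf (Ioo (u n) s₀) :=
          add_le_add_left (add_le_add_left (cφ_up (u n) s₀ (hupos n)) _) _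
      _ ≤ ENNReal.ofReal (φ (s₀/2)) * νf (Ioo (u n) s₀) + νF (Ioi s₀) +
            ENNReal.ofReal (φ t) * νf (Ioo (u n) s₀) := by
          gcongr
      _ = νF (Ioi s₀) + (ENNReal.ofReal (φ (s₀/2)) + ENNReal.ofReal (φ t)) *
            νf (Ioo (u n) s₀) := by ring
  -- s₀ < t
  have hs₀lt : s₀ < t := by
    rcases lt_or_eq_of_le hs₀t with h | h
    · exact h
    · exact absurd (h ▸ hA) (not_le.2 hcase)
  -- claim (B)
  have hB : νF (Ioi s₀) ≤ ENNReal.ofReal (φ t) * νf (Ioo 0 s₀) := by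
    set v : ℕ → ℝ := fun n => s₀ + (t - s₀) / (n+1) with hv
    have hvgt : ∀ n, s₀ < v n := fun n => by
      have : (0:ℝ) < (t - s₀) / ((n:ℝ)+1) := by
        have := sub_pos.2 hs₀lt; positivity
      rw [hv]; simp only; linarith
    have hvle : ∀ n, v n ≤ t := fun n => by
      have : (t - s₀) / ((n:ℝ)+1) ≤ t - s₀ :=
        div_le_self (sub_pos.2 hs₀lt).le (by have h0 : (0:ℝ) ≤ (n:ℝ) := Nat.cast_nonneg n; linarith)
      rw [hv]; simp only; linarith
    have hvanti : Antitone v := by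
      intro n m hnm
      rw [hv]; simp only
      have : (t - s₀) / ((m:ℝ)+1) ≤ (t - s₀) / ((n:ℝ)+1) := by
        apply div_le_div_of_nonneg_left (sub_pos.2 hs₀lt).le (by positivity)
        exact_mod_cast (by gcongr : (n:ℝ) + 1 ≤ (m:ℝ) + 1)
      linarith
    have hεinf : ⨅ n, νf (Ioo s₀ (v n)) = 0 := by
      refine measure_iInf_zero νf (fun n => measurableSet_Ioo) ?_ ?_
        (((measure_mono (Ioo_subset_Ioo_left hs₀pos.le)).trans_lt (hfloc (v 0))).ne)
      · intro n m hnm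
        exact Ioo_subset_Ioo_right (hvanti hnm)
      · ext x
        simp only [mem_iInter, mem_Ioo, mem_empty_iff_false, iff_false, not_forall]
        rcases lt_or_ge s₀ x with hx | hx
        · obtain ⟨n, hn⟩ := exists_div_lt (c := t - s₀) (sub_pos.2 hx)
          refine ⟨n, fun hc => ?_⟩
          have : v n < x := by rw [hv]; simp only; linarith
          exact absurd hc.2 (not_lt.2 this.le)
        · exact ⟨0, fun hc => absurd hc.1 (not_lt.2 hx)⟩
    refine le_of_le_add_iInf'
      (show ENNReal.ofReal (φ t) * νf (Ioo 0 s₀) ≠ ⊤ from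
        (ENNReal.mul_lt_top ENNReal.ofReal_lt_top (hfloc s₀)).ne)
      (show ENNReal.ofReal (φ s₀) + ENNReal.ofReal (φ t) ≠ ⊤ from
        (ENNReal.add_lt_top.2 ⟨ENNReal.ofReal_lt_top, ENNReal.ofReal_lt_top⟩).ne)
      (fun n => ?_) hεinf
    have hvnot : νF (Ioi (v n)) ≤ ENNReal.ofReal (φ t) * νf (Ioo 0 (v n)) :=
      (hnotS (v n) (hvgt n) (hvle n)).le
    have hsplitF : νF (Ioi s₀) = νF (Ioo s₀ (v n)) + νF (Ioi (v n)) :=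
      split_Ioi haF (hvgt n).le
    have hsplitf : νf (Ioo 0 (v n)) = νf (Ioo 0 s₀) + νf (Ioo s₀ (v n)) :=
      split_Ioo haf hs₀pos (hvgt n).le
    calc νF (Ioi s₀) = νF (Ioo s₀ (v n)) + νF (Ioi (v n)) := hsplitF
      _ ≤ ENNReal.ofReal (φ s₀) * νf (Ioo s₀ (v n)) +
            ENNReal.ofReal (φ t) * νf (Ioo 0 (v n)) :=
          add_le_add (cφ_up s₀ (v n) hs₀pos) hvnot
      _ = ENNReal.ofReal (φ s₀) * νf (Ioo s₀ (v n)) +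
            (ENNReal.ofReal (φ t) * νf (Ioo 0 s₀) +
              ENNReal.ofReal (φ t) * νf (Ioo s₀ (v n))) := by rw [hsplitf, mul_add]
      _ = ENNReal.ofReal (φ t) * νf (Ioo 0 s₀) +
            (ENNReal.ofReal (φ s₀) + ENNReal.ofReal (φ t)) * νf (Ioo s₀ (v n)) := by ring
  -- final assembly
  have hψt := hψ0 t ht
  have hφt := hφ0 t ht
  have e0 : ENNReal.ofReal (ψ t) ≠ 0 := (ENNReal.ofReal_pos.2 hψt).ne'
  have eT : ENNReal.ofReal (ψ t) ≠ ⊤ := ENNReal.ofReal_ne_top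
  have hstep1 : ENNReal.ofReal (φ t) * νf (Ioo 0 t) ≤ 2 * νF (Ioi s₀) := by
    rw [split_Ioo haf hs₀pos hs₀lt.le, mul_add, two_mul]
    exact add_le_add hA ((cφ_low s₀ t hs₀pos hs₀lt).trans
      (measure_mono Ioo_subset_Ioi_self))
  have hstep2 : νg (Ioo 0 t) ≤ νg (Ioo 0 s₀) + (ENNReal.ofReal (ψ t))⁻¹ * νG (Ioi s₀) := by
    rw [split_Ioo hag hs₀pos hs₀lt.le]
    refine add_le_add_right ?_ _
    calc νg (Ioo s₀ t)
        = (ENNReal.ofReal (ψ t))⁻¹ * (ENNReal.ofReal (ψ t) * νg (Ioo s₀ t)) := by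
          rw [← mul_assoc, ENNReal.inv_mul_cancel e0 eT, one_mul]
      _ ≤ (ENNReal.ofReal (ψ t))⁻¹ * νG (Ioo s₀ t) :=
          mul_le_mul_right (cψ_low s₀ t hs₀pos hs₀lt) _
      _ ≤ (ENNReal.ofReal (ψ t))⁻¹ * νG (Ioi s₀) :=
          mul_le_mul_right (measure_mono Ioo_subset_Ioi_self) _
  have hfac : ((ENNReal.ofReal (ψ t))⁻¹) ^ β * (ENNReal.ofReal (φ t)) ^ α ≤
      ENNReal.ofReal c₂ := by
    have hr : (ENNReal.ofReal (φ t)) ^ α ≤ ENNReal.ofReal c₂ * (ENNReal.ofReal (ψ t)) ^ β := by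
      rw [ENNReal.ofReal_rpow_of_pos hφt, ENNReal.ofReal_rpow_of_pos hψt,
        ← ENNReal.ofReal_mul hc₂.le]
      exact ENNReal.ofReal_le_ofReal (hcomp2 t (mem_Ioi.2 ht))
    calc ((ENNReal.ofReal (ψ t))⁻¹) ^ β * (ENNReal.ofReal (φ t)) ^ α
        ≤ ((ENNReal.ofReal (ψ t))⁻¹) ^ β * (ENNReal.ofReal c₂ * (ENNReal.ofReal (ψ t)) ^ β) :=
          mul_le_mul_right hr _
      _ = ENNReal.ofReal c₂ * (((ENNReal.ofReal (ψ t))⁻¹ * ENNReal.ofReal (ψ t)) ^ β) := by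
          rw [ENNReal.mul_rpow_of_nonneg _ _ hβ.le]; ring
      _ = ENNReal.ofReal c₂ := by
          rw [ENNReal.inv_mul_cancel e0 eT, ENNReal.one_rpow, mul_one]
  have hterm2 : ((ENNReal.ofReal (ψ t))⁻¹ * νG (Ioi s₀)) ^ β * νF (Ioi s₀) ^ α ≤
      ENNReal.ofReal c₂ * M₂ := by
    calc ((ENNReal.ofReal (ψ t))⁻¹ * νG (Ioi s₀)) ^ β * νF (Ioi s₀) ^ α
        ≤ ((ENNReal.ofReal (ψ t))⁻¹ * νG (Ioi s₀)) ^ β *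
            (ENNReal.ofReal (φ t) * νf (Ioo 0 s₀)) ^ α :=
          mul_le_mul_right (ENNReal.rpow_le_rpow hB hα.le) _
      _ = (((ENNReal.ofReal (ψ t))⁻¹) ^ β * (ENNReal.ofReal (φ t)) ^ α) *
            (νf (Ioo 0 s₀) ^ α * νG (Ioi s₀) ^ β) := by
          rw [ENNReal.mul_rpow_of_nonneg _ _ hβ.le, ENNReal.mul_rpow_of_nonneg _ _ hα.le]
          ring
      _ ≤ ENNReal.ofReal c₂ * M₂ := mul_le_mul' hfac (h2 s₀ hs₀pos)
  calc νg (Ioo 0 t) ^ β * (ENNReal.ofReal (φ t) * νf (Ioo 0 t)) ^ α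
      ≤ (νg (Ioo 0 s₀) + (ENNReal.ofReal (ψ t))⁻¹ * νG (Ioi s₀)) ^ β *
          (2 * νF (Ioi s₀)) ^ α :=
        mul_le_mul' (ENNReal.rpow_le_rpow hstep2 hβ.le) (ENNReal.rpow_le_rpow hstep1 hα.le)
    _ ≤ ((2:ℝ≥0∞) ^ β * (νg (Ioo 0 s₀) ^ β + ((ENNReal.ofReal (ψ t))⁻¹ * νG (Ioi s₀)) ^ β)) *
          ((2:ℝ≥0∞) ^ α * νF (Ioi s₀) ^ α) := by
        rw [ENNReal.mul_rpow_of_nonneg _ _ hα.le]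
        exact mul_le_mul_left (add_rpow_le _ _ hβ.le) _
    _ = (2:ℝ≥0∞) ^ (α + β) *
          (νg (Ioo 0 s₀) ^ β * νF (Ioi s₀) ^ α +
            ((ENNReal.ofReal (ψ t))⁻¹ * νG (Ioi s₀)) ^ β * νF (Ioi s₀) ^ α) := by
        rw [ENNReal.rpow_add α β two_ne_zero h2top]
        ring
    _ ≤ (2:ℝ≥0∞) ^ (α + β) * (M₁ + ENNReal.ofReal c₂ * M₂) := by
        exact mul_le_mul_right (add_le_add (h1 s₀ hs₀pos) hterm2) _

end Stmt8Aux
namespace Stmt8Aux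

lemma ct2 (νf νg νF νG : Measure ℝ)
    (hag : νg ≪ (volume : Measure ℝ)) (haF : νF ≪ (volume : Measure ℝ))
    (haG : νG ≪ (volume : Measure ℝ))
    (φ ψ : ℝ → ℝ) (α β c₂ : ℝ) (hα : 0 < α) (hβ : 0 < β) (hc₂ : 0 < c₂)
    (hψ : AntitoneOn ψ (Ioi 0))
    (hφ0 : ∀ x ∈ Ioi (0:ℝ), 0 < φ x) (hψ0 : ∀ x ∈ Ioi (0:ℝ), 0 < ψ x)
    (hgloc : ∀ r : ℝ, νg (Ioo 0 r) < ⊤)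
    (hΨfin : ∀ r > (0:ℝ), νG (Ioi r) < ⊤)
    (cφ_up : ∀ s u : ℝ, 0 < s → νF (Ioo s u) ≤ ENNReal.ofReal (φ s) * νf (Ioo s u))
    (cψ_up : ∀ s u : ℝ, 0 < s → νG (Ioo s u) ≤ ENNReal.ofReal (ψ s) * νg (Ioo s u))
    (hcomp2 : ∀ x ∈ Ioi (0:ℝ), φ x ^ α ≤ c₂ * ψ x ^ β)
    (M₁ M₂ : ℝ≥0∞)
    (h1 : ∀ s > (0:ℝ), νg (Ioo 0 s) ^ β * νF (Ioi s) ^ α ≤ M₁)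
    (h2 : ∀ s > (0:ℝ), νf (Ioo 0 s) ^ α * νG (Ioi s) ^ β ≤ M₂)
    {t : ℝ} (ht : 0 < t) :
    ((ENNReal.ofReal (ψ t))⁻¹ * νG (Ioi t)) ^ β * νF (Ioi t) ^ α ≤
      (2:ℝ≥0∞) ^ (α + β) * (M₁ + ENNReal.ofReal c₂ * M₂) := by
  have h2top : (2:ℝ≥0∞) ≠ ⊤ := ENNReal.ofNat_ne_top
  have hab : (0:ℝ) ≤ α + β := by positivity
  have hψt := hψ0 t ht
  have hφt := hφ0 t ht
  have e0 : ENNReal.ofReal (ψ t) ≠ 0 := (ENNReal.ofReal_pos.2 hψt).ne'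
  have eT : ENNReal.ofReal (ψ t) ≠ ⊤ := ENNReal.ofReal_ne_top
  have hM₁K : M₁ ≤ (2:ℝ≥0∞) ^ (α+β) * (M₁ + ENNReal.ofReal c₂ * M₂) := by
    calc M₁ ≤ M₁ + ENNReal.ofReal c₂ * M₂ := le_self_add
      _ = 1 * (M₁ + ENNReal.ofReal c₂ * M₂) := (one_mul _).symm
      _ ≤ _ := mul_le_mul_left (one_le_two_rpow hab) _
  by_cases hcase : νG (Ioi t) ≤ ENNReal.ofReal (ψ t) * νg (Ioo 0 t)
  · have hfac : (ENNReal.ofReal (ψ t))⁻¹ * νG (Ioi t) ≤ νg (Ioo 0 t) := by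
      calc (ENNReal.ofReal (ψ t))⁻¹ * νG (Ioi t)
          ≤ (ENNReal.ofReal (ψ t))⁻¹ * (ENNReal.ofReal (ψ t) * νg (Ioo 0 t)) :=
            mul_le_mul_right hcase _
        _ = νg (Ioo 0 t) := by rw [← mul_assoc, ENNReal.inv_mul_cancel e0 eT, one_mul]
    calc ((ENNReal.ofReal (ψ t))⁻¹ * νG (Ioi t)) ^ β * νF (Ioi t) ^ α
        ≤ νg (Ioo 0 t) ^ β * νF (Ioi t) ^ α :=
          mul_le_mul_left (ENNReal.rpow_le_rpow hfac hβ.le) _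
      _ ≤ M₁ := h1 t ht
      _ ≤ _ := hM₁K
  push_neg at hcase
  -- the set T and its inf
  set T : Set ℝ :=
    {s | t ≤ s ∧ νG (Ioi s) ≤ ENNReal.ofReal (ψ t) * νg (Ioo 0 s)} with hT
  have hbddT : BddBelow T := ⟨t, fun x hx => hx.1⟩
  -- nonempty
  have hΨt0 : νG (Ioi t) ≠ 0 := fun h => by simp [h] at hcase
  have hsupG : νG (Ioi t) = ⨆ n : ℕ, νG (Ioo t (t + (n+1))) := by
    have hdir : Directed (· ⊆ ·) (fun n : ℕ => Ioo t (t + (n+1))) := by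
      refine Monotone.directed_le fun n m hnm => ?_
      refine Ioo_subset_Ioo_right (by gcongr <;> exact_mod_cast hnm)
    rw [← hdir.measure_iUnion]
    congr 1
    ext x
    simp only [mem_iUnion, mem_Ioo, mem_Ioi]
    constructor
    · intro hx
      obtain ⟨n, hn⟩ := exists_nat_gt (x - t)
      exact ⟨n, hx, by push_cast; linarith⟩
    · rintro ⟨n, hn, -⟩; exact hn
  obtain ⟨n₀, hn₀⟩ : ∃ n : ℕ, νG (Ioo t (t + (n+1))) ≠ 0 := by
    by_contra hcon
    push_neg at hcon
    apply hΨt0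
    rw [hsupG]
    simp [hcon]
  have hts₁' : t < t + ((n₀:ℝ)+1) := by
    have : (0:ℝ) < (n₀:ℝ) + 1 := by positivity
    linarith
  set s₁ : ℝ := t + ((n₀:ℝ)+1) with hs₁def
  have hts₁ : t < s₁ := hts₁'
  have hgpos : νg (Ioo t s₁) ≠ 0 := by
    intro h
    apply hn₀
    refine le_antisymm ?_ (zero_le)
    calc νG (Ioo t s₁) ≤ ENNReal.ofReal (ψ t) * νg (Ioo t s₁) := cψ_up t s₁ ht
      _ = 0 := by rw [h, mul_zero]
  have hδpos : (0:ℝ≥0∞) < ENNReal.ofReal (ψ t) * νg (Ioo t s₁) :=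
    ENNReal.mul_pos e0 hgpos
  have hΨinf : ⨅ n : ℕ, νG (Ioi (s₁ + n)) = 0 := by
    refine measure_iInf_zero νG (fun n => measurableSet_Ioi) ?_ ?_ ?_
    · intro n m hnm
      refine Ioi_subset_Ioi (by gcongr <;> exact_mod_cast hnm)
    · ext x
      simp only [mem_iInter, mem_Ioi, mem_empty_iff_false, iff_false, not_forall]
      obtain ⟨n, hn⟩ := exists_nat_gt (x - s₁)
      exact ⟨n, fun hc => by linarith⟩
    · simpa using (hΨfin s₁ (ht.trans hts₁)).ne
  obtain ⟨n₂, hn₂⟩ : ∃ n : ℕ, νG (Ioi (s₁ + n)) < ENNReal.ofReal (ψ t) * νg (Ioo t s₁) :=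
    iInf_lt_iff.1 (hΨinf ▸ hδpos)
  have hs₂T : s₁ + n₂ + 1 ∈ T := by
    have h1' : t ≤ s₁ + n₂ + 1 := by
      have : (0:ℝ) ≤ (n₂:ℝ) := Nat.cast_nonneg n₂
      linarith [hts₁.le]
    refine ⟨h1', ?_⟩
    calc νG (Ioi (s₁ + n₂ + 1)) ≤ νG (Ioi (s₁ + n₂)) :=
          measure_mono (Ioi_subset_Ioi (by linarith))
      _ ≤ ENNReal.ofReal (ψ t) * νg (Ioo t s₁) := hn₂.le
      _ ≤ ENNReal.ofReal (ψ t) * νg (Ioo 0 (s₁ + n₂ + 1)) := by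
          refine mul_le_mul_right (measure_mono (Ioo_subset_Ioo ht.le ?_)) _
          have : (0:ℝ) ≤ (n₂:ℝ) := Nat.cast_nonneg n₂
          linarith
  have hTne : T.Nonempty := ⟨_, hs₂T⟩
  set s₀ : ℝ := sInf T with hs₀def
  have hts₀ : t ≤ s₀ := le_csInf hTne fun x hx => hx.1
  have hs₀pos : 0 < s₀ := lt_of_lt_of_le ht hts₀
  have hup : ∀ s ∈ T, ∀ s', s ≤ s' → s' ∈ T := by
    rintro s ⟨hst', hsle⟩ s' hle
    refine ⟨hst'.trans hle, ?_⟩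
    calc νG (Ioi s') ≤ νG (Ioi s) := measure_mono (Ioi_subset_Ioi hle)
      _ ≤ ENNReal.ofReal (ψ t) * νg (Ioo 0 s) := hsle
      _ ≤ ENNReal.ofReal (ψ t) * νg (Ioo 0 s') := by
          gcongr
  have hmemT : ∀ s, s₀ < s → s ∈ T := by
    intro s hs
    obtain ⟨x, hxT, hx⟩ := exists_lt_of_csInf_lt hTne hs
    exact hup x hxT s hx.le
  have hnotT : ∀ s, t ≤ s → s < s₀ →
      ENNReal.ofReal (ψ t) * νg (Ioo 0 s) < νG (Ioi s) := by
    intro s hts hs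
    by_contra hcon
    push_neg at hcon
    exact absurd (csInf_le hbddT ⟨hts, hcon⟩) (not_le.2 hs)
  -- (A')
  have hA : νG (Ioi s₀) ≤ ENNReal.ofReal (ψ t) * νg (Ioo 0 s₀) := by
    set v : ℕ → ℝ := fun n => s₀ + 1 / (n+1) with hv
    have hvgt : ∀ n, s₀ < v n := fun n => by
      have : (0:ℝ) < 1 / ((n:ℝ)+1) := by positivity
      rw [hv]; simp only; linarith
    have hvanti : Antitone v := by
      intro n m hnm
      rw [hv]; simp only
      have : (1:ℝ) / ((m:ℝ)+1) ≤ 1 / ((n:ℝ)+1) := by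
        apply div_le_div_of_nonneg_left zero_le_one (by positivity)
        exact_mod_cast (by gcongr : (n:ℝ) + 1 ≤ (m:ℝ) + 1)
      linarith
    have hεinf : ⨅ n, νg (Ioo s₀ (v n)) = 0 := by
      refine measure_iInf_zero νg (fun n => measurableSet_Ioo) ?_ ?_
        (((measure_mono (Ioo_subset_Ioo_left hs₀pos.le)).trans_lt (hgloc (v 0))).ne)
      · intro n m hnm
        exact Ioo_subset_Ioo_right (hvanti hnm)
      · ext x
        simp only [mem_iInter, mem_Ioo, mem_empty_iff_false, iff_false, not_forall]
        rcases lt_or_ge s₀ x with hx | hx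
        · obtain ⟨n, hn⟩ := exists_div_lt (c := (1:ℝ)) (sub_pos.2 hx)
          refine ⟨n, fun hc => ?_⟩
          have : v n < x := by rw [hv]; simp only; linarith
          exact absurd hc.2 (not_lt.2 this.le)
        · exact ⟨0, fun hc => absurd hc.1 (not_lt.2 hx)⟩
    refine le_of_le_add_iInf'
      (show ENNReal.ofReal (ψ t) * νg (Ioo 0 s₀) ≠ ⊤ from
        (ENNReal.mul_lt_top ENNReal.ofReal_lt_top (hgloc s₀)).ne)
      (show ENNReal.ofReal (ψ s₀) + ENNReal.ofReal (ψ t) ≠ ⊤ from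
        (ENNReal.add_lt_top.2 ⟨ENNReal.ofReal_lt_top, ENNReal.ofReal_lt_top⟩).ne)
      (fun n => ?_) hεinf
    have hvT := hmemT (v n) (hvgt n)
    calc νG (Ioi s₀) = νG (Ioo s₀ (v n)) + νG (Ioi (v n)) := split_Ioi haG (hvgt n).le
      _ ≤ ENNReal.ofReal (ψ s₀) * νg (Ioo s₀ (v n)) +
            ENNReal.ofReal (ψ t) * νg (Ioo 0 (v n)) :=
          add_le_add (cψ_up s₀ (v n) hs₀pos) hvT.2
      _ = ENNReal.ofReal (ψ s₀) * νg (Ioo s₀ (v n)) +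
            (ENNReal.ofReal (ψ t) * νg (Ioo 0 s₀) +
              ENNReal.ofReal (ψ t) * νg (Ioo s₀ (v n))) := by
          rw [split_Ioo hag hs₀pos (hvgt n).le, mul_add]
      _ = ENNReal.ofReal (ψ t) * νg (Ioo 0 s₀) +
            (ENNReal.ofReal (ψ s₀) + ENNReal.ofReal (ψ t)) * νg (Ioo s₀ (v n)) := by ring
  -- t < s₀
  have hts₀lt : t < s₀ := by
    rcases lt_or_eq_of_le hts₀ with h | h
    · exact h
    · exact absurd (h ▸ hA) (not_le.2 (h ▸ hcase))
  -- (B')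
  have hB : ENNReal.ofReal (ψ t) * νg (Ioo 0 s₀) ≤ νG (Ioi s₀) := by
    set u : ℕ → ℝ := fun n => s₀ - (s₀ - t) / (n+1) with hu
    have hudle : ∀ n : ℕ, (s₀ - t) / ((n:ℝ)+1) ≤ s₀ - t := fun n =>
      div_le_self (by linarith) (by have h0 : (0:ℝ) ≤ (n:ℝ) := Nat.cast_nonneg n; linarith)
    have hulb : ∀ n, t ≤ u n := fun n => by
      have := hudle n; rw [hu]; simp only; linarith
    have hupos : ∀ n, 0 < u n := fun n => lt_of_lt_of_le ht (hulb n)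
    have hult : ∀ n, u n < s₀ := fun n => by
      have : (0:ℝ) < (s₀ - t) / ((n:ℝ)+1) := by
        have := sub_pos.2 hts₀lt; positivity
      rw [hu]; simp only; linarith
    have humono : Monotone u := by
      intro n m hnm
      rw [hu]; simp only
      have : (s₀ - t) / ((m:ℝ)+1) ≤ (s₀ - t) / ((n:ℝ)+1) := by
        apply div_le_div_of_nonneg_left (by linarith [sub_pos.2 hts₀lt]) (by positivity)
        exact_mod_cast (by gcongr : (n:ℝ) + 1 ≤ (m:ℝ) + 1)
      linarith
    have hεinf : ⨅ n, νg (Ioo (u n) s₀) = 0 := by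
      refine measure_iInf_zero νg (fun n => measurableSet_Ioo) ?_ ?_
        (((measure_mono (Ioo_subset_Ioo_left (hupos 0).le)).trans_lt (hgloc s₀)).ne)
      · intro n m hnm
        exact Ioo_subset_Ioo_left (humono hnm)
      · ext x
        simp only [mem_iInter, mem_Ioo, mem_empty_iff_false, iff_false, not_forall]
        rcases lt_or_ge x s₀ with hx | hx
        · obtain ⟨n, hn⟩ := exists_div_lt (c := s₀ - t) (sub_pos.2 hx)
          refine ⟨n, fun hc => ?_⟩
          have : u n > x := by rw [hu]; simp only; linarith
          exact absurd hc.1 (not_lt.2 this.le)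
        · exact ⟨0, fun hc => absurd hc.2 (not_lt.2 hx)⟩
    refine le_of_le_add_iInf' (hΨfin s₀ hs₀pos).ne
      (show ENNReal.ofReal (ψ t) + ENNReal.ofReal (ψ t) ≠ ⊤ from
        (ENNReal.add_lt_top.2 ⟨ENNReal.ofReal_lt_top, ENNReal.ofReal_lt_top⟩).ne)
      (fun n => ?_) hεinf
    have hun : ENNReal.ofReal (ψ t) * νg (Ioo 0 (u n)) ≤ νG (Ioi (u n)) :=
      (hnotT (u n) (hulb n) (hult n)).le
    have hψu : ψ (u n) ≤ ψ t := hψ (mem_Ioi.2 ht) (mem_Ioi.2 (hupos n)) (hulb n)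
    calc ENNReal.ofReal (ψ t) * νg (Ioo 0 s₀)
        = ENNReal.ofReal (ψ t) * νg (Ioo 0 (u n)) +
            ENNReal.ofReal (ψ t) * νg (Ioo (u n) s₀) := by
          rw [split_Ioo hag (hupos n) (hult n).le, mul_add]
      _ ≤ νG (Ioi (u n)) + ENNReal.ofReal (ψ t) * νg (Ioo (u n) s₀) :=
          add_le_add_left hun _
      _ = νG (Ioo (u n) s₀) + νG (Ioi s₀) +
            ENNReal.ofReal (ψ t) * νg (Ioo (u n) s₀) := by
          rw [split_Ioi haG (hult n).le]
      _ ≤ ENNReal.ofReal (ψ (u n)) * νg (Ioo (u n) s₀) + νG (Ioi s₀) +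
            ENNReal.ofReal (ψ t) * νg (Ioo (u n) s₀) :=
          add_le_add_left (add_le_add_left (cψ_up (u n) s₀ (hupos n)) _) _
      _ ≤ ENNReal.ofReal (ψ t) * νg (Ioo (u n) s₀) + νG (Ioi s₀) +
            ENNReal.ofReal (ψ t) * νg (Ioo (u n) s₀) := by
          gcongr
      _ = νG (Ioi s₀) + (ENNReal.ofReal (ψ t) + ENNReal.ofReal (ψ t)) *
            νg (Ioo (u n) s₀) := by ring
  have heq : ENNReal.ofReal (ψ t) * νg (Ioo 0 s₀) = νG (Ioi s₀) := le_antisymm hB hA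
  -- final assembly
  have hstep1 : (ENNReal.ofReal (ψ t))⁻¹ * νG (Ioi t) ≤ 2 * νg (Ioo 0 s₀) := by
    have h1' : νG (Ioi t) ≤ ENNReal.ofReal (ψ t) * (2 * νg (Ioo 0 s₀)) := by
      calc νG (Ioi t) = νG (Ioo t s₀) + νG (Ioi s₀) := split_Ioi haG hts₀
        _ ≤ ENNReal.ofReal (ψ t) * νg (Ioo t s₀) +
              ENNReal.ofReal (ψ t) * νg (Ioo 0 s₀) := add_le_add (cψ_up t s₀ ht) hA
        _ ≤ ENNReal.ofReal (ψ t) * νg (Ioo 0 s₀) +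
              ENNReal.ofReal (ψ t) * νg (Ioo 0 s₀) := by
            gcongr
        _ = ENNReal.ofReal (ψ t) * (2 * νg (Ioo 0 s₀)) := by ring
    calc (ENNReal.ofReal (ψ t))⁻¹ * νG (Ioi t)
        ≤ (ENNReal.ofReal (ψ t))⁻¹ * (ENNReal.ofReal (ψ t) * (2 * νg (Ioo 0 s₀))) :=
          mul_le_mul_right h1' _
      _ = 2 * νg (Ioo 0 s₀) := by rw [← mul_assoc, ENNReal.inv_mul_cancel e0 eT, one_mul]
  have hstep2 : νF (Ioi t) ≤ νF (Ioi s₀) + ENNReal.ofReal (φ t) * νf (Ioo 0 s₀) := by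
    calc νF (Ioi t) = νF (Ioo t s₀) + νF (Ioi s₀) := split_Ioi haF hts₀
      _ ≤ ENNReal.ofReal (φ t) * νf (Ioo t s₀) + νF (Ioi s₀) :=
          add_le_add_left (cφ_up t s₀ ht) _
      _ ≤ ENNReal.ofReal (φ t) * νf (Ioo 0 s₀) + νF (Ioi s₀) := by
          gcongr
      _ = νF (Ioi s₀) + ENNReal.ofReal (φ t) * νf (Ioo 0 s₀) := add_comm _ _
  have hterm2 : νg (Ioo 0 s₀) ^ β * (ENNReal.ofReal (φ t) * νf (Ioo 0 s₀)) ^ α ≤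
      ENNReal.ofReal c₂ * M₂ := by
    have hr : (ENNReal.ofReal (φ t)) ^ α ≤
        ENNReal.ofReal c₂ * (ENNReal.ofReal (ψ t)) ^ β := by
      rw [ENNReal.ofReal_rpow_of_pos hφt, ENNReal.ofReal_rpow_of_pos hψt,
        ← ENNReal.ofReal_mul hc₂.le]
      exact ENNReal.ofReal_le_ofReal (hcomp2 t (mem_Ioi.2 ht))
    calc νg (Ioo 0 s₀) ^ β * (ENNReal.ofReal (φ t) * νf (Ioo 0 s₀)) ^ α
        = νg (Ioo 0 s₀) ^ β * ((ENNReal.ofReal (φ t)) ^ α * νf (Ioo 0 s₀) ^ α) := by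
          rw [ENNReal.mul_rpow_of_nonneg _ _ hα.le]
      _ ≤ νg (Ioo 0 s₀) ^ β *
            ((ENNReal.ofReal c₂ * (ENNReal.ofReal (ψ t)) ^ β) * νf (Ioo 0 s₀) ^ α) := by
          gcongr
      _ = ENNReal.ofReal c₂ * (νf (Ioo 0 s₀) ^ α *
            ((ENNReal.ofReal (ψ t) * νg (Ioo 0 s₀)) ^ β)) := by
          rw [ENNReal.mul_rpow_of_nonneg _ _ hβ.le]
          ring
      _ = ENNReal.ofReal c₂ * (νf (Ioo 0 s₀) ^ α * νG (Ioi s₀) ^ β) := by rw [heq]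
      _ ≤ ENNReal.ofReal c₂ * M₂ := mul_le_mul_right (h2 s₀ hs₀pos) _
  calc ((ENNReal.ofReal (ψ t))⁻¹ * νG (Ioi t)) ^ β * νF (Ioi t) ^ α
      ≤ (2 * νg (Ioo 0 s₀)) ^ β *
          (νF (Ioi s₀) + ENNReal.ofReal (φ t) * νf (Ioo 0 s₀)) ^ α :=
        mul_le_mul' (ENNReal.rpow_le_rpow hstep1 hβ.le) (ENNReal.rpow_le_rpow hstep2 hα.le)
    _ ≤ ((2:ℝ≥0∞) ^ β * νg (Ioo 0 s₀) ^ β) *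
          ((2:ℝ≥0∞) ^ α * (νF (Ioi s₀) ^ α + (ENNReal.ofReal (φ t) * νf (Ioo 0 s₀)) ^ α)) := by
        rw [ENNReal.mul_rpow_of_nonneg _ _ hβ.le]
        exact mul_le_mul_right (add_rpow_le _ _ hα.le) _
    _ = (2:ℝ≥0∞) ^ (α + β) *
          (νg (Ioo 0 s₀) ^ β * νF (Ioi s₀) ^ α +
            νg (Ioo 0 s₀) ^ β * (ENNReal.ofReal (φ t) * νf (Ioo 0 s₀)) ^ α) := by
        rw [ENNReal.rpow_add α β two_ne_zero h2top]
        ring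
    _ ≤ (2:ℝ≥0∞) ^ (α + β) * (M₁ + ENNReal.ofReal c₂ * M₂) :=
        mul_le_mul_right (add_le_add (h1 s₀ hs₀pos) hterm2) _

end Stmt8Aux
open Stmt8Aux in
/-- Gluing lemma (Lemma `lemmaglue`): for nonnegative locally integrable `f, g`, exponents
`α, β > 0`, and nonincreasing positive `φ, ψ` with `φ^α ≍ ψ^β`, the two separate
sup-conditions hold simultaneously iff the single glued sup-condition holds. -/
theorem stmt_8
    (f g φ ψ : ℝ → ℝ) (α β c₁ c₂ : ℝ)
    (hα : 0 < α) (hβ : 0 < β)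
    (hf : Measurable f) (hg : Measurable g)
    (hf0 : ∀ x ∈ Ioi (0:ℝ), 0 ≤ f x) (hg0 : ∀ x ∈ Ioi (0:ℝ), 0 ≤ g x)
    (hfloc : ∀ r > (0:ℝ), (∫⁻ x in Ioo (0:ℝ) r, ENNReal.ofReal (f x)) < ⊤)
    (hgloc : ∀ r > (0:ℝ), (∫⁻ x in Ioo (0:ℝ) r, ENNReal.ofReal (g x)) < ⊤)
    (hφ : AntitoneOn φ (Ioi 0)) (hψ : AntitoneOn ψ (Ioi 0))
    (hφ0 : ∀ x ∈ Ioi (0:ℝ), 0 < φ x) (hψ0 : ∀ x ∈ Ioi (0:ℝ), 0 < ψ x)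
    (hc₁ : 0 < c₁) (hc₁₂ : c₁ ≤ c₂)
    (hcomp : ∀ x ∈ Ioi (0:ℝ), c₁ * ψ x ^ β ≤ φ x ^ α ∧ φ x ^ α ≤ c₂ * ψ x ^ β) :
    ((∃ M : ℝ≥0∞, M < ⊤ ∧ ∀ t > (0:ℝ),
        (∫⁻ x in Ioo (0:ℝ) t, ENNReal.ofReal (g x)) ^ β *
          (∫⁻ x in Ioi t, ENNReal.ofReal (φ x * f x)) ^ α ≤ M) ∧
     (∃ M : ℝ≥0∞, M < ⊤ ∧ ∀ t > (0:ℝ),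
        (∫⁻ x in Ioo (0:ℝ) t, ENNReal.ofReal (f x)) ^ α *
          (∫⁻ x in Ioi t, ENNReal.ofReal (ψ x * g x)) ^ β ≤ M))
    ↔
    (∃ M : ℝ≥0∞, M < ⊤ ∧ ∀ t > (0:ℝ),
        ((∫⁻ x in Ioo (0:ℝ) t, ENNReal.ofReal (g x)) +
            ENNReal.ofReal ((ψ t)⁻¹) * ∫⁻ x in Ioi t, ENNReal.ofReal (ψ x * g x)) ^ β *
          (ENNReal.ofReal (φ t) * (∫⁻ x in Ioo (0:ℝ) t, ENNReal.ofReal (f x)) +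
            ∫⁻ x in Ioi t, ENNReal.ofReal (φ x * f x)) ^ α ≤ M) := by
  classical
  have hc₂ : 0 < c₂ := hc₁.trans_le hc₁₂
  have h2top : (2:ℝ≥0∞) ≠ ⊤ := ENNReal.ofNat_ne_top
  have hab : (0:ℝ) ≤ α + β := by positivity
  set νf : Measure ℝ := volume.withDensity fun x => ENNReal.ofReal (f x) with hνf
  set νg : Measure ℝ := volume.withDensity fun x => ENNReal.ofReal (g x) with hνg
  set νF : Measure ℝ := volume.withDensity fun x => ENNReal.ofReal (φ x * f x) with hνF
  set νG : Measure ℝ := volume.withDensity fun x => ENNReal.ofReal (ψ x * g x) with hνG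
  have haf : νf ≪ (volume : Measure ℝ) := withDensity_absolutelyContinuous _ _
  have hag : νg ≪ (volume : Measure ℝ) := withDensity_absolutelyContinuous _ _
  have haF : νF ≪ (volume : Measure ℝ) := withDensity_absolutelyContinuous _ _
  have haG : νG ≪ (volume : Measure ℝ) := withDensity_absolutelyContinuous _ _
  have hEf : ∀ s : ℝ, (∫⁻ x in Ioo (0:ℝ) s, ENNReal.ofReal (f x)) = νf (Ioo 0 s) :=
    fun s => (withDensity_apply _ measurableSet_Ioo).symm
  have hEg : ∀ s : ℝ, (∫⁻ x in Ioo (0:ℝ) s, ENNReal.ofReal (g x)) = νg (Ioo 0 s) :=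
    fun s => (withDensity_apply _ measurableSet_Ioo).symm
  have hEF : ∀ s : ℝ, (∫⁻ x in Ioi s, ENNReal.ofReal (φ x * f x)) = νF (Ioi s) :=
    fun s => (withDensity_apply _ measurableSet_Ioi).symm
  have hEG : ∀ s : ℝ, (∫⁻ x in Ioi s, ENNReal.ofReal (ψ x * g x)) = νG (Ioi s) :=
    fun s => (withDensity_apply _ measurableSet_Ioi).symm
  simp only [hEf, hEg, hEF, hEG] at *
  -- basic finiteness
  have hfloc' : ∀ r : ℝ, νf (Ioo 0 r) < ⊤ := by
    intro r
    rcases le_or_gt r 0 with h | h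
    · rw [Ioo_eq_empty (not_lt.2 h), measure_empty]
      exact ENNReal.zero_lt_top
    · exact hfloc r h
  have hgloc' : ∀ r : ℝ, νg (Ioo 0 r) < ⊤ := by
    intro r
    rcases le_or_gt r 0 with h | h
    · rw [Ioo_eq_empty (not_lt.2 h), measure_empty]
      exact ENNReal.zero_lt_top
    · exact hgloc r h
  -- comparison facts
  have cφ_low : ∀ s u : ℝ, 0 < s → s < u →
      ENNReal.ofReal (φ u) * νf (Ioo s u) ≤ νF (Ioo s u) := by
    intro s u hs hsu
    refine dens_mul_le f _ measurableSet_Ioo (hφ0 u (mem_Ioi.2 (hs.trans hsu))).le ?_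
    intro x hx
    have hx0 : (0:ℝ) < x := hs.trans hx.1
    exact mul_le_mul_of_nonneg_right
      (hφ (mem_Ioi.2 hx0) (mem_Ioi.2 (hs.trans hsu)) hx.2.le) (hf0 x (mem_Ioi.2 hx0))
  have cφ0 : ∀ u : ℝ, 0 < u →
      ENNReal.ofReal (φ u) * νf (Ioo 0 u) ≤ νF (Ioo 0 u) := by
    intro u hu
    refine dens_mul_le f _ measurableSet_Ioo (hφ0 u (mem_Ioi.2 hu)).le ?_
    intro x hx
    exact mul_le_mul_of_nonneg_right
      (hφ (mem_Ioi.2 hx.1) (mem_Ioi.2 hu) hx.2.le) (hf0 x (mem_Ioi.2 hx.1))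
  have cφ_up : ∀ s u : ℝ, 0 < s →
      νF (Ioo s u) ≤ ENNReal.ofReal (φ s) * νf (Ioo s u) := by
    intro s u hs
    refine dens_le_mul f _ measurableSet_Ioo (hφ0 s (mem_Ioi.2 hs)).le ?_
    intro x hx
    have hx0 : (0:ℝ) < x := hs.trans hx.1
    exact mul_le_mul_of_nonneg_right
      (hφ (mem_Ioi.2 hs) (mem_Ioi.2 hx0) hx.1.le) (hf0 x (mem_Ioi.2 hx0))
  have cψ_low : ∀ s u : ℝ, 0 < s → s < u →
      ENNReal.ofReal (ψ u) * νg (Ioo s u) ≤ νG (Ioo s u) := by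
    intro s u hs hsu
    refine dens_mul_le g _ measurableSet_Ioo (hψ0 u (mem_Ioi.2 (hs.trans hsu))).le ?_
    intro x hx
    have hx0 : (0:ℝ) < x := hs.trans hx.1
    exact mul_le_mul_of_nonneg_right
      (hψ (mem_Ioi.2 hx0) (mem_Ioi.2 (hs.trans hsu)) hx.2.le) (hg0 x (mem_Ioi.2 hx0))
  have cψ_up : ∀ s u : ℝ, 0 < s →
      νG (Ioo s u) ≤ ENNReal.ofReal (ψ s) * νg (Ioo s u) := by
    intro s u hs
    refine dens_le_mul g _ measurableSet_Ioo (hψ0 s (mem_Ioi.2 hs)).le ?_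
    intro x hx
    have hx0 : (0:ℝ) < x := hs.trans hx.1
    exact mul_le_mul_of_nonneg_right
      (hψ (mem_Ioi.2 hs) (mem_Ioi.2 hx0) hx.1.le) (hg0 x (mem_Ioi.2 hx0))
  have hcomp2 : ∀ x ∈ Ioi (0:ℝ), φ x ^ α ≤ c₂ * ψ x ^ β := fun x hx => (hcomp x hx).2
  constructor
  · -- hard direction
    rintro ⟨⟨M₁, hM₁, h1⟩, M₂, hM₂, h2⟩
    by_cases hDF : ∀ r > (0:ℝ), νF (Ioi r) = ⊤
    · refine ⟨1, ENNReal.one_lt_top, fun t ht => ?_⟩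
      have hg0' : ∀ s, 0 < s → νg (Ioo 0 s) = 0 := by
        intro s hs
        by_contra hcon
        have h1' := h1 s hs
        rw [hDF s hs, ENNReal.top_rpow_of_pos hα, ENNReal.mul_top
          (fun hz => hcon ((ENNReal.rpow_eq_zero_iff.1 hz).elim
            (fun h => h.1) (fun h => absurd hβ (not_lt.2 h.2.le))))] at h1'
        exact absurd (lt_of_le_of_lt h1' hM₁) (lt_irrefl ⊤)
      have hΨ0 : νG (Ioi t) = 0 := by
        rw [meas_Ioi_eq_iSup νG t]
        refine le_antisymm (iSup_le fun n => ?_) (zero_le)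
        calc νG (Ioo t (t + (n+1))) ≤ ENNReal.ofReal (ψ t) * νg (Ioo t (t + (n+1))) :=
              cψ_up t _ ht
          _ ≤ ENNReal.ofReal (ψ t) * νg (Ioo 0 (t + (n+1))) := by
              gcongr
          _ = 0 := by
              rw [hg0' _ (by positivity), mul_zero]
      rw [hΨ0, hg0' t ht, mul_zero, add_zero, ENNReal.zero_rpow_of_pos hβ, zero_mul]
      exact zero_le
    by_cases hDG : ∀ r > (0:ℝ), νG (Ioi r) = ⊤
    · refine ⟨1, ENNReal.one_lt_top, fun t ht => ?_⟩
      have hf0' : ∀ s, 0 < s → νf (Ioo 0 s) = 0 := by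
        intro s hs
        by_contra hcon
        have h2' := h2 s hs
        rw [hDG s hs, ENNReal.top_rpow_of_pos hβ, ENNReal.mul_top
          (fun hz => hcon ((ENNReal.rpow_eq_zero_iff.1 hz).elim
            (fun h => h.1) (fun h => absurd hα (not_lt.2 h.2.le))))] at h2'
        exact absurd (lt_of_le_of_lt h2' hM₂) (lt_irrefl ⊤)
      have hΦ0 : νF (Ioi t) = 0 := by
        rw [meas_Ioi_eq_iSup νF t]
        refine le_antisymm (iSup_le fun n => ?_) (zero_le)
        calc νF (Ioo t (t + (n+1))) ≤ ENNReal.ofReal (φ t) * νf (Ioo t (t + (n+1))) :=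
              cφ_up t _ ht
          _ ≤ ENNReal.ofReal (φ t) * νf (Ioo 0 (t + (n+1))) := by gcongr
          _ = 0 := by rw [hf0' _ (by positivity), mul_zero]
      rw [hΦ0, hf0' t ht, mul_zero, zero_add, ENNReal.zero_rpow_of_pos hα, mul_zero]
      exact zero_le
    push_neg at hDF hDG
    obtain ⟨r₁, hr₁pos, hr₁⟩ := hDF
    obtain ⟨r₂, hr₂pos, hr₂⟩ := hDG
    have hΦfin : ∀ r > (0:ℝ), νF (Ioi r) < ⊤ := by
      intro r hr
      rcases le_or_gt r₁ r with h | h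
      · exact lt_of_le_of_lt (measure_mono (Ioi_subset_Ioi h)) (lt_top_iff_ne_top.2 hr₁)
      · rw [split_Ioi haF h.le]
        refine ENNReal.add_lt_top.2 ⟨?_, lt_top_iff_ne_top.2 hr₁⟩
        calc νF (Ioo r r₁) ≤ ENNReal.ofReal (φ r) * νf (Ioo r r₁) := cφ_up r r₁ hr
          _ ≤ ENNReal.ofReal (φ r) * νf (Ioo 0 r₁) := by
              gcongr
          _ < ⊤ := ENNReal.mul_lt_top ENNReal.ofReal_lt_top (hfloc' r₁)
    have hΨfin : ∀ r > (0:ℝ), νG (Ioi r) < ⊤ := by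
      intro r hr
      rcases le_or_gt r₂ r with h | h
      · exact lt_of_le_of_lt (measure_mono (Ioi_subset_Ioi h)) (lt_top_iff_ne_top.2 hr₂)
      · rw [split_Ioi haG h.le]
        refine ENNReal.add_lt_top.2 ⟨?_, lt_top_iff_ne_top.2 hr₂⟩
        calc νG (Ioo r r₂) ≤ ENNReal.ofReal (ψ r) * νg (Ioo r r₂) := cψ_up r r₂ hr
          _ ≤ ENNReal.ofReal (ψ r) * νg (Ioo 0 r₂) := by
              gcongr
          _ < ⊤ := ENNReal.mul_lt_top ENNReal.ofReal_lt_top (hgloc' r₂)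
    have hKfin : M₁ + ENNReal.ofReal c₂ * M₂ < ⊤ :=
      ENNReal.add_lt_top.2 ⟨hM₁, ENNReal.mul_lt_top ENNReal.ofReal_lt_top hM₂⟩
    have hCCfin : (2:ℝ≥0∞) ^ (α + β) < ⊤ := ENNReal.rpow_lt_top_of_nonneg hab h2top
    refine ⟨(2:ℝ≥0∞) ^ (α + β) * ((2:ℝ≥0∞) ^ (α + β) * (M₁ + ENNReal.ofReal c₂ * M₂) +
      ((M₁ + ENNReal.ofReal c₂ * M₂) + ((M₁ + ENNReal.ofReal c₂ * M₂) +
        (2:ℝ≥0∞) ^ (α + β) * (M₁ + ENNReal.ofReal c₂ * M₂)))), ?_, fun t ht => ?_⟩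
    · refine ENNReal.mul_lt_top hCCfin ?_
      refine ENNReal.add_lt_top.2 ⟨ENNReal.mul_lt_top hCCfin hKfin, ?_⟩
      refine ENNReal.add_lt_top.2 ⟨hKfin, ?_⟩
      exact ENNReal.add_lt_top.2 ⟨hKfin, ENNReal.mul_lt_top hCCfin hKfin⟩
    have hψt := hψ0 t (mem_Ioi.2 ht)
    have hφt := hφ0 t (mem_Ioi.2 ht)
    have e0 : ENNReal.ofReal (ψ t) ≠ 0 := (ENNReal.ofReal_pos.2 hψt).ne'
    have eT : ENNReal.ofReal (ψ t) ≠ ⊤ := ENNReal.ofReal_ne_top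
    rw [ENNReal.ofReal_inv_of_pos hψt]
    have hct1 := ct1 νf νg νF νG haf hag haF φ ψ α β c₂ hα hβ hc₂ hφ hφ0 hψ0
      hfloc' hΦfin cφ_low cφ_up cφ0 cψ_low hcomp2 M₁ M₂ h1 h2 ht
    have hct2 := ct2 νf νg νF νG hag haF haG φ ψ α β c₂ hα hβ hc₂ hψ hφ0 hψ0
      hgloc' hΨfin cφ_up cψ_up hcomp2 M₁ M₂ h1 h2 ht
    have hterm3 : ((ENNReal.ofReal (ψ t))⁻¹ * νG (Ioi t)) ^ β *
        (ENNReal.ofReal (φ t) * νf (Ioo 0 t)) ^ α ≤ M₁ + ENNReal.ofReal c₂ * M₂ := by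
      have hr : (ENNReal.ofReal (φ t)) ^ α ≤
          ENNReal.ofReal c₂ * (ENNReal.ofReal (ψ t)) ^ β := by
        rw [ENNReal.ofReal_rpow_of_pos hφt, ENNReal.ofReal_rpow_of_pos hψt,
          ← ENNReal.ofReal_mul hc₂.le]
        exact ENNReal.ofReal_le_ofReal (hcomp2 t (mem_Ioi.2 ht))
      have hfac : ((ENNReal.ofReal (ψ t))⁻¹) ^ β * (ENNReal.ofReal (φ t)) ^ α ≤
          ENNReal.ofReal c₂ := by
        calc ((ENNReal.ofReal (ψ t))⁻¹) ^ β * (ENNReal.ofReal (φ t)) ^ α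
            ≤ ((ENNReal.ofReal (ψ t))⁻¹) ^ β *
                (ENNReal.ofReal c₂ * (ENNReal.ofReal (ψ t)) ^ β) := mul_le_mul_right hr _
          _ = ENNReal.ofReal c₂ *
                (((ENNReal.ofReal (ψ t))⁻¹ * ENNReal.ofReal (ψ t)) ^ β) := by
              rw [ENNReal.mul_rpow_of_nonneg _ _ hβ.le]; ring
          _ = ENNReal.ofReal c₂ := by
              rw [ENNReal.inv_mul_cancel e0 eT, ENNReal.one_rpow, mul_one]
      calc ((ENNReal.ofReal (ψ t))⁻¹ * νG (Ioi t)) ^ β *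
            (ENNReal.ofReal (φ t) * νf (Ioo 0 t)) ^ α
          = (((ENNReal.ofReal (ψ t))⁻¹) ^ β * (ENNReal.ofReal (φ t)) ^ α) *
              (νf (Ioo 0 t) ^ α * νG (Ioi t) ^ β) := by
            rw [ENNReal.mul_rpow_of_nonneg _ _ hβ.le, ENNReal.mul_rpow_of_nonneg _ _ hα.le]
            ring
        _ ≤ ENNReal.ofReal c₂ * M₂ := mul_le_mul' hfac (h2 t ht)
        _ ≤ M₁ + ENNReal.ofReal c₂ * M₂ := le_add_self
    calc (νg (Ioo 0 t) + (ENNReal.ofReal (ψ t))⁻¹ * νG (Ioi t)) ^ β *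
          (ENNReal.ofReal (φ t) * νf (Ioo 0 t) + νF (Ioi t)) ^ α
        ≤ ((2:ℝ≥0∞) ^ β * (νg (Ioo 0 t) ^ β + ((ENNReal.ofReal (ψ t))⁻¹ * νG (Ioi t)) ^ β)) *
            ((2:ℝ≥0∞) ^ α * ((ENNReal.ofReal (φ t) * νf (Ioo 0 t)) ^ α + νF (Ioi t) ^ α)) :=
          mul_le_mul' (add_rpow_le _ _ hβ.le) (add_rpow_le _ _ hα.le)
      _ = (2:ℝ≥0∞) ^ (α + β) * (νg (Ioo 0 t) ^ β * (ENNReal.ofReal (φ t) * νf (Ioo 0 t)) ^ α +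
            (νg (Ioo 0 t) ^ β * νF (Ioi t) ^ α +
              (((ENNReal.ofReal (ψ t))⁻¹ * νG (Ioi t)) ^ β *
                  (ENNReal.ofReal (φ t) * νf (Ioo 0 t)) ^ α +
                ((ENNReal.ofReal (ψ t))⁻¹ * νG (Ioi t)) ^ β * νF (Ioi t) ^ α))) := by
          rw [ENNReal.rpow_add α β two_ne_zero h2top]
          ring
      _ ≤ _ := mul_le_mul_right (add_le_add hct1 (add_le_add
          ((h1 t ht).trans le_self_add) (add_le_add hterm3 hct2))) _
  · -- easy direction
    rintro ⟨M, hM, h⟩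
    constructor
    · refine ⟨M, hM, fun t ht => ?_⟩
      refine le_trans ?_ (h t ht)
      gcongr
      · exact le_self_add
      · exact le_add_self
    · refine ⟨ENNReal.ofReal c₁⁻¹ * M, ENNReal.mul_lt_top ENNReal.ofReal_lt_top hM, ?_⟩
      intro t ht
      have hψt := hψ0 t (mem_Ioi.2 ht)
      have hφt := hφ0 t (mem_Ioi.2 ht)
      have e0 : ENNReal.ofReal (ψ t) ≠ 0 := (ENNReal.ofReal_pos.2 hψt).ne'
      have eT : ENNReal.ofReal (ψ t) ≠ ⊤ := ENNReal.ofReal_ne_top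
      have hX : ((ENNReal.ofReal (ψ t))⁻¹ * νG (Ioi t)) ^ β *
          (ENNReal.ofReal (φ t) * νf (Ioo 0 t)) ^ α ≤ M := by
        refine le_trans ?_ (h t ht)
        rw [ENNReal.ofReal_inv_of_pos hψt]
        gcongr
        · exact le_add_self
        · exact le_self_add
      have hfac : (1:ℝ≥0∞) ≤ ENNReal.ofReal c₁⁻¹ *
          (((ENNReal.ofReal (ψ t))⁻¹) ^ β * (ENNReal.ofReal (φ t)) ^ α) := by
        have hr : ENNReal.ofReal c₁ * (ENNReal.ofReal (ψ t)) ^ β ≤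
            (ENNReal.ofReal (φ t)) ^ α := by
          rw [ENNReal.ofReal_rpow_of_pos hφt, ENNReal.ofReal_rpow_of_pos hψt,
            ← ENNReal.ofReal_mul hc₁.le]
          exact ENNReal.ofReal_le_ofReal (hcomp t (mem_Ioi.2 ht)).1
        calc (1:ℝ≥0∞) = ENNReal.ofReal (c₁⁻¹ * c₁) *
              (((ENNReal.ofReal (ψ t))⁻¹ * ENNReal.ofReal (ψ t)) ^ β) := by
              rw [inv_mul_cancel₀ hc₁.ne', ENNReal.inv_mul_cancel e0 eT,
                ENNReal.one_rpow, ENNReal.ofReal_one, one_mul]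
          _ = ENNReal.ofReal c₁⁻¹ *
              (((ENNReal.ofReal (ψ t))⁻¹) ^ β * (ENNReal.ofReal c₁ *
                (ENNReal.ofReal (ψ t)) ^ β)) := by
            rw [ENNReal.ofReal_mul (inv_nonneg.2 hc₁.le),
              ENNReal.mul_rpow_of_nonneg _ _ hβ.le]
            ring
          _ ≤ ENNReal.ofReal c₁⁻¹ *
              (((ENNReal.ofReal (ψ t))⁻¹) ^ β * (ENNReal.ofReal (φ t)) ^ α) := by
            gcongr
      calc νf (Ioo 0 t) ^ α * νG (Ioi t) ^ β
          = 1 * (νf (Ioo 0 t) ^ α * νG (Ioi t) ^ β) := (one_mul _).symm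
        _ ≤ (ENNReal.ofReal c₁⁻¹ *
              (((ENNReal.ofReal (ψ t))⁻¹) ^ β * (ENNReal.ofReal (φ t)) ^ α)) *
              (νf (Ioo 0 t) ^ α * νG (Ioi t) ^ β) := mul_le_mul_left hfac _
        _ = ENNReal.ofReal c₁⁻¹ * (((ENNReal.ofReal (ψ t))⁻¹ * νG (Ioi t)) ^ β *
              (ENNReal.ofReal (φ t) * νf (Ioo 0 t)) ^ α) := by
            rw [ENNReal.mul_rpow_of_nonneg _ _ hβ.le, ENNReal.mul_rpow_of_nonneg _ _ hα.le]
            ring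
        _ ≤ ENNReal.ofReal c₁⁻¹ * M := mul_le_mul_right hX _
end

section
/- Let 0<q<∞ and 1<p<∞, let k∈ℕ (k≥1), b₀,c₀,b₁,c₁,b₂,c₂ ∈ ℝ, and let (a_m)_{m≥0} be complex numbers with a₀ ≠ 0 and Σ_{m=0}^∞ |a_m| < ∞. Define K(x,y)=x^{b₁}y^{c₁}·Σ_{m=0}^∞ a_m (xy)^{km} for x,y>0 (the series assumed convergent for all x,y>0), and suppose there is C>0 with |K(x,y)| ≤ C·x^{b₁}y^{c₁} for xy≤1 and |K(x,y)| ≤ C·x^{b₂}y^{c₂} for xy>1. Set Ff(y)=y^{c₀}∫₀^∞ x^{b₀}f(x)K(x,y) dx. Suppose further there exist ν,b,c ∈ ℝ with b−b₁−ν<1 and, for each y>0, a differentiable function G_y:(0,∞)→ℂ with derivative (d/dx)G_y(x)=x^{ν}K(x,y) and |G_y(x)| ≤ C'·x^{b}y^{c} whenever xy≥1, for some C'>0. Let u:(0,∞)→[0,∞) be measurable and not almost everywhere zero. Then there is NO constant C''>0 such that (∫₀^∞ u(y)|Ff(y)|^q dy)^{1/q} ≤ C''·(∫₀^∞ x^{p(1/p'+b₀+b₁)}|f(x)|^p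 dx)^{1/p} holds for every measurable f:(0,∞)→ℂ with ∫₀^∞ x^{b₀+b₁}|f(x)| dx < ∞ and ∫₀^∞ x^{b₀+b₁}f(x) dx = 0. -/
set_option maxHeartbeats 1000000

open MeasureTheory Set
open scoped ENNReal

/-- Proposition `propsharp2` (sharpness): for kernels given by a power series with `a₀ ≠ 0`,
and under the stated bounds on `K` and on an antiderivative `G_y` of `x^ν K(x,y)`, the
weighted norm inequality with weight `x^{p(1/p'+b₀+b₁)}` on the right-hand side cannot hold
for all `f` with vanishing moment `∫₀^∞ x^{b₀+b₁} f = 0`, whenever `u ≢ 0`. -/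
theorem stmt_14
    (p q p' : ℝ) (hq0 : 0 < q) (hp : 1 < p)
    (hp'def : p' = p / (p - 1))
    (k : ℕ) (hk : 1 ≤ k) (b₀ c₀ b₁ c₁ b₂ c₂ : ℝ)
    (a : ℕ → ℂ) (ha0 : a 0 ≠ 0) (ha : Summable (fun m => ‖a m‖))
    (K : ℝ → ℝ → ℂ)
    (hconv : ∀ x > (0:ℝ), ∀ y > (0:ℝ),
      Summable (fun m : ℕ => a m * (↑((x * y) ^ (k * m)) : ℂ)))
    (hKdef : ∀ x > (0:ℝ), ∀ y > (0:ℝ),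
      K x y = (↑(x ^ b₁ * y ^ c₁) : ℂ) * ∑' m : ℕ, a m * (↑((x * y) ^ (k * m)) : ℂ))
    (C : ℝ) (hCpos : 0 < C)
    (hK1 : ∀ x > (0:ℝ), ∀ y > (0:ℝ), x * y ≤ 1 → ‖K x y‖ ≤ C * x ^ b₁ * y ^ c₁)
    (hK2 : ∀ x > (0:ℝ), ∀ y > (0:ℝ), 1 < x * y → ‖K x y‖ ≤ C * x ^ b₂ * y ^ c₂)
    (ν b c C' : ℝ) (hb : b - b₁ - ν < 1) (hC' : 0 < C')
    (hG : ∀ y > (0:ℝ), ∃ G : ℝ → ℂ,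
      (∀ x > (0:ℝ), HasDerivAt G ((↑(x ^ ν) : ℂ) * K x y) x) ∧
      (∀ x > (0:ℝ), 1 ≤ x * y → ‖G x‖ ≤ C' * x ^ b * y ^ c))
    (u : ℝ → ℝ) (hu : Measurable u) (hu0 : ∀ y ∈ Ioi (0:ℝ), 0 ≤ u y)
    (hune : ¬ (∀ᵐ y ∂(volume.restrict (Ioi (0:ℝ))), u y = 0)) :
    ¬ ∃ C'' > (0:ℝ), ∀ f : ℝ → ℂ, Measurable f →
      (∫⁻ x in Ioi (0:ℝ), ENNReal.ofReal (x ^ (b₀ + b₁) * ‖f x‖)) < ⊤ →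
      (∫ x in Ioi (0:ℝ), (↑(x ^ (b₀ + b₁)) : ℂ) * f x) = 0 →
      (∫⁻ y in Ioi (0:ℝ),
          ENNReal.ofReal (u y *
            ‖(↑(y ^ c₀) : ℂ) * ∫ x in Ioi (0:ℝ), (↑(x ^ b₀) : ℂ) * f x * K x y‖ ^ q)) ^ (1/q)
        ≤ ENNReal.ofReal C'' *
          (∫⁻ x in Ioi (0:ℝ),
            ENNReal.ofReal (x ^ (p * (1/p' + b₀ + b₁)) * ‖f x‖ ^ p)) ^ (1/p) := by
  rintro ⟨C'', hC''pos, hIneq⟩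
  -- basic facts about p, p', q
  have hp0 : (0:ℝ) < p := lt_trans one_pos hp
  have hp10 : (0:ℝ) < p - 1 := by linarith
  have hp'1 : (1:ℝ) < p' := by
    rw [hp'def]; rw [lt_div_iff₀ hp10]; linarith
  have hp'0 : (0:ℝ) < p' := lt_trans one_pos hp'1
  have hpp' : p + p' = p * p' := by
    rw [hp'def]; field_simp; ring
  have hpinv : p * (1/p') = p - 1 := by
    rw [hp'def]; field_simp
  have hp'inv : (1 - 1/p) * p' = 1 := by
    rw [hp'def]; field_simp
  -- Step 1: find a good set E where u is bounded below
  obtain ⟨y₀, y₁, δ, E, hy₀, hy₀y₁, hδ, hEmeas, hEsub, hEIcc, hEu, hEpos, hEfin⟩ :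
      ∃ (y₀ y₁ δ : ℝ) (E : Set ℝ), 0 < y₀ ∧ y₀ ≤ y₁ ∧ 0 < δ ∧ MeasurableSet E ∧
        E ⊆ Ioi 0 ∧ E ⊆ Icc y₀ y₁ ∧ (∀ y ∈ E, δ ≤ u y) ∧ 0 < volume E ∧ volume E ≠ ⊤ := by
    set En : ℕ → Set ℝ := fun n => Icc (1/(n+1):ℝ) (n+1) ∩ {y | 1/(n+1:ℝ) ≤ u y} with hEndef
    have hEnmeas : ∀ n, MeasurableSet (En n) :=
      fun n => measurableSet_Icc.inter (hu measurableSet_Ici)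
    have hex : ∃ n, volume (En n) ≠ 0 := by
      by_contra hall
      push_neg at hall
      apply hune
      rw [ae_iff]
      rw [Measure.restrict_apply' measurableSet_Ioi]
      have hsub : {y : ℝ | ¬ u y = 0} ∩ Ioi 0 ⊆ ⋃ n, En n := by
        intro y hy
        have hy0 : (0:ℝ) < y := hy.2
        have hupos : 0 < u y := lt_of_le_of_ne (hu0 y hy.2) (Ne.symm hy.1)
        obtain ⟨n, hn⟩ := exists_nat_gt (max (max y (1/y)) (1/(u y)))
        have hn1 : y < (n:ℝ) + 1 := by
          have := le_trans (le_max_left y (1/y)) (le_max_left _ (1/(u y)))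
          linarith [lt_of_le_of_lt this hn]
        have hn2 : 1/y < (n:ℝ) + 1 := by
          have := le_trans (le_max_right y (1/y)) (le_max_left _ (1/(u y)))
          linarith [lt_of_le_of_lt this hn]
        have hn3 : 1/(u y) < (n:ℝ) + 1 := by
          have := le_max_right (max y (1/y)) (1/(u y))
          linarith [lt_of_le_of_lt this hn]
        have hnpos : (0:ℝ) < (n:ℝ) + 1 := by positivity
        refine mem_iUnion.mpr ⟨n, ⟨⟨?_, hn1.le⟩, ?_⟩⟩
        · rw [div_le_iff₀ hnpos]
          have := (div_lt_iff₀ hy0).mp hn2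
          nlinarith
        · have := (div_lt_iff₀ hupos).mp hn3
          rw [mem_setOf_eq, div_le_iff₀ hnpos]
          nlinarith
      have h0 : volume (⋃ n, En n) = 0 := measure_iUnion_null hall
      exact le_antisymm (le_trans (measure_mono hsub) (le_of_eq h0)) zero_le
    obtain ⟨n, hn⟩ := hex
    have hn1pos : (0:ℝ) < 1/(n+1:ℝ) := by positivity
    refine ⟨1/(n+1:ℝ), (n:ℝ)+1, 1/(n+1:ℝ), En n, hn1pos, ?_, hn1pos, hEnmeas n,
      ?_, ?_, ?_, ?_, ?_⟩
    · have h1 : (1:ℝ) ≤ (n:ℝ)+1 := by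
        have : (0:ℝ) ≤ (n:ℝ) := Nat.cast_nonneg n
        linarith
      calc 1/(n+1:ℝ) ≤ 1 := by rw [div_le_one (by positivity)]; exact h1
        _ ≤ (n:ℝ)+1 := h1
    · intro y hy
      exact lt_of_lt_of_le hn1pos hy.1.1
    · exact inter_subset_left
    · intro y hy; exact hy.2
    · exact zero_lt_iff.mpr hn
    · exact ne_top_of_le_ne_top (by simp [Real.volume_Icc]) (measure_mono inter_subset_left)
  -- the power series function
  set Sf : ℝ → ℂ := fun t => ∑' m : ℕ, a m * (↑(t ^ (k * m)) : ℂ) with hSf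
  have hSfK : ∀ x > (0:ℝ), ∀ y > (0:ℝ), K x y = (↑(x ^ b₁ * y ^ c₁) : ℂ) * Sf (x * y) := by
    intro x hx y hy; exact hKdef x hx y hy
  set A : ℝ := ∑' m : ℕ, ‖a (m + 1)‖ with hA
  have hA0 : 0 ≤ A := tsum_nonneg (fun m => norm_nonneg _)
  have hSbound : ∀ t : ℝ, 0 < t → t ≤ 1 → ‖Sf t - a 0‖ ≤ A * t ^ k := by
    intro t ht ht1
    have hs : Summable (fun m : ℕ => a m * (↑(t ^ (k * m)) : ℂ)) := by
      have := hconv t ht 1 one_pos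
      simpa [mul_one] using this
    have hsum2 : Summable (fun m : ℕ => a (m+1) * (↑(t ^ (k * (m+1))) : ℂ)) :=
      (summable_nat_add_iff (f := fun m : ℕ => a m * (↑(t ^ (k * m)) : ℂ)) 1).mpr hs
    have hshift : Sf t - a 0 = ∑' m : ℕ, a (m+1) * (↑(t ^ (k * (m+1))) : ℂ) := by
      have h0 : Sf t = a 0 * (↑(t ^ (k * 0)) : ℂ) + ∑' m : ℕ, a (m+1) * (↑(t ^ (k * (m+1))) : ℂ) := by
        simp only [hSf]
        exact Summable.tsum_eq_zero_add hs
      rw [h0]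
      simp
    rw [hshift]
    have hrhs : Summable (fun m : ℕ => ‖a (m+1)‖ * t ^ k) :=
      Summable.mul_right _ ((summable_nat_add_iff (f := fun m : ℕ => ‖a m‖) 1).mpr ha)
    calc ‖∑' m : ℕ, a (m+1) * (↑(t ^ (k * (m+1))) : ℂ)‖
        ≤ ∑' m : ℕ, ‖a (m+1) * (↑(t ^ (k * (m+1))) : ℂ)‖ :=
          norm_tsum_le_tsum_norm (summable_norm_iff.mpr hsum2)
      _ ≤ ∑' m : ℕ, ‖a (m+1)‖ * t ^ k := by
          apply Summable.tsum_le_tsum _ (summable_norm_iff.mpr hsum2) hrhs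
          intro m
          rw [norm_mul, Complex.norm_real, Real.norm_eq_abs,
            abs_of_nonneg (pow_nonneg ht.le _)]
          apply mul_le_mul_of_nonneg_left _ (norm_nonneg _)
          exact pow_le_pow_of_le_one ht.le ht1 (Nat.le_mul_of_pos_right k (by omega))
      _ = A * t ^ k := tsum_mul_right
  have hScont : ∀ y > (0:ℝ), ∀ cc dd : ℝ, 0 < cc →
      ContinuousOn (fun x : ℝ => Sf (x * y)) (Icc cc dd) := by
    intro y hy cc dd hcc
    by_cases hcd : cc ≤ dd
    · have hdd : 0 < dd := lt_of_lt_of_le hcc hcd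
      have hddy : 0 < dd * y := mul_pos hdd hy
      simp only [hSf]
      apply continuousOn_tsum (u := fun m => ‖a m‖ * (dd*y)^(k*m))
      · intro i
        apply Continuous.continuousOn
        continuity
      · apply Summable.congr (summable_norm_iff.mpr (hconv dd hdd y hy))
        intro m
        rw [norm_mul, Complex.norm_real, Real.norm_eq_abs,
          abs_of_nonneg (pow_nonneg hddy.le _)]
      · intro m x hx
        have hx0 : 0 < x := lt_of_lt_of_le hcc hx.1
        rw [norm_mul, Complex.norm_real, Real.norm_eq_abs,
          abs_of_nonneg (pow_nonneg (mul_pos hx0 hy).le _)]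
        apply mul_le_mul_of_nonneg_left _ (norm_nonneg _)
        exact pow_le_pow_left₀ (mul_pos hx0 hy).le
          (mul_le_mul_of_nonneg_right hx.2 hy.le) _
    · rw [Icc_eq_empty hcd]
      exact continuousOn_empty _
  have hKcont : ∀ y > (0:ℝ), ∀ cc dd : ℝ, 0 < cc →
      ContinuousOn (fun x : ℝ => K x y) (Icc cc dd) := by
    intro y hy cc dd hcc
    apply ContinuousOn.congr (f := fun x : ℝ => (↑(x ^ b₁ * y ^ c₁) : ℂ) * Sf (x * y))
    · apply ContinuousOn.mul _ (hScont y hy cc dd hcc)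
      apply Complex.continuous_ofReal.comp_continuousOn
      apply ContinuousOn.mul _ continuousOn_const
      exact ContinuousOn.rpow_const continuousOn_id
        (fun x hx => Or.inl (ne_of_gt (lt_of_lt_of_le hcc hx.1)))
    · intro x hx
      exact hSfK x (lt_of_lt_of_le hcc hx.1) y hy
  -- constants
  have ha0' : (0:ℝ) < ‖a 0‖ := norm_pos_iff.mpr ha0
  set t₀ : ℝ := min 1 ((‖a 0‖ / (2 * (A + 1))) ^ (1/(k:ℝ))) with ht₀def
  have ht₀pos : 0 < t₀ := by
    apply lt_min one_pos
    apply Real.rpow_pos_of_pos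
    positivity
  have ht₀le1 : t₀ ≤ 1 := min_le_left _ _
  have ht₀ : A * t₀ ^ k ≤ ‖a 0‖ / 2 := by
    set θ : ℝ := ‖a 0‖ / (2 * (A + 1)) with hθdef
    have hθpos : 0 < θ := by positivity
    have h1 : t₀ ^ k ≤ (θ ^ (1/(k:ℝ))) ^ k :=
      pow_le_pow_left₀ ht₀pos.le (min_le_right _ _) k
    have hkne : ((k:ℝ)) ≠ 0 := Nat.cast_ne_zero.mpr (by omega)
    have h2 : (θ ^ (1/(k:ℝ))) ^ k = θ := by
      rw [← Real.rpow_natCast (θ ^ (1/(k:ℝ))) k, ← Real.rpow_mul hθpos.le,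
        one_div_mul_cancel hkne, Real.rpow_one]
    have h3 : A * θ ≤ ‖a 0‖ / 2 := by
      rw [hθdef, ← mul_div_assoc, div_le_div_iff₀ (by positivity) two_pos]
      nlinarith
    calc A * t₀ ^ k ≤ A * θ := by
          apply mul_le_mul_of_nonneg_left _ hA0
          rw [← h2]; exact h1
      _ ≤ ‖a 0‖ / 2 := h3
  have hSsmall : ∀ t : ℝ, 0 < t → t ≤ t₀ → ‖Sf t - a 0‖ ≤ ‖a 0‖ / 2 := by
    intro t ht htt
    calc ‖Sf t - a 0‖ ≤ A * t ^ k := hSbound t ht (le_trans htt ht₀le1)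
      _ ≤ A * t₀ ^ k := by
          apply mul_le_mul_of_nonneg_left _ hA0
          exact pow_le_pow_left₀ ht.le htt k
      _ ≤ ‖a 0‖ / 2 := ht₀
  set R : ℝ := t₀ / y₁ with hRdef
  have hy₁ : (0:ℝ) < y₁ := lt_of_lt_of_le hy₀ hy₀y₁
  have hRpos : 0 < R := div_pos ht₀pos hy₁
  have hRy : ∀ x : ℝ, ∀ y ∈ Icc y₀ y₁, 0 < x → x ≤ R → x * y ≤ t₀ := by
    intro x y hy hx hxR
    calc x * y ≤ R * y₁ := by
          apply mul_le_mul hxR hy.2 (le_trans hy₀.le hy.1) hRpos.le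
      _ = t₀ := by rw [hRdef]; field_simp
  -- min/max powers over [y₀,y₁]
  have hycmin : ∀ e : ℝ, ∀ y ∈ Icc y₀ y₁, min (y₀ ^ e) (y₁ ^ e) ≤ y ^ e := by
    intro e y hy
    rcases le_or_gt 0 e with he | he
    · exact le_trans (min_le_left _ _) (Real.rpow_le_rpow hy₀.le hy.1 he)
    · exact le_trans (min_le_right _ _)
        (Real.rpow_le_rpow_of_nonpos (lt_of_lt_of_le hy₀ hy.1) hy.2 he.le)
  have hycmax : ∀ e : ℝ, ∀ y ∈ Icc y₀ y₁, y ^ e ≤ max (y₀ ^ e) (y₁ ^ e) := by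
    intro e y hy
    rcases le_or_gt 0 e with he | he
    · exact le_trans (Real.rpow_le_rpow (lt_of_lt_of_le hy₀ hy.1).le hy.2 he)
        (le_max_right _ _)
    · exact le_trans (Real.rpow_le_rpow_of_nonpos hy₀ hy.1 he.le) (le_max_left _ _)
  have hycminpos : ∀ e : ℝ, 0 < min (y₀ ^ e) (y₁ ^ e) := fun e =>
    lt_min (Real.rpow_pos_of_pos hy₀ e) (Real.rpow_pos_of_pos hy₁ e)
  set w₀ : ℝ := min (y₀ ^ c₀) (y₁ ^ c₀) with hw₀def
  set w₁ : ℝ := min (y₀ ^ c₁) (y₁ ^ c₁) with hw₁def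
  have hw₀ : 0 < w₀ := hycminpos c₀
  have hw₁ : 0 < w₁ := hycminpos c₁
  set β : ℝ := b - b₁ - ν - 1 with hβdef
  have hβ : β < 0 := by simp only [hβdef]; linarith
  set β₀ : ℝ := -b₁ - 1 - ν with hβ₀def
  set Ymax : ℝ := max (y₀ ^ c) (y₁ ^ c) with hYmaxdef
  have hYmax : 0 < Ymax := lt_max_of_lt_left (Real.rpow_pos_of_pos hy₀ c)
  set D : ℝ := C' * (2 + |β₀| / (-β)) with hDdef
  have hD : 0 < D := by
    apply mul_pos hC'
    have : 0 ≤ |β₀| / (-β) := div_nonneg (abs_nonneg _) (by linarith)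
    linarith
  set ε₀ : ℝ := w₁ * ‖a 0‖ / 4 with hε₀def
  have hε₀ : 0 < ε₀ := by positivity
  set N : ℝ := max (max 1 (R+1)) (max (1/y₀) ((ε₀ / (D * Ymax)) ^ (1/β))) with hNdef
  have hN1 : 1 ≤ N := le_trans (le_max_left 1 (R+1)) (le_max_left _ _)
  have hNpos : 0 < N := lt_of_lt_of_le one_pos hN1
  have hNR : R < N := by
    have : R + 1 ≤ N := le_trans (le_max_right 1 (R+1)) (le_max_left _ _)
    linarith
  have hNy : ∀ y ∈ Icc y₀ y₁, ∀ x : ℝ, N ≤ x → 1 ≤ x * y := by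
    intro y hy x hx
    have h1 : 1/y₀ ≤ N := le_trans (le_max_left _ _) (le_max_right _ _)
    have h2 : 1/y₀ ≤ x := le_trans h1 hx
    calc (1:ℝ) = (1/y₀) * y₀ := by field_simp
      _ ≤ x * y := by
          apply mul_le_mul h2 hy.1 hy₀.le (le_trans (by positivity) h2)
  have hNβ : D * Ymax * N ^ β ≤ ε₀ := by
    have hZpos : 0 < ε₀ / (D * Ymax) := by positivity
    have hZN : (ε₀ / (D * Ymax)) ^ (1/β) ≤ N :=
      le_trans (le_max_right _ _) (le_max_right _ _)
    have h1 : N ^ β ≤ ((ε₀ / (D * Ymax)) ^ (1/β)) ^ β :=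
      Real.rpow_le_rpow_of_nonpos (Real.rpow_pos_of_pos hZpos _) hZN hβ.le
    have h2 : ((ε₀ / (D * Ymax)) ^ (1/β)) ^ β = ε₀ / (D * Ymax) := by
      rw [← Real.rpow_mul hZpos.le, one_div_mul_cancel (ne_of_lt hβ), Real.rpow_one]
    calc D * Ymax * N ^ β ≤ D * Ymax * (ε₀ / (D * Ymax)) := by
          apply mul_le_mul_of_nonneg_left _ (by positivity)
          rw [← h2]; exact h1
      _ = ε₀ := by field_simp
  -- tail estimate
  have hTail : ∀ y ∈ Icc y₀ y₁, ∀ M : ℝ, N ≤ M →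
      ‖∫ x in N..M, (↑(x ^ (-b₁ - 1)) : ℂ) * K x y‖ ≤ ε₀ := by
    intro y hy Mv hMv
    have hypos : 0 < y := lt_of_lt_of_le hy₀ hy.1
    have hMvpos : 0 < Mv := lt_of_lt_of_le hNpos hMv
    have hIcceq : uIcc N Mv = Icc N Mv := uIcc_of_le hMv
    have hNMpos : ∀ x ∈ Icc N Mv, 0 < x := fun x hx => lt_of_lt_of_le hNpos hx.1
    obtain ⟨G, hGd, hGb⟩ := hG y hypos
    set U : ℝ → ℂ := fun x => ((x ^ β₀ : ℝ) : ℂ) with hUdef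
    set U' : ℝ → ℂ := fun x => ((β₀ * x ^ (β₀ - 1) : ℝ) : ℂ) with hU'def
    have hUd : ∀ x ∈ uIcc N Mv, HasDerivAt U (U' x) x := by
      intro x hx
      rw [hIcceq] at hx
      have hx0 : x ≠ 0 := ne_of_gt (hNMpos x hx)
      exact (Real.hasDerivAt_rpow_const (Or.inl hx0)).ofReal_comp
    have hGd' : ∀ x ∈ uIcc N Mv, HasDerivAt G ((↑(x ^ ν) : ℂ) * K x y) x := by
      intro x hx
      rw [hIcceq] at hx
      exact hGd x (hNMpos x hx)
    have hrpowcont : ∀ ee : ℝ, ContinuousOn (fun x : ℝ => ((x ^ ee : ℝ) : ℂ)) (Icc N Mv) := by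
      intro ee
      apply Complex.continuous_ofReal.comp_continuousOn
      exact ContinuousOn.rpow_const continuousOn_id
        (fun x hx => Or.inl (ne_of_gt (hNMpos x hx)))
    have hKint : IntervalIntegrable (fun x => (↑(x ^ ν) : ℂ) * K x y) volume N Mv := by
      apply ContinuousOn.intervalIntegrable
      rw [hIcceq]
      exact (hrpowcont ν).mul (hKcont y hypos N Mv hNpos)
    have hU'cont : ContinuousOn U' (Icc N Mv) := by
      apply Complex.continuous_ofReal.comp_continuousOn
      exact continuousOn_const.mul (ContinuousOn.rpow_const continuousOn_id
        (fun x hx => Or.inl (ne_of_gt (hNMpos x hx))))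
    have hU'int : IntervalIntegrable U' volume N Mv := by
      apply ContinuousOn.intervalIntegrable
      rw [hIcceq]
      exact hU'cont
    have hGcont : ContinuousOn G (Icc N Mv) := by
      intro x hx
      exact (hGd x (hNMpos x hx)).continuousAt.continuousWithinAt
    have hIBP := intervalIntegral.integral_mul_deriv_eq_deriv_mul hUd hGd' hU'int hKint
    have hcong : EqOn (fun x : ℝ => (↑(x ^ (-b₁ - 1)) : ℂ) * K x y)
        (fun x : ℝ => U x * ((↑(x ^ ν) : ℂ) * K x y)) (uIcc N Mv) := by
      intro x hx
      rw [hIcceq] at hx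
      have hx0 : 0 < x := hNMpos x hx
      have hxe : (x : ℝ) ^ (-b₁ - 1) = x ^ β₀ * x ^ ν := by
        rw [← Real.rpow_add hx0]
        congr 1
        rw [hβ₀def]; ring
      simp only [hUdef, hxe]
      push_cast
      ring
    rw [intervalIntegral.integral_congr hcong, hIBP]
    -- estimates
    have hGbN : ‖G N‖ ≤ C' * N ^ b * y ^ c := hGb N hNpos (hNy y hy N le_rfl)
    have hGbM : ‖G Mv‖ ≤ C' * Mv ^ b * y ^ c := hGb Mv hMvpos (hNy y hy Mv hMv)
    have hNβpos : 0 < N ^ β := Real.rpow_pos_of_pos hNpos β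
    have hycpos : 0 < y ^ c := Real.rpow_pos_of_pos hypos c
    have hMvβ : Mv ^ β ≤ N ^ β := Real.rpow_le_rpow_of_nonpos hNpos hMv hβ.le
    have hterm : ∀ z : ℝ, 0 < z → z ∈ Icc N Mv → ‖U z * G z‖ ≤ C' * N ^ β * y ^ c := by
      intro z hz hzmem
      have h1 : ‖U z * G z‖ = z ^ β₀ * ‖G z‖ := by
        rw [norm_mul, hUdef, Complex.norm_real, Real.norm_eq_abs,
          abs_of_nonneg (Real.rpow_nonneg hz.le _)]
      rw [h1]
      have h2 : ‖G z‖ ≤ C' * z ^ b * y ^ c := hGb z hz (hNy y hy z hzmem.1)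
      calc z ^ β₀ * ‖G z‖ ≤ z ^ β₀ * (C' * z ^ b * y ^ c) := by
            apply mul_le_mul_of_nonneg_left h2 (Real.rpow_nonneg hz.le _)
        _ = C' * (z ^ β₀ * z ^ b) * y ^ c := by ring
        _ = C' * z ^ β * y ^ c := by
            rw [← Real.rpow_add hz]
            congr 3
            rw [hβ₀def, hβdef]; ring
        _ ≤ C' * N ^ β * y ^ c := by
            apply mul_le_mul_of_nonneg_right _ hycpos.le
            apply mul_le_mul_of_nonneg_left _ hC'.le
            exact Real.rpow_le_rpow_of_nonpos hNpos hzmem.1 hβ.le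
    have hptw : ∀ x ∈ Icc N Mv, ‖U' x * G x‖ ≤ (|β₀| * C' * y ^ c) * x ^ (β - 1) := by
      intro x hx
      have hx0 : 0 < x := hNMpos x hx
      have h1 : ‖U' x * G x‖ = |β₀| * x ^ (β₀ - 1) * ‖G x‖ := by
        rw [norm_mul, hU'def, Complex.norm_real, Real.norm_eq_abs, abs_mul,
          abs_of_nonneg (Real.rpow_nonneg hx0.le _)]
      rw [h1]
      have h2 : ‖G x‖ ≤ C' * x ^ b * y ^ c := hGb x hx0 (hNy y hy x hx.1)
      calc |β₀| * x ^ (β₀ - 1) * ‖G x‖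
          ≤ |β₀| * x ^ (β₀ - 1) * (C' * x ^ b * y ^ c) := by
            apply mul_le_mul_of_nonneg_left h2 (by positivity)
        _ = (|β₀| * C' * y ^ c) * (x ^ (β₀ - 1) * x ^ b) := by ring
        _ = (|β₀| * C' * y ^ c) * x ^ (β - 1) := by
            rw [← Real.rpow_add hx0]
            congr 1
            rw [hβ₀def, hβdef]; ring
    have hnormint : IntervalIntegrable (fun x => ‖U' x * G x‖) volume N Mv := by
      apply ContinuousOn.intervalIntegrable
      rw [hIcceq]
      exact (hU'cont.mul hGcont).norm
    have hrint : IntervalIntegrable (fun x => (|β₀| * C' * y ^ c) * x ^ (β - 1)) volume N Mv := by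
      apply ContinuousOn.intervalIntegrable
      rw [hIcceq]
      exact continuousOn_const.mul (ContinuousOn.rpow_const continuousOn_id
        (fun x hx => Or.inl (ne_of_gt (hNMpos x hx))))
    have hint3 : ‖∫ x in N..Mv, U' x * G x‖ ≤ |β₀| * C' * y ^ c * (N ^ β / (-β)) := by
      have hval : ∫ x in N..Mv, (|β₀| * C' * y ^ c) * x ^ (β - 1)
          = (|β₀| * C' * y ^ c) * ((Mv ^ β - N ^ β) / β) := by
        rw [intervalIntegral.integral_const_mul]
        congr 1
        have hne : β - 1 ≠ -1 := by intro hcon; apply ne_of_lt hβ; linarith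
        have h0mem : (0:ℝ) ∉ uIcc N Mv := by
          rw [hIcceq]
          intro hcon
          exact absurd hcon.1 (by linarith)
        rw [integral_rpow (Or.inr ⟨hne, h0mem⟩)]
        norm_num
      have hdivle : (Mv ^ β - N ^ β) / β ≤ N ^ β / (-β) := by
        have h5 : (Mv ^ β - N ^ β) / β = (N ^ β - Mv ^ β) / (-β) := by
          rw [← neg_div_neg_eq]; ring_nf
        rw [h5, div_le_div_iff_of_pos_right (by linarith : (0:ℝ) < -β)]
        have := Real.rpow_pos_of_pos hMvpos β
        linarith
      calc ‖∫ x in N..Mv, U' x * G x‖ ≤ ∫ x in N..Mv, ‖U' x * G x‖ :=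
            intervalIntegral.norm_integral_le_integral_norm hMv
        _ ≤ ∫ x in N..Mv, (|β₀| * C' * y ^ c) * x ^ (β - 1) :=
            intervalIntegral.integral_mono_on hMv hnormint hrint hptw
        _ = (|β₀| * C' * y ^ c) * ((Mv ^ β - N ^ β) / β) := hval
        _ ≤ |β₀| * C' * y ^ c * (N ^ β / (-β)) := by
            apply mul_le_mul_of_nonneg_left hdivle (by positivity)
    have hXM : ‖U Mv * G Mv‖ ≤ C' * N ^ β * y ^ c := hterm Mv hMvpos ⟨hMv, le_refl Mv⟩
    have hXN : ‖U N * G N‖ ≤ C' * N ^ β * y ^ c := hterm N hNpos ⟨le_refl N, hMv⟩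
    calc ‖U Mv * G Mv - U N * G N - ∫ x in N..Mv, U' x * G x‖
        ≤ ‖U Mv * G Mv - U N * G N‖ + ‖∫ x in N..Mv, U' x * G x‖ := norm_sub_le _ _
      _ ≤ (‖U Mv * G Mv‖ + ‖U N * G N‖) + ‖∫ x in N..Mv, U' x * G x‖ := by
          have := norm_sub_le (U Mv * G Mv) (U N * G N)
          linarith
      _ ≤ (C' * N ^ β * y ^ c + C' * N ^ β * y ^ c) + |β₀| * C' * y ^ c * (N ^ β / (-β)) := by
          linarith
      _ = D * y ^ c * N ^ β := by
          rw [hDdef]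
          field_simp
          ring
      _ ≤ D * Ymax * N ^ β := by
          apply mul_le_mul_of_nonneg_right _ (Real.rpow_nonneg hNpos.le β)
          exact mul_le_mul_of_nonneg_left (hycmax c y hy) hD.le
      _ ≤ ε₀ := hNβ
  set cI : ℝ := w₁ * ‖a 0‖ / 4 with hcIdef
  have hcI : 0 < cI := by positivity
  set e : ℝ := (volume E).toReal with hedef
  have he : 0 < e := ENNReal.toReal_pos (ne_of_gt hEpos) hEfin
  set κ₁ : ℝ := (δ * e) ^ (1/q) * (w₀ * cI) with hκ₁def
  have hκ₁ : 0 < κ₁ := by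
    apply mul_pos _ (by positivity)
    apply Real.rpow_pos_of_pos (by positivity)
  -- choose L
  set L : ℝ := max 1 ((2 * C'' / κ₁) ^ p' + 1) with hLdef
  have hL1 : 1 ≤ L := le_max_left _ _
  have hL0 : 0 < L := lt_of_lt_of_le one_pos hL1
  set T : ℝ := L ^ p' with hTdef
  have hT1 : L ≤ T := by
    calc L = L ^ (1:ℝ) := (Real.rpow_one L).symm
      _ ≤ L ^ p' := Real.rpow_le_rpow_of_exponent_le hL1 hp'1.le
  have hT0 : 0 < T := lt_of_lt_of_le hL0 hT1
  set κ : ℝ := L / T with hκdef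
  have hκ0 : 0 < κ := div_pos hL0 hT0
  have hκ1 : κ ≤ 1 := by
    rw [hκdef, div_le_one hT0]; exact hT1
  have hκT : κ * T = L := by rw [hκdef]; field_simp
  have hκpT : κ ^ p * T = 1 := by
    rw [hκdef, hTdef, Real.div_rpow hL0.le (Real.rpow_nonneg hL0.le p'),
      ← Real.rpow_mul hL0.le]
    rw [div_mul_eq_mul_div, ← Real.rpow_add hL0]
    rw [show p + p' = p' * p by linarith]
    exact div_self (ne_of_gt (Real.rpow_pos_of_pos hL0 _))
  set r : ℝ := R * Real.exp (-L) with hrdef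
  have hrpos : 0 < r := mul_pos hRpos (Real.exp_pos _)
  have hrR : r ≤ R := by
    calc r = R * Real.exp (-L) := rfl
      _ ≤ R * 1 := by
          apply mul_le_mul_of_nonneg_left _ hRpos.le
          exact Real.exp_le_one_iff.mpr (by linarith)
      _ = R := mul_one R
  have hlogRr : Real.log (R / r) = L := by
    rw [hrdef]
    rw [show R / (R * Real.exp (-L)) = Real.exp L by
      rw [Real.exp_neg]; field_simp]
    exact Real.log_exp L
  set M : ℝ := N * Real.exp T with hMdef
  have hNM : N ≤ M := by
    calc N = N * 1 := (mul_one N).symm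
      _ ≤ N * Real.exp T := by
          apply mul_le_mul_of_nonneg_left _ hNpos.le
          exact Real.one_le_exp hT0.le
  have hMpos : 0 < M := lt_of_lt_of_le hNpos hNM
  have hlogMN : Real.log (M / N) = T := by
    rw [hMdef]
    rw [show N * Real.exp T / N = Real.exp T by field_simp]
    exact Real.log_exp T
  -- the test function
  set g₀ : ℝ → ℝ := fun x => x ^ (-b₀ - b₁ - 1) with hg₀def
  set f : ℝ → ℂ := fun x =>
    (((Icc r R).indicator g₀ x - κ * (Icc N M).indicator g₀ x : ℝ) : ℂ) with hfdef
  have hfmeas : Measurable f := by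
    apply Complex.measurable_ofReal.comp
    apply Measurable.sub
    · exact (Measurable.indicator (by fun_prop) measurableSet_Icc)
    · exact ((Measurable.indicator (by fun_prop) measurableSet_Icc).const_mul κ)
  -- pointwise description
  have hfval1 : ∀ x ∈ Icc r R, f x = ((x ^ (-b₀ - b₁ - 1) : ℝ) : ℂ) := by
    intro x hx
    have hx2 : x ∉ Icc N M := by
      intro h; linarith [h.1, hx.2]
    simp [hfdef, indicator_of_mem hx, indicator_of_notMem hx2, hg₀def]
  have hfval2 : ∀ x ∈ Icc N M, f x = ((-(κ * x ^ (-b₀ - b₁ - 1)) : ℝ) : ℂ) := by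
    intro x hx
    have hx1 : x ∉ Icc r R := by
      intro h; linarith [h.2, hx.1, hNR]
    simp [hfdef, indicator_of_mem hx, indicator_of_notMem hx1, hg₀def]
  have hfval0 : ∀ x : ℝ, x ∉ Icc r R → x ∉ Icc N M → f x = 0 := by
    intro x h1 h2
    simp [hfdef, indicator_of_notMem h1, indicator_of_notMem h2]
  -- generic indicator integral evaluation
  have key : ∀ (cc dd : ℝ), 0 < cc → cc ≤ dd → ∀ φ : ℝ → ℂ, ContinuousOn φ (Icc cc dd) →
      Integrable ((Icc cc dd).indicator φ) (volume.restrict (Ioi 0)) ∧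
      (∫ x in Ioi (0:ℝ), (Icc cc dd).indicator φ x) = ∫ x in cc..dd, φ x := by
    intro cc dd hcc hccdd φ hφ
    have hsub : Icc cc dd ⊆ Ioi (0:ℝ) := fun x hx => lt_of_lt_of_le hcc hx.1
    have hint : IntegrableOn φ (Icc cc dd) volume :=
      hφ.integrableOn_compact isCompact_Icc
    have h1 : Integrable ((Icc cc dd).indicator φ) volume :=
      (integrable_indicator_iff measurableSet_Icc).mpr hint
    refine ⟨h1.restrict, ?_⟩
    rw [integral_indicator measurableSet_Icc,
      Measure.restrict_restrict measurableSet_Icc,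
      inter_eq_self_of_subset_left hsub,
      integral_Icc_eq_integral_Ioc, ← intervalIntegral.integral_of_le hccdd]
  have keyR : ∀ (cc dd : ℝ), 0 < cc → cc ≤ dd → ∀ φ : ℝ → ℝ, ContinuousOn φ (Icc cc dd) →
      Integrable ((Icc cc dd).indicator φ) (volume.restrict (Ioi 0)) ∧
      (∫ x in Ioi (0:ℝ), (Icc cc dd).indicator φ x) = ∫ x in cc..dd, φ x := by
    intro cc dd hcc hccdd φ hφ
    have hsub : Icc cc dd ⊆ Ioi (0:ℝ) := fun x hx => lt_of_lt_of_le hcc hx.1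
    have hint : IntegrableOn φ (Icc cc dd) volume :=
      hφ.integrableOn_compact isCompact_Icc
    have h1 : Integrable ((Icc cc dd).indicator φ) volume :=
      (integrable_indicator_iff measurableSet_Icc).mpr hint
    refine ⟨h1.restrict, ?_⟩
    rw [integral_indicator measurableSet_Icc,
      Measure.restrict_restrict measurableSet_Icc,
      inter_eq_self_of_subset_left hsub,
      integral_Icc_eq_integral_Ioc, ← intervalIntegral.integral_of_le hccdd]
  have hinvcont : ∀ (cc dd : ℝ), 0 < cc →
      ContinuousOn (fun x : ℝ => x⁻¹) (Icc cc dd) :=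
    fun cc dd hcc => ContinuousOn.inv₀ continuousOn_id
      (fun x hx => ne_of_gt (lt_of_lt_of_le hcc hx.1))
  have hinvcontC : ∀ (cc dd : ℝ), 0 < cc →
      ContinuousOn (fun x : ℝ => ((x⁻¹ : ℝ) : ℂ)) (Icc cc dd) :=
    fun cc dd hcc => Complex.continuous_ofReal.comp_continuousOn (hinvcont cc dd hcc)
  -- the two basic interval integrals
  have hint1 : ∫ x in r..R, (x:ℝ)⁻¹ = L := by
    rw [integral_inv (by
      rw [uIcc_of_le hrR]
      intro hcon
      exact absurd hcon.1 (by linarith))]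
    exact hlogRr
  have hint2 : ∫ x in N..M, (x:ℝ)⁻¹ = T := by
    rw [integral_inv (by
      rw [uIcc_of_le hNM]
      intro hcon
      exact absurd hcon.1 (by linarith))]
    exact hlogMN
  -- condition (b): L¹ finiteness
  have hfin : (∫⁻ x in Ioi (0:ℝ), ENNReal.ofReal (x ^ (b₀ + b₁) * ‖f x‖)) < ⊤ := by
    have hbound : ∀ x : ℝ, ENNReal.ofReal (x ^ (b₀ + b₁) * ‖f x‖)
        ≤ (Icc r M).indicator (fun _ => ENNReal.ofReal (2/r)) x := by
      intro x
      by_cases hx : x ∈ Icc r M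
      · rw [indicator_of_mem hx]
        apply ENNReal.ofReal_le_ofReal
        have hx0 : 0 < x := lt_of_lt_of_le hrpos hx.1
        have hfx : ‖f x‖ ≤ 2 * x ^ (-b₀ - b₁ - 1) := by
          by_cases h1 : x ∈ Icc r R
          · rw [hfval1 x h1, Complex.norm_real, Real.norm_eq_abs,
              abs_of_nonneg (Real.rpow_nonneg hx0.le _)]
            linarith [Real.rpow_nonneg hx0.le (-b₀ - b₁ - 1)]
          · by_cases h2 : x ∈ Icc N M
            · rw [hfval2 x h2, Complex.norm_real, Real.norm_eq_abs, abs_neg,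
                abs_mul, abs_of_nonneg hκ0.le,
                abs_of_nonneg (Real.rpow_nonneg hx0.le _)]
              have hmm := mul_le_mul_of_nonneg_right hκ1 (Real.rpow_nonneg hx0.le (-b₀ - b₁ - 1))
              linarith [Real.rpow_nonneg hx0.le (-b₀ - b₁ - 1)]
            · rw [hfval0 x h1 h2]
              simp
              positivity
        calc x ^ (b₀ + b₁) * ‖f x‖ ≤ x ^ (b₀ + b₁) * (2 * x ^ (-b₀ - b₁ - 1)) := by
              apply mul_le_mul_of_nonneg_left hfx (Real.rpow_nonneg hx0.le _)
          _ = 2 * (x ^ (b₀ + b₁) * x ^ (-b₀ - b₁ - 1)) := by ring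
          _ = 2 * x⁻¹ := by
              rw [← Real.rpow_add hx0,
                show (b₀ + b₁) + (-b₀ - b₁ - 1) = (-1 : ℝ) by ring, Real.rpow_neg_one]
          _ ≤ 2 / r := by
              rw [div_eq_mul_inv]
              apply mul_le_mul_of_nonneg_left _ (by norm_num)
              exact inv_anti₀ hrpos hx.1
      · rw [indicator_of_notMem hx]
        have h1 : x ∉ Icc r R := fun hcon => hx ⟨hcon.1, le_trans hcon.2 (le_trans hNR.le hNM)⟩
        have h2 : x ∉ Icc N M := fun hcon => hx ⟨le_trans (le_trans hrR hNR.le) hcon.1, hcon.2⟩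
        rw [hfval0 x h1 h2]
        simp
    calc (∫⁻ x in Ioi (0:ℝ), ENNReal.ofReal (x ^ (b₀ + b₁) * ‖f x‖))
        ≤ ∫⁻ x in Ioi (0:ℝ), (Icc r M).indicator (fun _ => ENNReal.ofReal (2/r)) x :=
          lintegral_mono hbound
      _ = ENNReal.ofReal (2/r) * (volume.restrict (Ioi 0)) (Icc r M) := by
          rw [lintegral_indicator measurableSet_Icc, setLIntegral_const]
      _ ≤ ENNReal.ofReal (2/r) * volume (Icc r M) := by
          apply mul_le_mul_right
          rw [Measure.restrict_apply' measurableSet_Ioi]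
          exact measure_mono inter_subset_left
      _ < ⊤ := by
          rw [Real.volume_Icc]
          exact ENNReal.mul_lt_top ENNReal.ofReal_lt_top ENNReal.ofReal_lt_top
  -- condition (c): vanishing moment
  have hmom : (∫ x in Ioi (0:ℝ), ((x ^ (b₀ + b₁) : ℝ) : ℂ) * f x) = 0 := by
    have hEqm : EqOn (fun x : ℝ => ((x ^ (b₀ + b₁) : ℝ) : ℂ) * f x)
        (fun x : ℝ => (Icc r R).indicator (fun x => ((x⁻¹ : ℝ) : ℂ)) x
          - (κ : ℂ) * (Icc N M).indicator (fun x => ((x⁻¹ : ℝ) : ℂ)) x) (Ioi 0) := by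
      intro x hx
      have hx0 : (0:ℝ) < x := hx
      have hcollapse : (x : ℝ) ^ (b₀ + b₁) * x ^ (-b₀ - b₁ - 1) = x⁻¹ := by
        rw [← Real.rpow_add hx0,
          show (b₀ + b₁) + (-b₀ - b₁ - 1) = (-1 : ℝ) by ring, Real.rpow_neg_one]
      by_cases h1 : x ∈ Icc r R
      · have h2 : x ∉ Icc N M := by
          intro hcon
          linarith [h1.2, hcon.1]
        simp only [hfval1 x h1, indicator_of_mem h1, indicator_of_notMem h2, mul_zero, sub_zero]
        rw [← Complex.ofReal_mul, hcollapse]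
      · by_cases h2 : x ∈ Icc N M
        · have hreal : (x : ℝ) ^ (b₀ + b₁) * (-(κ * x ^ (-b₀ - b₁ - 1))) = -(κ * x⁻¹) := by
            rw [show (x:ℝ) ^ (b₀ + b₁) * (-(κ * x ^ (-b₀ - b₁ - 1)))
              = -(κ * (x ^ (b₀ + b₁) * x ^ (-b₀ - b₁ - 1))) from by ring, hcollapse]
          simp only [hfval2 x h2, indicator_of_notMem h1, indicator_of_mem h2, zero_sub]
          rw [← Complex.ofReal_mul, hreal]
          push_cast
          ring
        · simp only [hfval0 x h1 h2, indicator_of_notMem h1, indicator_of_notMem h2,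
            mul_zero, sub_zero, sub_self]
    rw [setIntegral_congr_fun measurableSet_Ioi hEqm]
    obtain ⟨hi1, hv1⟩ := key r R hrpos hrR _ (hinvcontC r R hrpos)
    obtain ⟨hi2, hv2⟩ := key N M hNpos hNM _ (hinvcontC N M hNpos)
    rw [integral_sub hi1 (hi2.const_mul _), integral_const_mul, hv1, hv2]
    rw [intervalIntegral.integral_ofReal, intervalIntegral.integral_ofReal, hint1, hint2]
    rw [← Complex.ofReal_mul]
    rw [hκT]
    exact sub_self _
  -- (d) exact value of the right-hand side integral
  have hRHSval : (∫⁻ x in Ioi (0:ℝ), ENNReal.ofReal (x ^ (p * (1/p' + b₀ + b₁)) * ‖f x‖ ^ p))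
      = ENNReal.ofReal (L + 1) := by
    set g2 : ℝ → ℝ := fun x => (Icc r R).indicator (fun x => x⁻¹) x
      + κ ^ p * (Icc N M).indicator (fun x => x⁻¹) x with hg2def
    have hwt : p * (1/p' + b₀ + b₁) = (p - 1) + p * (b₀ + b₁) := by
      rw [mul_add, mul_add, hpinv]
      ring
    have hEq : ∀ᵐ x ∂(volume : Measure ℝ), x ∈ Ioi (0:ℝ) →
        ENNReal.ofReal (x ^ (p * (1/p' + b₀ + b₁)) * ‖f x‖ ^ p) = ENNReal.ofReal (g2 x) := by
      apply ae_of_all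
      intro x hx
      have hx0 : (0:ℝ) < x := hx
      congr 1
      have hcollapse : (x : ℝ) ^ (p * (1/p' + b₀ + b₁)) * (x ^ (-b₀ - b₁ - 1)) ^ p = x⁻¹ := by
        rw [← Real.rpow_mul hx0.le, ← Real.rpow_add hx0,
          show p * (1/p' + b₀ + b₁) + (-b₀ - b₁ - 1) * p = (-1:ℝ) from by
            linear_combination hpinv,
          Real.rpow_neg_one]
      by_cases h1 : x ∈ Icc r R
      · have h2 : x ∉ Icc N M := by
          intro hcon
          linarith [h1.2, hcon.1]
        rw [hg2def]
        simp only [indicator_of_mem h1, indicator_of_notMem h2, mul_zero, add_zero]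
        rw [hfval1 x h1, Complex.norm_real, Real.norm_eq_abs,
          abs_of_nonneg (Real.rpow_nonneg hx0.le _), hcollapse]
      · by_cases h2 : x ∈ Icc N M
        · rw [hg2def]
          simp only [indicator_of_notMem h1, indicator_of_mem h2, zero_add]
          rw [hfval2 x h2, Complex.norm_real, Real.norm_eq_abs, abs_neg, abs_mul,
            abs_of_nonneg hκ0.le, abs_of_nonneg (Real.rpow_nonneg hx0.le _),
            Real.mul_rpow hκ0.le (Real.rpow_nonneg hx0.le _)]
          rw [show (x:ℝ) ^ (p * (1/p' + b₀ + b₁)) * (κ ^ p * (x ^ (-b₀ - b₁ - 1)) ^ p)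
            = κ ^ p * (x ^ (p * (1/p' + b₀ + b₁)) * (x ^ (-b₀ - b₁ - 1)) ^ p) from by ring,
            hcollapse]
        · rw [hg2def]
          simp only [indicator_of_notMem h1, indicator_of_notMem h2, mul_zero, add_zero]
          rw [hfval0 x h1 h2]
          rw [norm_zero, Real.zero_rpow (ne_of_gt hp0), mul_zero]
    rw [setLIntegral_congr_fun_ae measurableSet_Ioi hEq]
    obtain ⟨hi1, hv1⟩ := keyR r R hrpos hrR _ (hinvcont r R hrpos)
    obtain ⟨hi2, hv2⟩ := keyR N M hNpos hNM _ (hinvcont N M hNpos)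
    have hg2int : Integrable g2 (volume.restrict (Ioi (0:ℝ))) := hi1.add (hi2.const_mul _)
    have hg2nn : 0 ≤ᵐ[volume.restrict (Ioi (0:ℝ))] g2 := by
      apply ae_of_all
      intro x
      apply add_nonneg
      · apply indicator_nonneg
        intro z hz
        exact inv_nonneg.mpr (le_trans hrpos.le hz.1)
      · apply mul_nonneg (Real.rpow_nonneg hκ0.le p)
        apply indicator_nonneg
        intro z hz
        exact inv_nonneg.mpr (le_trans hNpos.le hz.1)
    rw [← ofReal_integral_eq_lintegral_ofReal hg2int hg2nn]
    congr 1
    rw [integral_add hi1 (hi2.const_mul _), integral_const_mul, hv1, hv2, hint1, hint2, hκpT]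
  -- (e) lower bound for the transform on E
  have hFf : ∀ y ∈ E, cI * L ≤ ‖∫ x in Ioi (0:ℝ), ((x ^ b₀ : ℝ) : ℂ) * f x * K x y‖ := by
    intro y hyE
    have hy : y ∈ Icc y₀ y₁ := hEIcc hyE
    have hypos : 0 < y := lt_of_lt_of_le hy₀ hy.1
    set h : ℝ → ℂ := fun x => ((x ^ (-b₁ - 1) : ℝ) : ℂ) * K x y with hhdef
    have hEqI : EqOn (fun x : ℝ => ((x ^ b₀ : ℝ) : ℂ) * f x * K x y)
        (fun x : ℝ => (Icc r R).indicator h x - (κ : ℂ) * (Icc N M).indicator h x) (Ioi 0) := by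
      intro x hx
      have hx0 : (0:ℝ) < x := hx
      have hcoll : ((x ^ b₀ : ℝ) : ℂ) * ((x ^ (-b₀ - b₁ - 1) : ℝ) : ℂ)
          = ((x ^ (-b₁ - 1) : ℝ) : ℂ) := by
        rw [← Complex.ofReal_mul, ← Real.rpow_add hx0,
          show b₀ + (-b₀ - b₁ - 1) = -b₁ - 1 from by ring]
      by_cases h1 : x ∈ Icc r R
      · have h2 : x ∉ Icc N M := by
          intro hcon
          linarith [h1.2, hcon.1]
        simp only [hfval1 x h1, indicator_of_mem h1, indicator_of_notMem h2,
          mul_zero, sub_zero, hhdef]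
        try rw [← hcoll]
        try ring
      · by_cases h2 : x ∈ Icc N M
        · simp only [hfval2 x h2, indicator_of_notMem h1, indicator_of_mem h2,
            zero_sub, hhdef]
          try rw [← hcoll]
          try push_cast
          try ring
        · simp only [hfval0 x h1 h2, indicator_of_notMem h1, indicator_of_notMem h2,
            mul_zero, sub_zero, zero_mul, mul_zero, sub_self]
    have hcont1 : ContinuousOn h (Icc r R) := by
      apply ContinuousOn.mul _ (hKcont y hypos r R hrpos)
      apply Complex.continuous_ofReal.comp_continuousOn
      exact ContinuousOn.rpow_const continuousOn_id
        (fun x hx => Or.inl (ne_of_gt (lt_of_lt_of_le hrpos hx.1)))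
    have hcont2 : ContinuousOn h (Icc N M) := by
      apply ContinuousOn.mul _ (hKcont y hypos N M hNpos)
      apply Complex.continuous_ofReal.comp_continuousOn
      exact ContinuousOn.rpow_const continuousOn_id
        (fun x hx => Or.inl (ne_of_gt (lt_of_lt_of_le hNpos hx.1)))
    obtain ⟨hi1, hv1⟩ := key r R hrpos hrR h hcont1
    obtain ⟨hi2, hv2⟩ := key N M hNpos hNM h hcont2
    rw [setIntegral_congr_fun measurableSet_Ioi hEqI,
      integral_sub hi1 (hi2.const_mul _), integral_const_mul, hv1, hv2]
    -- tail bound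
    have hT2 : ‖∫ x in N..M, h x‖ ≤ ε₀ := hTail y hy M hNM
    -- head computation
    have hEq2 : EqOn h (fun x : ℝ => ((y ^ c₁ : ℝ) : ℂ) * (((x⁻¹ : ℝ) : ℂ) * Sf (x * y)))
        (uIcc r R) := by
      intro x hx
      rw [uIcc_of_le hrR] at hx
      have hx0 : 0 < x := lt_of_lt_of_le hrpos hx.1
      rw [hhdef]
      simp only
      rw [hSfK x hx0 y hypos]
      have hreal : (x : ℝ) ^ (-b₁ - 1) * (x ^ b₁ * y ^ c₁) = y ^ c₁ * x⁻¹ := by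
        rw [show (x:ℝ) ^ (-b₁ - 1) * (x ^ b₁ * y ^ c₁) = (x ^ (-b₁-1) * x ^ b₁) * y ^ c₁
          from by ring, ← Real.rpow_add hx0,
          show -b₁ - 1 + b₁ = (-1:ℝ) from by ring, Real.rpow_neg_one]
        ring
      calc ((x ^ (-b₁ - 1) : ℝ) : ℂ) * (((x ^ b₁ * y ^ c₁ : ℝ) : ℂ) * Sf (x * y))
          = (((x ^ (-b₁ - 1) * (x ^ b₁ * y ^ c₁) : ℝ)) : ℂ) * Sf (x * y) := by
            push_cast; ring
        _ = ((y ^ c₁ : ℝ) : ℂ) * (((x⁻¹ : ℝ) : ℂ) * Sf (x * y)) := by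
            rw [hreal]; push_cast; ring
    have hSfcont : ContinuousOn (fun x : ℝ => Sf (x * y)) (Icc r R) := hScont y hypos r R hrpos
    have hintSa : IntervalIntegrable (fun x : ℝ => ((x⁻¹ : ℝ) : ℂ) * a 0) volume r R := by
      apply ContinuousOn.intervalIntegrable
      rw [uIcc_of_le hrR]
      exact (hinvcontC r R hrpos).mul continuousOn_const
    have hintSb : IntervalIntegrable (fun x : ℝ => ((x⁻¹ : ℝ) : ℂ) * (Sf (x * y) - a 0))
        volume r R := by
      apply ContinuousOn.intervalIntegrable
      rw [uIcc_of_le hrR]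
      exact (hinvcontC r R hrpos).mul (hSfcont.sub continuousOn_const)
    have hhead : ∫ x in r..R, h x
        = ((y ^ c₁ : ℝ) : ℂ) * (a 0 * (L:ℂ) + ∫ x in r..R, ((x⁻¹ : ℝ) : ℂ) * (Sf (x * y) - a 0)) := by
      rw [intervalIntegral.integral_congr hEq2, intervalIntegral.integral_const_mul]
      congr 1
      have hsplit : EqOn (fun x : ℝ => ((x⁻¹ : ℝ) : ℂ) * Sf (x * y))
          (fun x : ℝ => ((x⁻¹ : ℝ) : ℂ) * a 0 + ((x⁻¹ : ℝ) : ℂ) * (Sf (x * y) - a 0))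
          (uIcc r R) := by
        intro x hx
        simp only
        ring
      rw [intervalIntegral.integral_congr hsplit,
        intervalIntegral.integral_add hintSa hintSb]
      congr 1
      rw [intervalIntegral.integral_mul_const, intervalIntegral.integral_ofReal, hint1]
      push_cast
      ring
    -- error bound
    have hErr : ‖∫ x in r..R, ((x⁻¹ : ℝ) : ℂ) * (Sf (x * y) - a 0)‖ ≤ ‖a 0‖ / 2 * L := by
      have hptw2 : ∀ x ∈ Icc r R, ‖((x⁻¹ : ℝ) : ℂ) * (Sf (x * y) - a 0)‖ ≤ (‖a 0‖/2) * x⁻¹ := by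
        intro x hx
        have hx0 : 0 < x := lt_of_lt_of_le hrpos hx.1
        rw [norm_mul, Complex.norm_real, Real.norm_eq_abs, abs_of_nonneg (inv_nonneg.mpr hx0.le)]
        have hsb : ‖Sf (x * y) - a 0‖ ≤ ‖a 0‖ / 2 :=
          hSsmall (x*y) (mul_pos hx0 hypos) (hRy x y hy hx0 hx.2)
        calc x⁻¹ * ‖Sf (x * y) - a 0‖ ≤ x⁻¹ * (‖a 0‖/2) :=
              mul_le_mul_of_nonneg_left hsb (inv_nonneg.mpr hx0.le)
          _ = (‖a 0‖/2) * x⁻¹ := by ring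
      calc ‖∫ x in r..R, ((x⁻¹ : ℝ) : ℂ) * (Sf (x * y) - a 0)‖
          ≤ ∫ x in r..R, ‖((x⁻¹ : ℝ) : ℂ) * (Sf (x * y) - a 0)‖ :=
            intervalIntegral.norm_integral_le_integral_norm hrR
        _ ≤ ∫ x in r..R, (‖a 0‖/2) * x⁻¹ := by
            apply intervalIntegral.integral_mono_on hrR _ _ hptw2
            · apply ContinuousOn.intervalIntegrable
              rw [uIcc_of_le hrR]
              exact ((hinvcontC r R hrpos).mul (hSfcont.sub continuousOn_const)).norm
            · apply ContinuousOn.intervalIntegrable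
              rw [uIcc_of_le hrR]
              exact continuousOn_const.mul (hinvcont r R hrpos)
        _ = ‖a 0‖ / 2 * L := by
            rw [intervalIntegral.integral_const_mul, hint1]
    -- combine
    set Er : ℂ := ∫ x in r..R, ((x⁻¹ : ℝ) : ℂ) * (Sf (x * y) - a 0) with hErdef
    rw [hhead]
    have hyc₁ : (0:ℝ) < y ^ c₁ := Real.rpow_pos_of_pos hypos c₁
    have hheadlow : w₁ * ‖a 0‖ * L / 2 ≤ ‖((y ^ c₁ : ℝ) : ℂ) * (a 0 * (L:ℂ) + Er)‖ := by
      rw [norm_mul, Complex.norm_real, Real.norm_eq_abs, abs_of_nonneg hyc₁.le]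
      have hn1 : ‖a 0 * (L:ℂ)‖ - ‖Er‖ ≤ ‖a 0 * (L:ℂ) + Er‖ := by
        calc ‖a 0 * (L:ℂ)‖ - ‖Er‖ = ‖(a 0 * (L:ℂ) + Er) - Er‖ - ‖Er‖ := by ring_nf
          _ ≤ (‖a 0 * (L:ℂ) + Er‖ + ‖Er‖) - ‖Er‖ := by
              linarith [norm_sub_le (a 0 * (L:ℂ) + Er) Er]
          _ = ‖a 0 * (L:ℂ) + Er‖ := by ring
      have hnL : ‖a 0 * (L:ℂ)‖ = ‖a 0‖ * L := by
        rw [norm_mul, Complex.norm_real, Real.norm_eq_abs, abs_of_nonneg hL0.le]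
      have hlow : ‖a 0‖ * L / 2 ≤ ‖a 0 * (L:ℂ) + Er‖ := by
        rw [hnL] at hn1
        linarith [hErr]
      calc w₁ * ‖a 0‖ * L / 2 ≤ y ^ c₁ * (‖a 0‖ * L / 2) := by
            have h6 := hycmin c₁ y hy
            rw [← hw₁def] at h6
            have h7 := mul_le_mul_of_nonneg_right h6
              (show 0 ≤ ‖a 0‖ * L / 2 by positivity)
            linarith
        _ ≤ y ^ c₁ * ‖a 0 * (L:ℂ) + Er‖ := mul_le_mul_of_nonneg_left hlow hyc₁.le
    have htailsmall : ‖(κ:ℂ) * ∫ x in N..M, h x‖ ≤ ε₀ := by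
      rw [norm_mul, Complex.norm_real, Real.norm_eq_abs, abs_of_nonneg hκ0.le]
      calc κ * ‖∫ x in N..M, h x‖ ≤ 1 * ε₀ := by
            apply mul_le_mul hκ1 hT2 (norm_nonneg _) one_pos.le
        _ = ε₀ := one_mul ε₀
    calc cI * L = w₁ * ‖a 0‖ * L / 2 - (w₁ * ‖a 0‖ / 4) * L := by
          rw [hcIdef]; ring
      _ ≤ w₁ * ‖a 0‖ * L / 2 - ε₀ := by
          rw [hε₀def, hcIdef]
          have : cI * 1 ≤ cI * L := mul_le_mul_of_nonneg_left hL1 hcI.le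
          rw [hcIdef] at this
          linarith
      _ ≤ ‖((y ^ c₁ : ℝ) : ℂ) * (a 0 * (L:ℂ) + Er)‖ - ‖(κ:ℂ) * ∫ x in N..M, h x‖ := by
          linarith [hheadlow, htailsmall]
      _ ≤ ‖((y ^ c₁ : ℝ) : ℂ) * (a 0 * (L:ℂ) + Er) - (κ:ℂ) * ∫ x in N..M, h x‖ :=
          norm_sub_norm_le _ _
  -- (f) lower bound for the left-hand side
  have hLHSlow : ENNReal.ofReal (δ * (w₀ * (cI * L)) ^ q) * volume E ≤
      ∫⁻ y in Ioi (0:ℝ), ENNReal.ofReal (u y *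
        ‖((y ^ c₀ : ℝ) : ℂ) * ∫ x in Ioi (0:ℝ), ((x ^ b₀ : ℝ) : ℂ) * f x * K x y‖ ^ q) := by
    have step1 : ENNReal.ofReal (δ * (w₀ * (cI * L)) ^ q) * volume E =
        ∫⁻ y in E, ENNReal.ofReal (δ * (w₀ * (cI * L)) ^ q) := (setLIntegral_const E _).symm
    rw [step1]
    have step2 : (∫⁻ y in E, ENNReal.ofReal (δ * (w₀ * (cI * L)) ^ q)) ≤
        ∫⁻ y in E, ENNReal.ofReal (u y *
          ‖((y ^ c₀ : ℝ) : ℂ) * ∫ x in Ioi (0:ℝ), ((x ^ b₀ : ℝ) : ℂ) * f x * K x y‖ ^ q) := by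
      apply lintegral_mono_ae
      rw [ae_restrict_iff' hEmeas]
      apply ae_of_all
      intro y hyE
      apply ENNReal.ofReal_le_ofReal
      have hy : y ∈ Icc y₀ y₁ := hEIcc hyE
      have hypos : 0 < y := lt_of_lt_of_le hy₀ hy.1
      have hyc₀ : (0:ℝ) < y ^ c₀ := Real.rpow_pos_of_pos hypos c₀
      have hbase : w₀ * (cI * L) ≤
          ‖((y ^ c₀ : ℝ) : ℂ) * ∫ x in Ioi (0:ℝ), ((x ^ b₀ : ℝ) : ℂ) * f x * K x y‖ := by
        rw [norm_mul, Complex.norm_real, Real.norm_eq_abs, abs_of_nonneg hyc₀.le]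
        have h6 := hycmin c₀ y hy
        rw [← hw₀def] at h6
        calc w₀ * (cI * L) ≤ (y ^ c₀) * (cI * L) :=
              mul_le_mul_of_nonneg_right h6 (by positivity)
          _ ≤ (y ^ c₀) * ‖∫ x in Ioi (0:ℝ), ((x ^ b₀ : ℝ) : ℂ) * f x * K x y‖ :=
              mul_le_mul_of_nonneg_left (hFf y hyE) hyc₀.le
      have hpow : (w₀ * (cI * L)) ^ q ≤
          ‖((y ^ c₀ : ℝ) : ℂ) * ∫ x in Ioi (0:ℝ), ((x ^ b₀ : ℝ) : ℂ) * f x * K x y‖ ^ q :=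
        Real.rpow_le_rpow (by positivity) hbase hq0.le
      calc δ * (w₀ * (cI * L)) ^ q ≤ u y * (w₀ * (cI * L)) ^ q :=
            mul_le_mul_of_nonneg_right (hEu y hyE) (by positivity)
        _ ≤ u y * ‖((y ^ c₀ : ℝ) : ℂ) * ∫ x in Ioi (0:ℝ), ((x ^ b₀ : ℝ) : ℂ) * f x * K x y‖ ^ q :=
            mul_le_mul_of_nonneg_left hpow (hu0 y (hEsub hyE))
    apply le_trans step2
    exact lintegral_mono' (Measure.restrict_mono hEsub le_rfl) le_rfl
  -- apply the assumed inequality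
  have happ := hIneq f hfmeas hfin hmom
  rw [hRHSval] at happ
  have hchain : (ENNReal.ofReal (δ * (w₀ * (cI * L)) ^ q) * volume E) ^ (1/q) ≤
      ENNReal.ofReal C'' * (ENNReal.ofReal (L + 1)) ^ (1/p) :=
    le_trans (ENNReal.rpow_le_rpow hLHSlow (by positivity)) happ
  -- convert to a real inequality
  have hEe : volume E = ENNReal.ofReal e := (ENNReal.ofReal_toReal hEfin).symm
  rw [hEe, ← ENNReal.ofReal_mul (by positivity),
    ENNReal.ofReal_rpow_of_pos (by positivity),
    ENNReal.ofReal_rpow_of_pos (by positivity),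
    ← ENNReal.ofReal_mul hC''pos.le] at hchain
  have hreal : (δ * (w₀ * (cI * L)) ^ q * e) ^ (1/q) ≤ C'' * (L + 1) ^ (1/p) :=
    (ENNReal.ofReal_le_ofReal_iff (by positivity)).mp hchain
  -- simplify the left side
  have hlhs_eq : (δ * (w₀ * (cI * L)) ^ q * e) ^ (1/q) = κ₁ * L := by
    rw [show δ * (w₀ * (cI * L)) ^ q * e = (δ * e) * (w₀ * (cI * L)) ^ q from by ring]
    rw [Real.mul_rpow (by positivity) (by positivity),
      ← Real.rpow_mul (by positivity : (0:ℝ) ≤ w₀ * (cI * L)),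
      mul_one_div_cancel (ne_of_gt hq0), Real.rpow_one, hκ₁def]
    ring
  rw [hlhs_eq] at hreal
  -- final contradiction
  have h2L : (L + 1) ^ (1/p) ≤ 2 * L ^ (1/p) := by
    have h1 : (L + 1) ^ (1/p) ≤ (2 * L) ^ (1/p) :=
      Real.rpow_le_rpow (by positivity) (by linarith) (by positivity)
    have h2 : ((2:ℝ) * L) ^ (1/p) = 2 ^ (1/p) * L ^ (1/p) :=
      Real.mul_rpow (by norm_num) hL0.le
    have h3 : (2:ℝ) ^ (1/p) ≤ 2 := by
      calc (2:ℝ) ^ (1/p) ≤ (2:ℝ) ^ (1:ℝ) := by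
            apply Real.rpow_le_rpow_of_exponent_le one_le_two
            rw [div_le_one hp0]
            linarith
        _ = 2 := Real.rpow_one 2
    calc (L + 1) ^ (1/p) ≤ 2 ^ (1/p) * L ^ (1/p) := by rw [← h2]; exact h1
      _ ≤ 2 * L ^ (1/p) :=
          mul_le_mul_of_nonneg_right h3 (Real.rpow_nonneg hL0.le _)
  have hLp : (0:ℝ) < L ^ (1/p) := Real.rpow_pos_of_pos hL0 _
  have hfrac : κ₁ * L ^ (1 - 1/p) ≤ 2 * C'' := by
    have hkey : (κ₁ * L ^ (1 - 1/p)) * L ^ (1/p) ≤ (2 * C'') * L ^ (1/p) := by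
      calc (κ₁ * L ^ (1 - 1/p)) * L ^ (1/p)
            = κ₁ * (L ^ (1 - 1/p) * L ^ (1/p)) := by ring
        _ = κ₁ * L := by
            rw [← Real.rpow_add hL0]
            norm_num
        _ ≤ C'' * (L + 1) ^ (1/p) := hreal
        _ ≤ C'' * (2 * L ^ (1/p)) := mul_le_mul_of_nonneg_left h2L hC''pos.le
        _ = (2 * C'') * L ^ (1/p) := by ring
    exact le_of_mul_le_mul_right hkey hLp
  have hfrac2 : L ^ (1 - 1/p) ≤ 2 * C'' / κ₁ := by
    rw [le_div_iff₀ hκ₁]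
    linarith [hfrac]
  have hLle : L ≤ (2 * C'' / κ₁) ^ p' := by
    calc L = L ^ (1:ℝ) := (Real.rpow_one L).symm
      _ = L ^ ((1 - 1/p) * p') := by rw [hp'inv]
      _ = (L ^ (1 - 1/p)) ^ p' := Real.rpow_mul hL0.le _ _
      _ ≤ (2 * C'' / κ₁) ^ p' :=
          Real.rpow_le_rpow (Real.rpow_nonneg hL0.le _) hfrac2 hp'0.le
  have hLge : (2 * C'' / κ₁) ^ p' + 1 ≤ L := le_max_right _ _
  linarith
end
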